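/- arXiv:math/9905100 — 9 statements merged into one kernel-verified Lean document; each statement's English description precedes it below -/
import Mathlib

section
/- For every integer N ≥ 1 and every complex number x with sin(Nx) ≠ 0 (which guarantees sin(x + kπ/N) ≠ 0 for every k), one has ∑_{k=0}^{N−1} cot²(x + kπ/N) = N² − N + N²·cot²(Nx), where sin, cos, cot denote the complex trigonometric functions. -/
open Complex
open scoped Real

private lemma sin_zero_iff_exp (z : ℂ) : Complex.sin z = 0 ↔ Complex.exp (2 * I * z) = 1 := by
  rw [Complex.sin_eq_zero_iff, Complex.exp_eq_one_iff]
  constructor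
  · rintro ⟨k, rfl⟩
    exact ⟨k, by ring⟩
  · rintro ⟨n, hn⟩
    refine ⟨n, ?_⟩
    have h2 : (2 * I : ℂ) ≠ 0 := by simp [Complex.I_ne_zero]
    apply mul_left_cancel₀ h2
    rw [hn]; ring

private lemma cot_sq_eq {z : ℂ} (h : Complex.sin z ≠ 0) :
    Complex.cot z ^ 2 = -(Complex.exp (2 * I * z) + 1) ^ 2 / (Complex.exp (2 * I * z) - 1) ^ 2 := by
  have hu : Complex.exp (z * I) ≠ 0 := Complex.exp_ne_zero _
  have hd : Complex.exp (2 * I * z) - 1 ≠ 0 :=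
    sub_ne_zero.2 (fun h1 => h ((sin_zero_iff_exp z).2 h1))
  have he : Complex.exp (2 * I * z) = Complex.exp (z * I) * Complex.exp (z * I) := by
    rw [← Complex.exp_add]; ring_nf
  rw [Complex.cot, div_pow, div_eq_div_iff (pow_ne_zero 2 h) (pow_ne_zero 2 hd)]
  rw [Complex.sin, Complex.cos, he, show -z * I = -(z*I) by ring, Complex.exp_neg]
  field_simp
  ring_nf
  rw [Complex.I_sq]
  ring

private lemma nat_dvd_between {N s : ℕ} (h : N ∣ s) (h1 : 0 < s) (h2 : s < 2 * N) : s = N := by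
  obtain ⟨c, rfl⟩ := h
  rcases c with _ | _ | c
  · simp at h1
  · simp
  · have h3 : N * 2 ≤ N * (c + 1 + 1) := Nat.mul_le_mul_left N (by omega)
    omega

/-- The cotangent summation identity used in the proof of unitarity of the scaled
`sl(N)` R-matrix: for `N ≥ 1` and `x : ℂ` with `sin (N x) ≠ 0`,
`∑_{k=0}^{N-1} cot²(x + kπ/N) = N² − N + N² cot²(N x)`. -/
theorem cot_sq_sum (N : ℕ) (hN : 1 ≤ N) (x : ℂ) (hx : Complex.sin ((N : ℂ) * x) ≠ 0) :
    ∑ k ∈ Finset.range N, (Complex.cot (x + (k : ℂ) * (π : ℂ) / (N : ℂ))) ^ 2 =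
      (N : ℂ) ^ 2 - (N : ℂ) + (N : ℂ) ^ 2 * (Complex.cot ((N : ℂ) * x)) ^ 2 := by
  have hNc : (N : ℂ) ≠ 0 := Nat.cast_ne_zero.2 (by omega)
  have hπ : (π : ℂ) ≠ 0 := by exact_mod_cast Real.pi_ne_zero
  set Q : ℂ := Complex.exp (2 * I * ((N : ℂ) * x)) with hQdef
  have hQ : Q ≠ 1 := fun h1 => hx ((sin_zero_iff_exp _).2 h1)
  have hQ1 : Q - 1 ≠ 0 := sub_ne_zero.2 hQ
  set t : ℕ → ℂ := fun k => Complex.exp (2 * I * (x + (k : ℂ) * (π : ℂ) / (N : ℂ))) with ht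
  -- t k ^ N = Q
  have htN : ∀ k : ℕ, t k ^ N = Q := by
    intro k
    rw [ht, ← Complex.exp_nat_mul]
    have h1 : (N : ℂ) * (2 * I * (x + (k : ℂ) * (π : ℂ) / (N : ℂ)))
        = 2 * I * ((N : ℂ) * x) + (k : ℤ) * (2 * (π : ℂ) * I) := by
      push_cast
      field_simp
    rw [h1, Complex.exp_add, Complex.exp_int_mul_two_pi_mul_I, mul_one]
  have htne : ∀ k : ℕ, t k - 1 ≠ 0 := by
    intro k
    refine sub_ne_zero.2 (fun h1 => hQ ?_)
    rw [← htN k, h1, one_pow]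
  -- power sums vanish when N does not divide m
  have hgeom : ∀ m : ℕ, ¬ (N ∣ m) → ∑ k ∈ Finset.range N, t k ^ m = 0 := by
    intro m hm
    have hr : ∀ k : ℕ, t k ^ m = Complex.exp (2 * I * (m : ℂ) * x) *
        (Complex.exp (2 * (π : ℂ) * I * (m : ℂ) / (N : ℂ))) ^ k := by
      intro k
      rw [ht, ← Complex.exp_nat_mul, ← Complex.exp_nat_mul, ← Complex.exp_add]
      congr 1
      field_simp
    have hrN : (Complex.exp (2 * (π : ℂ) * I * (m : ℂ) / (N : ℂ))) ^ N = 1 := by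
      rw [← Complex.exp_nat_mul]
      have h1 : (N : ℂ) * (2 * (π : ℂ) * I * (m : ℂ) / (N : ℂ)) = (m : ℤ) * (2 * (π : ℂ) * I) := by
        push_cast; field_simp
      rw [h1, Complex.exp_int_mul_two_pi_mul_I]
    have hr1 : Complex.exp (2 * (π : ℂ) * I * (m : ℂ) / (N : ℂ)) ≠ 1 := by
      intro h1
      rw [Complex.exp_eq_one_iff] at h1
      obtain ⟨n, hn⟩ := h1
      have h2 : (m : ℂ) = (n : ℂ) * (N : ℂ) := by
        have h3 : (2 * (π : ℂ) * I) * (m : ℂ) = (2 * (π : ℂ) * I) * ((n : ℂ) * (N : ℂ)) := by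
          field_simp at hn
          linear_combination (2 * (π : ℂ) * I) * hn
        exact mul_left_cancel₀ (by simp [hπ, Complex.I_ne_zero]) h3
      have h4 : (m : ℤ) = n * (N : ℤ) := by exact_mod_cast h2
      exact hm (Int.natCast_dvd_natCast.1 ⟨n, by linarith⟩)
    simp only [hr]
    rw [← Finset.mul_sum, geom_sum_eq hr1, hrN]
    simp
  -- sum of the geometric polynomial P(t k) = ∑_{m<N} t k ^ m
  have hswap0 : ∑ m ∈ Finset.range N, (∑ k ∈ Finset.range N, t k ^ m) = (N : ℂ) := by
    rw [Finset.sum_eq_single_of_mem 0 (Finset.mem_range.2 (by omega))]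
    · simp
    · intro m hm hm0
      exact hgeom m (fun hd => hm0 (Nat.eq_zero_of_dvd_of_lt hd (Finset.mem_range.1 hm)))
  have hPsum : ∑ k ∈ Finset.range N, (∑ m ∈ Finset.range N, t k ^ m) = (N : ℂ) := by
    rw [Finset.sum_comm]; exact hswap0
  -- sum of squares of the geometric polynomial
  have hgN : ∀ j : ℕ, j = N → ∑ k ∈ Finset.range N, t k ^ j = (N : ℂ) * Q := by
    rintro j rfl
    simp only [htN]
    rw [Finset.sum_const, Finset.card_range, nsmul_eq_mul]
  have hP2sum : ∑ k ∈ Finset.range N, (∑ m ∈ Finset.range N, t k ^ m) ^ 2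
      = (N : ℂ) + ((N : ℂ) - 1) * ((N : ℂ) * Q) := by
    have hsq : ∀ k : ℕ, (∑ m ∈ Finset.range N, t k ^ m) ^ 2
        = ∑ m ∈ Finset.range N, ∑ m' ∈ Finset.range N, t k ^ (m + m') := by
      intro k
      rw [sq, Finset.sum_mul_sum]
      simp [pow_add]
    simp only [hsq]
    rw [Finset.sum_comm]
    have hrow : ∀ m ∈ Finset.range N,
        (∑ k ∈ Finset.range N, ∑ m' ∈ Finset.range N, t k ^ (m + m'))
          = if m = 0 then (N : ℂ) else (N : ℂ) * Q := by
      intro m hm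
      rw [Finset.sum_comm]
      by_cases h0 : m = 0
      · subst h0
        simp only [Nat.zero_add, if_true]
        exact hswap0
      · rw [if_neg h0]
        have hmN := Finset.mem_range.1 hm
        rw [Finset.sum_eq_single_of_mem (N - m) (Finset.mem_range.2 (by omega))]
        · exact hgN _ (by omega)
        · intro m' hm' hm'ne
          have hm'N := Finset.mem_range.1 hm'
          refine hgeom _ (fun hd => hm'ne ?_)
          have := nat_dvd_between hd (by omega) (by omega)
          omega
    rw [Finset.sum_congr rfl hrow]
    have hsplit : ∀ m : ℕ, (if m = 0 then (N : ℂ) else (N : ℂ) * Q)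
        = (N : ℂ) * Q + (if m = 0 then (N : ℂ) - (N : ℂ) * Q else 0) := by
      intro m; by_cases h0 : m = 0 <;> simp [h0]
    simp only [hsplit]
    rw [Finset.sum_add_distrib, Finset.sum_const, Finset.card_range, nsmul_eq_mul,
      Finset.sum_ite_eq' (Finset.range N) 0, if_pos (Finset.mem_range.2 (by omega))]
    ring
  -- per-term formula for the cotangent squared
  have hterm : ∀ k ∈ Finset.range N,
      (Complex.cot (x + (k : ℂ) * (π : ℂ) / (N : ℂ))) ^ 2
        = -1 + (-(4 / (Q - 1))) * (∑ m ∈ Finset.range N, t k ^ m)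
            + (-(4 / (Q - 1) ^ 2)) * (∑ m ∈ Finset.range N, t k ^ m) ^ 2 := by
    intro k _
    have hsin : Complex.sin (x + (k : ℂ) * (π : ℂ) / (N : ℂ)) ≠ 0 := by
      intro h0
      exact (htne k) (sub_eq_zero.2 ((sin_zero_iff_exp _).1 h0))
    rw [cot_sq_eq hsin]
    have htk : Complex.exp (2 * I * (x + (k : ℂ) * (π : ℂ) / (N : ℂ))) = t k := rfl
    rw [htk]
    have hP : (∑ m ∈ Finset.range N, t k ^ m) = (Q - 1) / (t k - 1) := by
      rw [eq_div_iff (htne k), geom_sum_mul, htN k]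
    rw [hP]
    have h1 := htne k
    field_simp
    ring
  rw [Finset.sum_congr rfl hterm]
  rw [Finset.sum_add_distrib, Finset.sum_add_distrib, ← Finset.mul_sum, ← Finset.mul_sum,
    hPsum, hP2sum, Finset.sum_const, Finset.card_range, nsmul_eq_mul]
  rw [cot_sq_eq hx]
  rw [← hQdef]
  field_simp
  ring
end

section
/- Let N ≥ 2 be an integer, r > 0 real, and β ∈ ℂ generic (all sines occurring in denominators nonzero). Let R₀,₂₁(−β) denote the N²×N² matrix with entries R₀,₂₁(−β)_{(a,b),(c,d)} = R₀(−β)_{(b,a),(d,c)}. Then R₀(β) · R₀,₂₁(−β) = Id, the N²×N² identity matrix. (This is the unitarity relation R₁₂(β)R₂₁(−β)=1 of Theorem 1, for the R-matrix stripped of its scalar normalisation S₀(β), which satisfies S₀(β)S₀(−β)=1.) -/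
open Complex Matrix
open scoped Real Kronecker

/-- The scaled `sl(N)` R-matrix `R₀(β)` (stripped of its scalar normalisation `S₀(β)`):
rows and columns are indexed by pairs `(a,b) ∈ (ℤ/N)²`; the entry with row `(a,b)` and
column `(c,d)` vanishes unless `d = a + b - c` in `ℤ/N`, in which case it equals
`−(1/N)·(sin(iβ/r)·sin(π/r)/sin((iβ+π)/r))·(cot((iβ+(b−c)πr)/(Nr)) − cot((−π+(a−c)πr)/(Nr)))`,
integer representatives of `b−c`, `a−c` being irrelevant by `π`-periodicity of `cot` here. -/
noncomputable def R0 (N : ℕ) (r : ℝ) (β : ℂ) :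
    Matrix (ZMod N × ZMod N) (ZMod N × ZMod N) ℂ :=
  Matrix.of fun p q =>
    if q.2 = p.1 + p.2 - q.1 then
      -(1 / (N : ℂ)) *
        (Complex.sin (Complex.I * β / (r : ℂ)) * Complex.sin ((π : ℂ) / (r : ℂ)) /
          Complex.sin ((Complex.I * β + (π : ℂ)) / (r : ℂ))) *
        (Complex.cot ((Complex.I * β + (((p.2 - q.1).val : ℕ) : ℂ) * (π : ℂ) * (r : ℂ)) /
            ((N : ℂ) * (r : ℂ))) -
         Complex.cot ((-(π : ℂ) + (((p.1 - q.1).val : ℕ) : ℂ) * (π : ℂ) * (r : ℂ)) /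
            ((N : ℂ) * (r : ℂ))))
    else 0

/-- Genericity of the spectral parameter `β`: all sines occurring in denominators of the
entries of `R₀(β)` are nonzero. -/
def GenR (N : ℕ) (r : ℝ) (β : ℂ) : Prop :=
  Complex.sin ((Complex.I * β + (π : ℂ)) / (r : ℂ)) ≠ 0 ∧
  ∀ k : ℤ,
    Complex.sin ((Complex.I * β + (k : ℂ) * (π : ℂ) * (r : ℂ)) / ((N : ℂ) * (r : ℂ))) ≠ 0 ∧
    Complex.sin ((-(π : ℂ) + (k : ℂ) * (π : ℂ) * (r : ℂ)) / ((N : ℂ) * (r : ℂ))) ≠ 0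

set_option linter.unusedSectionVars false
set_option maxHeartbeats 1600000

namespace R0U
variable {N : ℕ} [NeZero N]


noncomputable def C (N : ℕ) (z : ℂ) (k : ZMod N) : ℂ :=
  Complex.cot (z + (k.val : ℂ) * ((π : ℂ) / N))

lemma sin_pi_c : Complex.sin (π : ℂ) = 0 := by
  rw [← Complex.ofReal_sin]; simp

lemma cos_pi_c : Complex.cos (π : ℂ) = -1 := by
  rw [← Complex.ofReal_cos]; simp

lemma cot_periodic : Function.Periodic Complex.cot (π : ℂ) := by
  intro w
  rw [Complex.cot_eq_cos_div_sin, Complex.cot_eq_cos_div_sin, Complex.sin_add, Complex.cos_add,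
    sin_pi_c, cos_pi_c]
  ring_nf

lemma cot_int_mul_pi_add (w : ℂ) (j : ℤ) : Complex.cot (w + (j : ℂ) * (π : ℂ)) = Complex.cot w :=
  (cot_periodic.int_mul j) w

lemma cot_neg (w : ℂ) : Complex.cot (-w) = - Complex.cot w := by
  rw [Complex.cot_eq_cos_div_sin, Complex.cot_eq_cos_div_sin, Complex.sin_neg, Complex.cos_neg,
    div_neg]

lemma hNC : (N : ℂ) ≠ 0 := Nat.cast_ne_zero.mpr (NeZero.ne N)

lemma pi_c_ne : (π : ℂ) ≠ 0 := by exact_mod_cast Real.pi_ne_zero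

lemma C_intCast (z : ℂ) (k : ℤ) :
    C N z ((k : ZMod N)) = Complex.cot (z + (k : ℂ) * ((π : ℂ) / N)) := by
  have h1 : (((k : ZMod N).val : ℤ) : ℂ) = ((k % N : ℤ) : ℂ) := by
    rw [ZMod.val_intCast]
  have hN := hNC (N := N)
  have hk : (k : ℂ) = ((k % N : ℤ) : ℂ) + (N : ℂ) * ((k / N : ℤ) : ℂ) := by
    have h0 := congrArg (Int.cast : ℤ → ℂ) (Int.emod_add_mul_ediv k N)
    push_cast at h0
    linear_combination -h0
  rw [C, hk]
  have h2 : z + (((k % N : ℤ) : ℂ) + (N : ℂ) * ((k / N : ℤ) : ℂ)) * ((π : ℂ) / N)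
      = (z + ((k % N : ℤ) : ℂ) * ((π : ℂ) / N)) + ((k / N : ℤ) : ℂ) * (π : ℂ) := by
    field_simp
    ring
  rw [h2, cot_int_mul_pi_add]
  have h3 : (((k : ZMod N).val : ℕ) : ℂ) = ((k % N : ℤ) : ℂ) := by exact_mod_cast h1
  rw [h3]

lemma cast_val (k : ZMod N) : (((k.val : ℤ)) : ZMod N) = k := by
  push_cast
  exact ZMod.natCast_rightInverse k

lemma C_val (z : ℂ) (k : ZMod N) :
    C N z k = Complex.cot (z + ((k.val : ℤ) : ℂ) * ((π : ℂ) / N)) := by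
  rw [← C_intCast, cast_val]

lemma C_neg (z : ℂ) (k : ZMod N) : C N (-z) (-k) = - C N z k := by
  have : -k = (((-(k.val : ℤ)) : ℤ) : ZMod N) := by rw [Int.cast_neg, cast_val]
  rw [this, C_intCast, C_val]
  have h : -z + ((-(k.val : ℤ) : ℤ) : ℂ) * ((π : ℂ) / N)
      = -(z + ((k.val : ℤ) : ℂ) * ((π : ℂ) / N)) := by push_cast; ring
  rw [h, cot_neg]

lemma sin_int_ne (j : ℤ) (h : ¬ ((N:ℤ) ∣ j)) :
    Complex.sin ((j : ℂ) * ((π : ℂ) / N)) ≠ 0 := by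
  intro h0
  rw [Complex.sin_eq_zero_iff] at h0
  obtain ⟨l, hl⟩ := h0
  apply h
  have hN := hNC (N := N)
  have h1 : (j : ℂ) * π = ((l * N : ℤ) : ℂ) * π := by
    push_cast
    field_simp at hl
    linear_combination (π : ℂ) * hl
  have h2 : (j : ℂ) = ((l * N : ℤ) : ℂ) := mul_right_cancel₀ pi_c_ne h1
  have h3 : j = l * N := by exact_mod_cast h2
  exact ⟨l, by rw [h3, mul_comm]⟩

lemma cot_mul_cot {A B : ℂ} (hA : Complex.sin A ≠ 0) (hB : Complex.sin B ≠ 0)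
    (hAB : Complex.sin (A - B) ≠ 0) :
    Complex.cot A * Complex.cot B = Complex.cot (A - B) * (Complex.cot B - Complex.cot A) - 1 := by
  rw [Complex.cot_eq_cos_div_sin, Complex.cot_eq_cos_div_sin, Complex.cot_eq_cos_div_sin]
  field_simp
  rw [Complex.sin_sub, Complex.cos_sub]
  ring

lemma sum_shift (f : ZMod N → ℂ) (m : ZMod N) : ∑ k : ZMod N, f (k + m) = ∑ k : ZMod N, f k :=
  Equiv.sum_comp (Equiv.addRight m) f

lemma sum_shift' (f : ZMod N → ℂ) (m : ZMod N) : ∑ k : ZMod N, f (m + k) = ∑ k : ZMod N, f k :=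
  Equiv.sum_comp (Equiv.addLeft m) f

lemma sum_shift'' (f : ZMod N → ℂ) (m : ZMod N) : ∑ k : ZMod N, f (k - m) = ∑ k : ZMod N, f k :=
  Equiv.sum_comp (Equiv.subRight m) f

lemma sum_C_mul_C (z : ℂ) (hz : ∀ j : ℤ, Complex.sin (z + (j : ℂ) * ((π : ℂ) / N)) ≠ 0)
    {m : ZMod N} (hm : m ≠ 0) :
    ∑ k : ZMod N, C N z k * C N z (k + m) = -(N : ℂ) := by
  have key : ∀ k : ZMod N, C N z k * C N z (k + m)
      = C N 0 (-m) * (C N z (k + m) - C N z k) - 1 := by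
    intro k
    have hA : Complex.sin (z + ((k.val : ℤ) : ℂ) * ((π : ℂ) / N)) ≠ 0 := hz _
    have hB : Complex.sin (z + (((k + m).val : ℤ) : ℂ) * ((π : ℂ) / N)) ≠ 0 := hz _
    set δ : ℤ := (k.val : ℤ) - ((k + m).val : ℤ) with hδdef
    have hδz : ((δ : ℤ) : ZMod N) = -m := by
      rw [hδdef, Int.cast_sub, cast_val, cast_val]
      ring
    have hdvd : ¬ ((N : ℤ) ∣ δ) := by
      intro hd
      apply hm
      have h4 : ((δ : ℤ) : ZMod N) = 0 := (ZMod.intCast_zmod_eq_zero_iff_dvd δ N).mpr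
        (by exact_mod_cast hd)
      rw [hδz] at h4
      simpa using (neg_eq_zero.mp h4)
    have hABdiff : (z + ((k.val : ℤ) : ℂ) * ((π : ℂ) / N))
        - (z + (((k + m).val : ℤ) : ℂ) * ((π : ℂ) / N)) = (δ : ℂ) * ((π : ℂ) / N) := by
      rw [hδdef]
      push_cast
      ring
    have hAB : Complex.sin ((z + ((k.val : ℤ) : ℂ) * ((π : ℂ) / N))
        - (z + (((k + m).val : ℤ) : ℂ) * ((π : ℂ) / N))) ≠ 0 := by
      rw [hABdiff]; exact sin_int_ne δ hdvd
    have h := cot_mul_cot hA hB hAB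
    rw [hABdiff] at h
    have hcot : Complex.cot ((δ : ℂ) * ((π : ℂ) / N)) = C N 0 (-m) := by
      rw [← hδz, C_intCast, zero_add]
    rw [C_val z k, C_val z (k + m), h, hcot]
  calc ∑ k : ZMod N, C N z k * C N z (k + m)
      = ∑ k : ZMod N, (C N 0 (-m) * (C N z (k + m) - C N z k) - 1) :=
        Finset.sum_congr rfl fun k _ => key k
    _ = -(N : ℂ) := by
        rw [Finset.sum_sub_distrib, ← Finset.mul_sum, Finset.sum_sub_distrib,
          sum_shift (fun k => C N z k) m]
        simp [Finset.card_univ, ZMod.card]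


lemma exp_ne_one_iff_sin {w : ℂ} : Complex.sin w = 0 ↔ Complex.exp (2 * I * w) = 1 := by
  rw [Complex.sin_eq_zero_iff, Complex.exp_eq_one_iff]
  constructor
  · rintro ⟨k, rfl⟩
    exact ⟨k, by push_cast; ring⟩
  · rintro ⟨n, hn⟩
    refine ⟨n, ?_⟩
    have hI : (2 : ℂ) * I ≠ 0 := by simp [Complex.I_ne_zero]
    apply mul_left_cancel₀ hI
    rw [hn]
    push_cast
    ring

lemma cot_exp {w : ℂ} (h : Complex.sin w ≠ 0) :
    Complex.cot w = I + 2 * I / (Complex.exp (2 * I * w) - 1) := by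
  have h1 : Complex.exp (2 * I * w) ≠ 1 := fun hc => h (exp_ne_one_iff_sin.mpr hc)
  have h2 : Complex.exp (2 * I * w) - 1 ≠ 0 := sub_ne_zero.mpr h1
  rw [Complex.cot_eq_exp_ratio]
  have h3 : I * (1 - Complex.exp (2 * I * w)) ≠ 0 := by
    simp only [mul_ne_zero_iff]
    exact ⟨Complex.I_ne_zero, fun hc => h1 (by linear_combination -hc)⟩
  field_simp
  ring_nf
  simp [Complex.I_sq]


lemma sum_val_pow (x : ℂ) : ∑ k : ZMod N, x ^ (k.val) = ∑ j ∈ Finset.range N, x ^ j := by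
  refine Finset.sum_nbij' (fun k => k.val) (fun j => (j : ZMod N)) ?_ ?_ ?_ ?_ ?_
  · intro k _; exact Finset.mem_range.mpr (ZMod.val_lt k)
  · intro j _; exact Finset.mem_univ _
  · intro k _; exact ZMod.natCast_rightInverse k
  · intro j hj; exact ZMod.val_cast_of_lt (Finset.mem_range.mp hj)
  · intro k _; rfl

lemma sum_root_pow {x : ℂ} (hxN : x ^ N = 1) (hx : x ≠ 1) :
    ∑ k : ZMod N, x ^ (k.val) = 0 := by
  rw [sum_val_pow, geom_sum_eq hx, hxN]
  simp

lemma sin_N_mul_ne (z : ℂ) (hz : ∀ j : ℤ, Complex.sin (z + (j : ℂ) * ((π : ℂ) / N)) ≠ 0) :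
    Complex.sin ((N : ℂ) * z) ≠ 0 := by
  intro h0
  rw [Complex.sin_eq_zero_iff] at h0
  obtain ⟨l, hl⟩ := h0
  apply hz (-l)
  have hN := hNC (N := N)
  have : z + ((-l : ℤ) : ℂ) * ((π : ℂ) / N) = 0 := by
    push_cast
    field_simp
    linear_combination hl
  rw [this]
  exact Complex.sin_zero

lemma sum_C (z : ℂ) (hz : ∀ j : ℤ, Complex.sin (z + (j : ℂ) * ((π : ℂ) / N)) ≠ 0) :
    ∑ k : ZMod N, C N z k = (N : ℂ) * Complex.cot ((N : ℂ) * z) := by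
  have hN := hNC (N := N)
  have hz' : ∀ j : ℕ, Complex.sin (z + (j : ℂ) * ((π : ℂ) / N)) ≠ 0 := by
    intro j
    have := hz (j : ℤ)
    push_cast at this
    exact this
  set q := Complex.exp (2 * I * z) with hq
  set ω := Complex.exp (2 * π * I / N) with hω
  have hωN : ω ^ N = 1 := by
    rw [hω, ← Complex.exp_nat_mul]
    have h : (N : ℂ) * (2 * π * I / N) = 2 * π * I := by field_simp
    rw [h, Complex.exp_two_pi_mul_I]
  have hωl : ∀ l : ℕ, 0 < l → l < N → ω ^ l ≠ 1 := by
    intro l hl0 hlN hc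
    rw [hω, ← Complex.exp_nat_mul, Complex.exp_eq_one_iff] at hc
    obtain ⟨n, hn⟩ := hc
    have h2 : (2 : ℂ) * π * I ≠ 0 := by
      simp [Complex.I_ne_zero, Real.pi_ne_zero]
    have hl : (l : ℂ) = (n : ℂ) * N := by
      field_simp at hn
      apply mul_right_cancel₀ h2
      linear_combination (2 * (π : ℂ) * I) * hn
    have hl2 : (l : ℤ) = n * N := by exact_mod_cast hl
    have : (N : ℤ) ∣ (l : ℤ) := ⟨n, by rw [hl2, mul_comm]⟩
    have hdvd : N ∣ l := by exact_mod_cast this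
    exact absurd (Nat.le_of_dvd hl0 hdvd) (by omega)
  have hEk : ∀ k : ZMod N, Complex.exp (2 * I * (z + (k.val : ℂ) * ((π : ℂ) / N)))
      = q * ω ^ k.val := by
    intro k
    rw [hq, hω, ← Complex.exp_nat_mul, ← Complex.exp_add]
    congr 1
    field_simp
  have hq1 : ∀ k : ZMod N, q * ω ^ k.val - 1 ≠ 0 := by
    intro k
    refine sub_ne_zero.mpr fun hc => (hz' k.val) (exp_ne_one_iff_sin.mpr ?_)
    rw [hEk k]; exact hc
  have hsinN := sin_N_mul_ne z hz
  have hqN : q ^ N = Complex.exp (2 * I * ((N : ℂ) * z)) := by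
    rw [hq, ← Complex.exp_nat_mul]
    congr 1
    ring
  have hqN1 : q ^ N - 1 ≠ 0 := by
    refine sub_ne_zero.mpr fun hc => hsinN (exp_ne_one_iff_sin.mpr ?_)
    rw [← hqN]; exact hc
  have hrecip : ∑ k : ZMod N, (q * ω ^ k.val - 1)⁻¹ = (N : ℂ) / (q ^ N - 1) := by
    have hterm : ∀ k : ZMod N, (q * ω ^ k.val - 1)⁻¹
        = (∑ l ∈ Finset.range N, q ^ l * (ω ^ l) ^ k.val) / (q ^ N - 1) := by
      intro k
      have hg := geom_sum_mul (q * ω ^ k.val) N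
      have hx : (q * ω ^ k.val) ^ N = q ^ N := by
        rw [mul_pow, ← pow_mul, mul_comm (k.val) N, pow_mul, hωN, one_pow, mul_one]
      rw [hx] at hg
      have hsum : ∑ i ∈ Finset.range N, (q * ω ^ k.val) ^ i
          = ∑ l ∈ Finset.range N, q ^ l * (ω ^ l) ^ k.val := by
        refine Finset.sum_congr rfl fun i _ => ?_
        rw [mul_pow, ← pow_mul, ← pow_mul, mul_comm (k.val) i]
      rw [← hsum, eq_div_iff hqN1, ← hg]
      rw [mul_comm ((∑ i ∈ Finset.range N, (q * ω ^ k.val) ^ i)) (q * ω ^ k.val - 1),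
        ← mul_assoc, inv_mul_cancel₀ (hq1 k), one_mul]
    rw [Finset.sum_congr rfl fun k _ => hterm k, ← Finset.sum_div]
    congr 1
    rw [Finset.sum_comm]
    have hinner : ∀ l ∈ Finset.range N, (∑ k : ZMod N, q ^ l * (ω ^ l) ^ k.val)
        = if l = 0 then (N : ℂ) else 0 := by
      intro l hl
      rw [← Finset.mul_sum]
      by_cases h0 : l = 0
      · subst h0
        simp [Finset.card_univ, ZMod.card]
      · rw [if_neg h0, sum_root_pow (by rw [← pow_mul, mul_comm, pow_mul, hωN, one_pow])
          (hωl l (Nat.pos_of_ne_zero h0) (Finset.mem_range.mp hl)), mul_zero]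
    rw [Finset.sum_congr rfl hinner, Finset.sum_ite_eq' (Finset.range N) 0 (fun _ => (N : ℂ))]
    have : 0 ∈ Finset.range N := Finset.mem_range.mpr (Nat.pos_of_ne_zero (NeZero.ne N))
    simp [this]
  have hCk : ∀ k : ZMod N, C N z k = I + 2 * I / (q * ω ^ k.val - 1) := by
    intro k
    rw [C, cot_exp (hz' k.val), hEk k]
  rw [Finset.sum_congr rfl fun k _ => hCk k]
  rw [Finset.sum_add_distrib, Finset.sum_const, Finset.card_univ, ZMod.card]
  have hdiv : ∑ k : ZMod N, 2 * I / (q * ω ^ k.val - 1)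
      = 2 * I * ((N : ℂ) / (q ^ N - 1)) := by
    rw [← hrecip, Finset.mul_sum]
    exact Finset.sum_congr rfl fun k _ => by rw [div_eq_mul_inv]
  rw [hdiv, cot_exp hsinN, ← hqN]
  push_cast
  ring

lemma sum_C_sq (z : ℂ) (hz : ∀ j : ℤ, Complex.sin (z + (j : ℂ) * ((π : ℂ) / N)) ≠ 0) :
    ∑ k : ZMod N, (C N z k) ^ 2
      = (∑ k : ZMod N, C N z k) ^ 2 + (N : ℂ) * ((N : ℂ) - 1) := by
  have hdouble : ∑ m : ZMod N, ∑ k : ZMod N, C N z k * C N z (k + m)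
      = (∑ k : ZMod N, C N z k) ^ 2 := by
    rw [Finset.sum_comm]
    have h1 : ∀ k : ZMod N, ∑ m : ZMod N, C N z k * C N z (k + m)
        = C N z k * ∑ m : ZMod N, C N z m := by
      intro k
      rw [← Finset.mul_sum, sum_shift' (fun m => C N z m) k]
    rw [Finset.sum_congr rfl fun k _ => h1 k, ← Finset.sum_mul, sq]
  have hsplit : ∑ m : ZMod N, ∑ k : ZMod N, C N z k * C N z (k + m)
      = (∑ k : ZMod N, (C N z k) ^ 2)
        + ∑ m ∈ Finset.univ.erase (0 : ZMod N), ∑ k : ZMod N, C N z k * C N z (k + m) := by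
    rw [← Finset.add_sum_erase _ _ (Finset.mem_univ (0 : ZMod N))]
    congr 1
    exact Finset.sum_congr rfl fun k _ => by rw [add_zero, sq]
  have herase : ∑ m ∈ Finset.univ.erase (0 : ZMod N), ∑ k : ZMod N, C N z k * C N z (k + m)
      = ((N : ℂ) - 1) * (-(N : ℂ)) := by
    rw [Finset.sum_congr rfl fun m hm => sum_C_mul_C z hz (Finset.mem_erase.mp hm).1,
      Finset.sum_const, Finset.card_erase_of_mem (Finset.mem_univ _), Finset.card_univ,
      ZMod.card, nsmul_eq_mul]
    congr 1
    have h1 : 1 ≤ N := Nat.one_le_iff_ne_zero.mpr (NeZero.ne N)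
    push_cast [Nat.cast_sub h1]
    ring
  rw [hsplit, herase] at hdouble
  linear_combination hdouble

lemma R0_apply (r : ℝ) (hr : (r : ℂ) ≠ 0) (β : ℂ) (p q : ZMod N × ZMod N) :
    R0 N r β p q = if q.2 = p.1 + p.2 - q.1 then
      -(1 / (N : ℂ)) * (Complex.sin (I * β / r) * Complex.sin ((π : ℂ) / r) /
        Complex.sin ((I * β + π) / r)) *
      (C N (I * β / ((N : ℂ) * r)) (p.2 - q.1) - C N (-(π : ℂ) / ((N : ℂ) * r)) (p.1 - q.1))
    else 0 := by
  have hN := hNC (N := N)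
  rw [R0, Matrix.of_apply]
  by_cases h : q.2 = p.1 + p.2 - q.1
  · rw [if_pos h, if_pos h, C, C]
    have e1 : (I * β + (((p.2 - q.1).val : ℕ) : ℂ) * π * r) / ((N : ℂ) * r)
        = I * β / ((N : ℂ) * r) + (((p.2 - q.1).val : ℕ) : ℂ) * ((π : ℂ) / N) := by
      field_simp
    have e2 : (-(π : ℂ) + (((p.1 - q.1).val : ℕ) : ℂ) * π * r) / ((N : ℂ) * r)
        = -(π : ℂ) / ((N : ℂ) * r) + (((p.1 - q.1).val : ℕ) : ℂ) * ((π : ℂ) / N) := by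
      field_simp
    rw [e1, e2]
  · rw [if_neg h, if_neg h]

lemma genX {r : ℝ} {β : ℂ} (hβ : GenR N r β) (hr : (r : ℂ) ≠ 0) :
    ∀ j : ℤ, Complex.sin (I * β / ((N : ℂ) * r) + (j : ℂ) * ((π : ℂ) / N)) ≠ 0 := by
  intro j
  have hN := hNC (N := N)
  have h := (hβ.2 j).1
  have e : (I * β + (j : ℂ) * π * r) / ((N : ℂ) * r)
      = I * β / ((N : ℂ) * r) + (j : ℂ) * ((π : ℂ) / N) := by field_simp
  rwa [e] at h

lemma genU {r : ℝ} {β : ℂ} (hβ : GenR N r β) (hr : (r : ℂ) ≠ 0) :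
    ∀ j : ℤ, Complex.sin (-(π : ℂ) / ((N : ℂ) * r) + (j : ℂ) * ((π : ℂ) / N)) ≠ 0 := by
  intro j
  have hN := hNC (N := N)
  have h := (hβ.2 j).2
  have e : (-(π : ℂ) + (j : ℂ) * π * r) / ((N : ℂ) * r)
      = -(π : ℂ) / ((N : ℂ) * r) + (j : ℂ) * ((π : ℂ) / N) := by field_simp
  rwa [e] at h

end R0U

open R0U in
/-- Unitarity of the scaled `sl(N)` R-matrix (Theorem 1 of the paper, stripped of the
scalar normalisation `S₀(β)`, which satisfies `S₀(β)S₀(−β) = 1`):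
`R₀(β) · R₀,₂₁(−β) = Id`, where `R₀,₂₁(−β)_{(a,b),(c,d)} = R₀(−β)_{(b,a),(d,c)}`. -/
theorem R0_unitarity (N : ℕ) [NeZero N] (hN : 2 ≤ N) (r : ℝ) (hr : 0 < r) (β : ℂ)
    (hβ : GenR N r β) (hβ' : GenR N r (-β)) :
    R0 N r β * Matrix.of (fun p q : ZMod N × ZMod N => R0 N r (-β) (p.2, p.1) (q.2, q.1)) =
      (1 : Matrix (ZMod N × ZMod N) (ZMod N × ZMod N) ℂ) := by
  have hrC : (r : ℂ) ≠ 0 := Complex.ofReal_ne_zero.mpr hr.ne'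
  have hNc := hNC (N := N)
  set X : ℂ := I * β / ((N : ℂ) * r) with hXdef
  set U : ℂ := -(π : ℂ) / ((N : ℂ) * r) with hUdef
  have hzX : ∀ j : ℤ, Complex.sin (X + (j : ℂ) * ((π : ℂ) / N)) ≠ 0 := genX hβ hrC
  have hzU : ∀ j : ℤ, Complex.sin (U + (j : ℂ) * ((π : ℂ) / N)) ≠ 0 := genU hβ hrC
  have hXneg : I * (-β) / ((N : ℂ) * r) = -X := by rw [hXdef]; ring
  set κ : ℂ := -(1 / (N : ℂ)) * (Complex.sin (I * β / r) * Complex.sin ((π : ℂ) / r) /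
    Complex.sin ((I * β + π) / r)) with hκ
  set κ' : ℂ := -(1 / (N : ℂ)) * (Complex.sin (I * (-β) / r) * Complex.sin ((π : ℂ) / r) /
    Complex.sin ((I * (-β) + π) / r)) with hκ'
  ext ⟨a, b⟩ ⟨c, d⟩
  rw [Matrix.mul_apply, Matrix.one_apply, Fintype.sum_prod_type]
  have hsecond : ∀ e f : ZMod N,
      (Matrix.of (fun p q : ZMod N × ZMod N => R0 N r (-β) (p.2, p.1) (q.2, q.1)))
        (e, f) (c, d) = R0 N r (-β) (f, e) (d, c) := fun
    | e, f => rfl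
  have hinner : ∀ e : ZMod N,
      (∑ f : ZMod N, R0 N r β (a, b) (e, f)
        * (Matrix.of (fun p q : ZMod N × ZMod N => R0 N r (-β) (p.2, p.1) (q.2, q.1)))
          (e, f) (c, d))
      = if c = a + b - d then
          (κ * (C N X (b - e) - C N U (a - e)))
            * (κ' * (C N (-X) (e - d) - C N U ((a + b - e) - d)))
        else 0 := by
    intro e
    have step1 : ∀ f : ZMod N, R0 N r β (a, b) (e, f)
        * (Matrix.of (fun p q : ZMod N × ZMod N => R0 N r (-β) (p.2, p.1) (q.2, q.1)))
          (e, f) (c, d)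
        = if f = a + b - e then
            (κ * (C N X (b - e) - C N U (a - e))) * R0 N r (-β) (f, e) (d, c)
          else 0 := by
      intro f
      rw [hsecond e f, R0_apply r hrC β (a, b) (e, f), ite_mul, zero_mul]
    rw [Finset.sum_congr rfl fun f _ => step1 f,
      Finset.sum_ite_eq' Finset.univ (a + b - e) _]
    simp only [Finset.mem_univ, if_true]
    rw [R0_apply r hrC (-β) (a + b - e, e) (d, c)]
    have hcond : (c = (a + b - e) + e - d) ↔ (c = a + b - d) := by
      constructor <;> intro h <;> rw [h] <;> ring
    rw [hXneg]
    by_cases hc : c = a + b - d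
    · rw [if_pos (hcond.mpr hc), if_pos hc]
    · rw [if_neg (fun h => hc (hcond.mp h)), if_neg hc, mul_zero]
  rw [Finset.sum_congr rfl fun e _ => hinner e]
  by_cases hc : c = a + b - d
  · rw [Finset.sum_congr rfl fun e _ => if_pos hc]
    subst hc
    set m : ZMod N := b - d with hm
    set n : ZMod N := a - b with hn
    have hreindex : (∑ e : ZMod N,
        κ * (C N X (b - e) - C N U (a - e)) * (κ' * (C N (-X) (e - d) - C N U (a + b - e - d))))
        = ∑ k : ZMod N, κ * κ' *
            ((C N X k - C N U (n + k)) * (-C N X (k - m) - C N U (n + m + k))) := by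
      rw [← Equiv.sum_comp (Equiv.subLeft b) (fun e => κ * (C N X (b - e) - C N U (a - e)) *
          (κ' * (C N (-X) (e - d) - C N U (a + b - e - d))))]
      refine Finset.sum_congr rfl fun k _ => ?_
      simp only [Equiv.subLeft_apply]
      have e1 : b - (b - k) = k := by ring
      have e2 : a - (b - k) = n + k := by rw [hn]; ring
      have e3 : (b - k) - d = -(k - m) := by rw [hm]; ring
      have e4 : a + b - (b - k) - d = n + m + k := by rw [hn, hm]; ring
      rw [e1, e2, e3, e4, C_neg]
      ring
    rw [hreindex, ← Finset.mul_sum]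
    have hexpand : ∀ k : ZMod N,
        (C N X k - C N U (n + k)) * (-C N X (k - m) - C N U (n + m + k))
        = ((C N U (n + k) * C N U (n + m + k) - C N X k * C N X (k - m))
          + (C N U (n + k) * C N X (k - m) - C N X k * C N U (n + m + k))) := fun k => by ring
    rw [Finset.sum_congr rfl fun k _ => hexpand k, Finset.sum_add_distrib,
      Finset.sum_sub_distrib, Finset.sum_sub_distrib]
    have hcross : (∑ k : ZMod N, C N U (n + k) * C N X (k - m))
        = ∑ k : ZMod N, C N X k * C N U (n + m + k) := by
      calc (∑ k : ZMod N, C N U (n + k) * C N X (k - m))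
          = ∑ k : ZMod N, (fun j => C N X j * C N U (n + m + j)) (k - m) := by
            refine Finset.sum_congr rfl fun k _ => ?_
            show _ = C N X (k - m) * C N U (n + m + (k - m))
            rw [show n + m + (k - m) = n + k by ring]
            ring
        _ = ∑ k : ZMod N, C N X k * C N U (n + m + k) :=
            sum_shift'' (fun j => C N X j * C N U (n + m + j)) m
    rw [hcross, sub_self, add_zero]
    by_cases hm0 : m = 0
    · -- diagonal case
      have hbd : b = d := by
        have : b - d = 0 := by rw [← hm, hm0]
        exact sub_eq_zero.mp this
      have hu2 : (∑ k : ZMod N, C N U (n + k) * C N U (n + m + k))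
          = ∑ k : ZMod N, (C N U k) ^ 2 := by
        calc (∑ k : ZMod N, C N U (n + k) * C N U (n + m + k))
            = ∑ k : ZMod N, (fun j => (C N U j) ^ 2) (n + k) := by
              refine Finset.sum_congr rfl fun k _ => ?_
              show _ = (C N U (n + k)) ^ 2
              rw [show n + m + k = n + k by rw [hm0]; ring]
              ring
          _ = ∑ k : ZMod N, (C N U k) ^ 2 := sum_shift' (fun j => (C N U j) ^ 2) n
      have hx2 : (∑ k : ZMod N, C N X k * C N X (k - m)) = ∑ k : ZMod N, (C N X k) ^ 2 := by
        refine Finset.sum_congr rfl fun k _ => ?_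
        rw [show k - m = k by rw [hm0]; ring]
        ring
      rw [hu2, hx2, sum_C_sq U hzU, sum_C_sq X hzX, sum_C U hzU, sum_C X hzX]
      have hca : a + b - d = a := by rw [← hbd]; ring
      rw [hca, ← hbd, if_pos rfl]
      -- scalar identity
      have hNX : (N : ℂ) * X = I * β / r := by rw [hXdef]; field_simp
      have hNU : (N : ℂ) * U = -((π : ℂ) / r) := by rw [hUdef]; field_simp
      have hsA : Complex.sin (I * β / (r : ℂ)) ≠ 0 := by
        have := sin_N_mul_ne X hzX; rwa [hNX] at this
      have hsB : Complex.sin ((π : ℂ) / r) ≠ 0 := by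
        have := sin_N_mul_ne U hzU
        rw [hNU, Complex.sin_neg] at this
        exact fun h => this (by rw [h, neg_zero])
      have e1 : (I * β + (π : ℂ)) / (r : ℂ) = I * β / r + (π : ℂ) / r := by ring
      have e2 : (I * (-β) + (π : ℂ)) / (r : ℂ) = (π : ℂ) / r - I * β / r := by ring
      have e3 : I * (-β) / (r : ℂ) = -(I * β / r) := by ring
      have hs1 : Complex.sin (I * β / (r : ℂ)) * Complex.cos ((π : ℂ) / r)
          + Complex.cos (I * β / (r : ℂ)) * Complex.sin ((π : ℂ) / r) ≠ 0 := by
        rw [← Complex.sin_add, ← e1]; exact hβ.1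
      have hs2 : Complex.sin ((π : ℂ) / r) * Complex.cos (I * β / (r : ℂ))
          - Complex.cos ((π : ℂ) / r) * Complex.sin (I * β / (r : ℂ)) ≠ 0 := by
        rw [← Complex.sin_sub, ← e2]; exact hβ'.1
      rw [hκ, hκ', hNX, hNU, e1, e2, e3, Complex.sin_neg, Complex.sin_add, Complex.sin_sub,
        Complex.cot_eq_cos_div_sin, Complex.cot_eq_cos_div_sin, Complex.cos_neg,
        Complex.sin_neg]
      field_simp
      have hD : -(Complex.sin (I * β / (r : ℂ)) ^ 2 * Complex.cos ((π : ℂ) / r) ^ 2)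
          + Complex.sin ((π : ℂ) / r) ^ 2 * Complex.cos (I * β / (r : ℂ)) ^ 2 ≠ 0 := by
        have h := mul_ne_zero hs1 hs2
        convert h using 1
        ring
      linear_combination (N : ℂ) * (mul_inv_cancel₀ hD)
    · -- off-diagonal case
      have hu3 : (∑ k : ZMod N, C N U (n + k) * C N U (n + m + k)) = -(N : ℂ) := by
        calc (∑ k : ZMod N, C N U (n + k) * C N U (n + m + k))
            = ∑ k : ZMod N, (fun j => C N U j * C N U (j + m)) (n + k) := by
              refine Finset.sum_congr rfl fun k _ => ?_
              show _ = C N U (n + k) * C N U ((n + k) + m)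
              rw [show (n + k) + m = n + m + k by ring]
          _ = ∑ k : ZMod N, C N U k * C N U (k + m) :=
              sum_shift' (fun j => C N U j * C N U (j + m)) n
          _ = -(N : ℂ) := sum_C_mul_C U hzU hm0
      have hx3 : (∑ k : ZMod N, C N X k * C N X (k - m)) = -(N : ℂ) := by
        calc (∑ k : ZMod N, C N X k * C N X (k - m))
            = ∑ k : ZMod N, C N X k * C N X (k + (-m)) := by
              refine Finset.sum_congr rfl fun k _ => by rw [sub_eq_add_neg]
          _ = -(N : ℂ) := sum_C_mul_C X hzX (neg_ne_zero.mpr hm0)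
      rw [hu3, hx3, sub_self, mul_zero, if_neg]
      intro h
      rw [Prod.ext_iff] at h
      have hb : b = d := h.2
      exact hm0 (by rw [hm, hb, sub_self])
  · rw [Finset.sum_congr rfl fun e _ => if_neg hc, Finset.sum_const, smul_zero]
    rw [if_neg]
    rintro ⟨rfl, rfl⟩
    exact hc (by ring)
end

section
/- Let N ≥ 2 be an integer, r > 0 real, and β ∈ ℂ generic. Let t₂ denote partial transposition in the second tensor factor, i.e. (M^{t₂})_{(a,b),(c,d)} = M_{(a,d),(c,b)}, and let R₀,₂₁(β') be the matrix with entries R₀(β')_{(b,a),(d,c)}. Then the matrix R₀(β)^{t₂} · R₀,₂₁(−β+Niπ)^{t₂} is a scalar multiple of the N²×N² identity matrix. (This is the crossing-symmetry relation R₁₂(β)^{t₂} R₂₁(−β+Niπ)^{t₂} = 1 of Theorem 1, which holds exactly for the fully normalised R-matrix; stripping the scalar normalisation S₀(β) leaves a scalar multiple of the identity.) -/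
open Complex Matrix
open scoped Real Kronecker

/-- Partial transposition in the second tensor factor:
`(M^{t₂})_{(a,b),(c,d)} = M_{(a,d),(c,b)}`. -/
def pt2 {ι α : Type*} (M : Matrix (ι × ι) (ι × ι) α) : Matrix (ι × ι) (ι × ι) α :=
  Matrix.of fun p q => M (p.1, q.2) (q.1, p.2)

/-- The matrix `M₂₁`, with entries `(M₂₁)_{(a,b),(c,d)} = M_{(b,a),(d,c)}`. -/
def swap21 {ι α : Type*} (M : Matrix (ι × ι) (ι × ι) α) : Matrix (ι × ι) (ι × ι) α :=
  Matrix.of fun p q => M (p.2, p.1) (q.2, q.1)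

set_option linter.unusedSectionVars false
set_option linter.unusedVariables false

noncomputable def zt (N : ℕ) : ℂ := Complex.exp (2 * (π : ℂ) * Complex.I / (N : ℂ))

noncomputable def om (N : ℕ) (j : ZMod N) : ℂ := zt N ^ j.val

section Aux

variable {N : ℕ} [NeZero N]

lemma zt_prim : IsPrimitiveRoot (zt N) N :=
  Complex.isPrimitiveRoot_exp N (NeZero.ne N)

lemma zt_pow_mod (a : ℕ) : zt N ^ (a % N) = zt N ^ a := by
  conv_rhs => rw [← Nat.div_add_mod a N]
  rw [pow_add, pow_mul, zt_prim.pow_eq_one, one_pow, one_mul]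

lemma om_zero : om N 0 = 1 := by
  simp [om, ZMod.val_zero]

lemma om_add (j k : ZMod N) : om N (j + k) = om N j * om N k := by
  rw [om, om, om, ZMod.val_add, zt_pow_mod, pow_add]

lemma om_pow (j : ZMod N) : om N j ^ N = 1 := by
  rw [om, ← pow_mul, mul_comm, pow_mul, zt_prim.pow_eq_one, one_pow]

lemma om_neg_mul (j : ZMod N) : om N (-j) * om N j = 1 := by
  rw [← om_add, neg_add_cancel, om_zero]

lemma om_ne_one {e : ZMod N} (he : e ≠ 0) : om N e ≠ 1 := by
  have h1 : 0 < e.val := Nat.pos_of_ne_zero (fun h => he ((ZMod.val_eq_zero e).mp h))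
  exact zt_prim.pow_ne_one_of_pos_of_lt h1.ne' (ZMod.val_lt e)

lemma sum_zmod {M : Type*} [AddCommMonoid M] (f : ℕ → M) :
    ∑ j : ZMod N, f (ZMod.val j) = ∑ j ∈ Finset.range N, f j := by
  refine Finset.sum_nbij' (fun j => ZMod.val j) (fun n => (n : ZMod N)) ?_ ?_ ?_ ?_ ?_
  · intro a _; exact Finset.mem_range.mpr (ZMod.val_lt a)
  · intro a _; exact Finset.mem_univ _
  · intro a _; exact ZMod.natCast_rightInverse a
  · intro a ha; exact ZMod.val_cast_of_lt (Finset.mem_range.mp ha)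
  · intro a _; rfl

lemma char_sum {t : ℕ} (htN : t < N) (ht0 : t ≠ 0) :
    ∑ j ∈ Finset.range N, (zt N ^ t) ^ j = 0 := by
  have h1 : zt N ^ t ≠ 1 :=
    zt_prim.pow_ne_one_of_pos_of_lt ht0 htN
  rw [geom_sum_eq h1, ← pow_mul, mul_comm, pow_mul, zt_prim.pow_eq_one, one_pow, sub_self,
    zero_div]

lemma sum_inv_zmod (z : ℂ) (hz : z ^ N ≠ 1) :
    ∑ j : ZMod N, 1 / (z * om N j - 1) = (N : ℂ) / (z ^ N - 1) := by
  have hNpos : 0 < N := Nat.pos_of_ne_zero (NeZero.ne N)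
  have hpowN : ∀ t : ℕ, (z * zt N ^ t) ^ N = z ^ N := by
    intro t
    rw [mul_pow, ← pow_mul, mul_comm t N, pow_mul, zt_prim.pow_eq_one, one_pow, mul_one]
  have hne : ∀ t : ℕ, z * zt N ^ t - 1 ≠ 0 := by
    intro t h
    apply hz
    rw [← hpowN t, sub_eq_zero.mp h, one_pow]
  have key : (z ^ N - 1) * ∑ j ∈ Finset.range N, 1 / (z * zt N ^ j - 1) = (N : ℂ) := by
    rw [Finset.mul_sum]
    have step : ∀ j ∈ Finset.range N, (z ^ N - 1) * (1 / (z * zt N ^ j - 1))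
        = ∑ t ∈ Finset.range N, z ^ t * (zt N ^ t) ^ j := by
      intro j _
      rw [mul_one_div, div_eq_iff (hne j)]
      refine (?_ : _ = z ^ N - 1).symm
      calc (∑ t ∈ Finset.range N, z ^ t * (zt N ^ t) ^ j) * (z * zt N ^ j - 1)
          = (∑ t ∈ Finset.range N, (z * zt N ^ j) ^ t) * (z * zt N ^ j - 1) := by
            congr 1
            refine Finset.sum_congr rfl fun t _ => ?_
            rw [mul_pow, ← pow_mul, ← pow_mul, mul_comm t j]
        _ = (z * zt N ^ j) ^ N - 1 := geom_sum_mul _ _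
        _ = z ^ N - 1 := by rw [hpowN]
    rw [Finset.sum_congr rfl step, Finset.sum_comm]
    have inner : ∀ t ∈ Finset.range N, ∑ j ∈ Finset.range N, z ^ t * (zt N ^ t) ^ j
        = if t = 0 then (N : ℂ) else 0 := by
      intro t ht
      rw [← Finset.mul_sum]
      by_cases ht0 : t = 0
      · subst ht0; simp
      · rw [if_neg ht0, char_sum (Finset.mem_range.mp ht) ht0, mul_zero]
    rw [Finset.sum_congr rfl inner, Finset.sum_ite_eq' (Finset.range N) 0 (fun _ => (N : ℂ)),
      if_pos (Finset.mem_range.mpr hNpos)]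
  have htr : ∑ j : ZMod N, 1 / (z * om N j - 1)
      = ∑ j ∈ Finset.range N, 1 / (z * zt N ^ j - 1) := by
    simp only [om]
    exact sum_zmod (fun t => 1 / (z * zt N ^ t - 1))
  rw [htr, eq_div_iff (sub_ne_zero.mpr hz)]
  linear_combination key

lemma exp_two_mul_I_ne_one {z : ℂ} (hz : Complex.sin z ≠ 0) :
    Complex.exp (2 * I * z) ≠ 1 := by
  intro h
  apply hz
  have h2 : Complex.exp (z * I) * Complex.exp (z * I) = 1 := by
    rw [← Complex.exp_add, show z * I + z * I = 2 * I * z by ring]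
    exact h
  have h3 : Complex.exp (-(z * I)) = Complex.exp (z * I) := by
    rw [Complex.exp_neg]
    exact inv_eq_of_mul_eq_one_right h2
  rw [Complex.sin, neg_mul, h3, sub_self, zero_mul, zero_div]

lemma cot_exp {z : ℂ} (hz : Complex.sin z ≠ 0) :
    Complex.cot z = I * ((Complex.exp (2 * I * z) + 1) / (Complex.exp (2 * I * z) - 1)) := by
  have h1 : Complex.exp (2 * I * z) - 1 ≠ 0 := sub_ne_zero.mpr (exp_two_mul_I_ne_one hz)
  have h1' : 1 - Complex.exp (2 * I * z) ≠ 0 := fun h => h1 (by linear_combination -h)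
  have hI : (I : ℂ) ≠ 0 := Complex.I_ne_zero
  rw [Complex.cot_eq_exp_ratio]
  field_simp
  linear_combination (Complex.exp (2 * I * z) ^ 2 - 1) * Complex.I_sq

lemma pf_lemma {ρ v : ℂ} (hρ : ρ ≠ 1) (h1 : v ≠ 1) (h2 : ρ * v ≠ 1) :
    (ρ * v + 1) / (ρ * v - 1) * ((v + 1) / (v - 1))
      = 1 + 2 * (ρ + 1) / (ρ - 1) * (1 / (v - 1) - 1 / (ρ * v - 1)) := by
  have hρ1 : ρ - 1 ≠ 0 := sub_ne_zero.mpr hρ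
  have hv1 : v - 1 ≠ 0 := sub_ne_zero.mpr h1
  have hρv1 : ρ * v - 1 ≠ 0 := sub_ne_zero.mpr h2
  field_simp
  ring

lemma mulII (s t a b c d : ℂ) :
    (s * (I * a - I * b)) * (t * (I * c - I * d)) = (-(s * t)) * ((a - b) * (c - d)) := by
  linear_combination (s * t * (a - b) * (c - d)) * Complex.I_mul_I

lemma sumG (V : ℂ) (hV : ∀ j : ZMod N, V * om N j ≠ 1) (hU : V ^ N ≠ 1) :
    ∑ j : ZMod N, (V * om N j + 1) / (V * om N j - 1)
      = (N : ℂ) * ((V ^ N + 1) / (V ^ N - 1)) := by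
  have hU1 : V ^ N - 1 ≠ 0 := sub_ne_zero.mpr hU
  have h1 : ∀ j : ZMod N, (V * om N j + 1) / (V * om N j - 1)
      = 1 + 2 * (1 / (V * om N j - 1)) := by
    intro j
    have hv : V * om N j - 1 ≠ 0 := sub_ne_zero.mpr (hV j)
    field_simp
    ring
  rw [Finset.sum_congr rfl (fun j _ => h1 j), Finset.sum_add_distrib, ← Finset.mul_sum,
    sum_inv_zmod V hU, Finset.sum_const, Finset.card_univ, ZMod.card, nsmul_eq_mul, mul_one]
  field_simp
  ring

lemma sumGG (V : ℂ) (hV : ∀ j : ZMod N, V * om N j ≠ 1) (hU : V ^ N ≠ 1) {e : ZMod N}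
    (he : e ≠ 0) :
    ∑ j : ZMod N, ((V * om N (e + j) + 1) / (V * om N (e + j) - 1)) *
        ((V * om N j + 1) / (V * om N j - 1)) = (N : ℂ) := by
  have hU1 : V ^ N - 1 ≠ 0 := sub_ne_zero.mpr hU
  have hρ : om N e ≠ 1 := om_ne_one he
  have hρN : om N e ^ N = 1 := om_pow e
  have harg : ∀ j : ZMod N, V * om N (e + j) = om N e * (V * om N j) := by
    intro j; rw [om_add]; ring
  have hz2 : (om N e * V) ^ N ≠ 1 := by
    rw [mul_pow, hρN, one_mul]; exact hU
  have h1 : ∀ j : ZMod N, ((V * om N (e + j) + 1) / (V * om N (e + j) - 1)) *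
      ((V * om N j + 1) / (V * om N j - 1))
      = 1 + 2 * (om N e + 1) / (om N e - 1) *
          (1 / (V * om N j - 1) - 1 / (om N e * V * om N j - 1)) := by
    intro j
    have h2 : om N e * (V * om N j) ≠ 1 := by
      rw [← harg j]; exact hV (e + j)
    rw [harg j, pf_lemma hρ (hV j) h2, mul_assoc]
  rw [Finset.sum_congr rfl (fun j _ => h1 j), Finset.sum_add_distrib, ← Finset.mul_sum,
    Finset.sum_sub_distrib, sum_inv_zmod V hU]
  have h3 : ∑ j : ZMod N, 1 / (om N e * V * om N j - 1) = (N : ℂ) / (V ^ N - 1) := by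
    rw [sum_inv_zmod (om N e * V) hz2, mul_pow, hρN, one_mul]
  rw [h3, sub_self, mul_zero, add_zero, Finset.sum_const, Finset.card_univ, ZMod.card,
    nsmul_eq_mul, mul_one]

lemma core_sum (V P Q : ℂ)
    (hV : ∀ j : ZMod N, V * om N j ≠ 1) (hU : V ^ N ≠ 1)
    (hP : P ≠ 1) (hQ : Q ≠ 1) (hPQ : P * Q = V ^ N) (a b : ZMod N) :
    ∑ m : ZMod N,
        ((P + 1) / (P - 1) - (V * om N (a - m) + 1) / (V * om N (a - m) - 1)) *
          ((Q + 1) / (Q - 1) - (V * om N (b - m) + 1) / (V * om N (b - m) - 1)) =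
      if a = b then (∑ j : ZMod N, ((V * om N j + 1) / (V * om N j - 1)) ^ 2) - (N : ℂ)
      else 0 := by
  have hU1 : V ^ N - 1 ≠ 0 := sub_ne_zero.mpr hU
  have hP1 : P - 1 ≠ 0 := sub_ne_zero.mpr hP
  have hQ1 : Q - 1 ≠ 0 := sub_ne_zero.mpr hQ
  have hPQ1 : P * Q - 1 ≠ 0 := by rw [hPQ]; exact hU1
  have hGb : ∑ m : ZMod N, (V * om N (b - m) + 1) / (V * om N (b - m) - 1)
      = ∑ j : ZMod N, (V * om N j + 1) / (V * om N j - 1) :=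
    Fintype.sum_equiv (Equiv.subLeft b) _ _ (fun m => rfl)
  have hGa : ∑ m : ZMod N, (V * om N (a - m) + 1) / (V * om N (a - m) - 1)
      = ∑ j : ZMod N, (V * om N j + 1) / (V * om N j - 1) :=
    Fintype.sum_equiv (Equiv.subLeft a) _ _ (fun m => rfl)
  have hGG : ∑ m : ZMod N, ((V * om N (a - m) + 1) / (V * om N (a - m) - 1)) *
        ((V * om N (b - m) + 1) / (V * om N (b - m) - 1))
      = ∑ j : ZMod N, ((V * om N (a - b + j) + 1) / (V * om N (a - b + j) - 1)) *
        ((V * om N j + 1) / (V * om N j - 1)) := by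
    refine Fintype.sum_equiv (Equiv.subLeft b) _ _ (fun m => ?_)
    simp only [Equiv.subLeft_apply]
    rw [show a - b + (b - m) = a - m from by ring]
  have hsplit : ∑ m : ZMod N,
        ((P + 1) / (P - 1) - (V * om N (a - m) + 1) / (V * om N (a - m) - 1)) *
          ((Q + 1) / (Q - 1) - (V * om N (b - m) + 1) / (V * om N (b - m) - 1))
      = (N : ℂ) * ((P + 1) / (P - 1) * ((Q + 1) / (Q - 1)))
        - (P + 1) / (P - 1) * ∑ j : ZMod N, (V * om N j + 1) / (V * om N j - 1)
        - (Q + 1) / (Q - 1) * ∑ j : ZMod N, (V * om N j + 1) / (V * om N j - 1)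
        + ∑ j : ZMod N, ((V * om N (a - b + j) + 1) / (V * om N (a - b + j) - 1)) *
            ((V * om N j + 1) / (V * om N j - 1)) := by
    have e1 : ∀ m : ZMod N,
        ((P + 1) / (P - 1) - (V * om N (a - m) + 1) / (V * om N (a - m) - 1)) *
          ((Q + 1) / (Q - 1) - (V * om N (b - m) + 1) / (V * om N (b - m) - 1))
        = (P + 1) / (P - 1) * ((Q + 1) / (Q - 1))
          - (P + 1) / (P - 1) * ((V * om N (b - m) + 1) / (V * om N (b - m) - 1))
          - (Q + 1) / (Q - 1) * ((V * om N (a - m) + 1) / (V * om N (a - m) - 1))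
          + ((V * om N (a - m) + 1) / (V * om N (a - m) - 1)) *
            ((V * om N (b - m) + 1) / (V * om N (b - m) - 1)) := fun m => by ring
    rw [Finset.sum_congr rfl (fun m _ => e1 m), Finset.sum_add_distrib,
      Finset.sum_sub_distrib, Finset.sum_sub_distrib,
      show (∑ _m : ZMod N, (P + 1) / (P - 1) * ((Q + 1) / (Q - 1)))
          = (N : ℂ) * ((P + 1) / (P - 1) * ((Q + 1) / (Q - 1))) from by
        rw [Finset.sum_const, Finset.card_univ, ZMod.card, nsmul_eq_mul],
      ← Finset.mul_sum, ← Finset.mul_sum, hGa, hGb, hGG]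
  rw [hsplit, sumG V hV hU]
  by_cases hab : a = b
  · subst hab
    rw [if_pos rfl]
    have h0 : ∑ j : ZMod N, ((V * om N (a - a + j) + 1) / (V * om N (a - a + j) - 1)) *
          ((V * om N j + 1) / (V * om N j - 1))
        = ∑ j : ZMod N, ((V * om N j + 1) / (V * om N j - 1)) ^ 2 := by
      simp only [sub_self, zero_add, sq]
    rw [h0, ← hPQ]
    field_simp
    ring
  · rw [if_neg hab, sumGG V hV hU (sub_ne_zero.mpr (fun h => hab h)), ← hPQ]
    field_simp
    ring

lemma exp_arg {r : ℝ} (hr : (r : ℂ) ≠ 0) (hN : (N : ℂ) ≠ 0) (c : ℂ) (v : ℕ) :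
    Complex.exp (2 * I * ((c + (v : ℂ) * (π : ℂ) * (r : ℂ)) / ((N : ℂ) * (r : ℂ))))
      = Complex.exp (2 * I * c / ((N : ℂ) * (r : ℂ))) * zt N ^ v := by
  rw [zt, ← Complex.exp_nat_mul, ← Complex.exp_add]
  congr 1
  field_simp

lemma cot_form {r : ℝ} (hr : (r : ℂ) ≠ 0) (hN : (N : ℂ) ≠ 0) (c : ℂ) (v : ℕ)
    (h : Complex.sin ((c + (v : ℂ) * (π : ℂ) * (r : ℂ)) / ((N : ℂ) * (r : ℂ))) ≠ 0) :
    Complex.cot ((c + (v : ℂ) * (π : ℂ) * (r : ℂ)) / ((N : ℂ) * (r : ℂ)))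
      = I * ((Complex.exp (2 * I * c / ((N : ℂ) * (r : ℂ))) * zt N ^ v + 1) /
          (Complex.exp (2 * I * c / ((N : ℂ) * (r : ℂ))) * zt N ^ v - 1)) := by
  rw [cot_exp h, exp_arg hr hN]

lemma exp_form_ne_one {r : ℝ} (hr : (r : ℂ) ≠ 0) (hN : (N : ℂ) ≠ 0) (c : ℂ) (v : ℕ)
    (h : Complex.sin ((c + (v : ℂ) * (π : ℂ) * (r : ℂ)) / ((N : ℂ) * (r : ℂ))) ≠ 0) :
    Complex.exp (2 * I * c / ((N : ℂ) * (r : ℂ))) * zt N ^ v ≠ 1 := by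
  rw [← exp_arg hr hN]
  exact exp_two_mul_I_ne_one h

lemma V_pow_ne_one {r : ℝ} (hr : (r : ℂ) ≠ 0) (hN : (N : ℂ) ≠ 0)
    (hs : ∀ k : ℤ, Complex.sin ((-(π : ℂ) + (k : ℂ) * (π : ℂ) * (r : ℂ)) /
      ((N : ℂ) * (r : ℂ))) ≠ 0) :
    Complex.exp (2 * I * (-(π : ℂ)) / ((N : ℂ) * (r : ℂ))) ^ N ≠ 1 := by
  rw [← Complex.exp_nat_mul]
  intro h
  obtain ⟨n, hn⟩ := Complex.exp_eq_one_iff.mp h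
  have hπ : (π : ℂ) ≠ 0 := Complex.ofReal_ne_zero.mpr Real.pi_ne_zero
  have hI : (I : ℂ) ≠ 0 := Complex.I_ne_zero
  have hrn : (n : ℂ) * (r : ℂ) = -1 := by
    have key : ((n : ℂ) * (r : ℂ) + 1) * (2 * (π : ℂ) * I * (N : ℂ)) = 0 := by
      field_simp at hn
      linear_combination (-(2 * (π : ℂ) * I * (N : ℂ))) * hn
    rcases mul_eq_zero.mp key with h1 | h2
    · linear_combination h1
    · exact absurd h2 (by
        exact mul_ne_zero (mul_ne_zero (mul_ne_zero two_ne_zero hπ) hI) hN)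
  apply hs ((N : ℤ) - n)
  have harg : (-(π : ℂ) + (((N : ℤ) - n : ℤ) : ℂ) * (π : ℂ) * (r : ℂ)) / ((N : ℂ) * (r : ℂ))
      = (π : ℂ) := by
    push_cast
    rw [div_eq_iff (mul_ne_zero hN hr)]
    linear_combination (-(π : ℂ)) * hrn
  rw [harg]
  exact Complex.sin_pi


lemma WWprime {r : ℝ} (hr : (r : ℂ) ≠ 0) (hN : (N : ℂ) ≠ 0) (β : ℂ) :
    Complex.exp (2 * I * (I * β) / ((N : ℂ) * (r : ℂ))) *
      Complex.exp (2 * I * (I * (-β + (N : ℂ) * I * (π : ℂ))) / ((N : ℂ) * (r : ℂ)))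
      = Complex.exp (2 * I * (-(π : ℂ)) / ((N : ℂ) * (r : ℂ))) ^ N := by
  rw [← Complex.exp_nat_mul, ← Complex.exp_add]
  congr 1
  field_simp
  linear_combination ((N : ℂ) * (π : ℂ)) * Complex.I_mul_I

end Aux

/-- Crossing symmetry of the scaled `sl(N)` R-matrix (Theorem 1 of the paper):
`R₁₂(β)^{t₂} · R₂₁(−β + Niπ)^{t₂} = 1` holds for the fully normalised R-matrix, so for the
R-matrix `R₀` stripped of its scalar normalisation `S₀(β)` the product
`R₀(β)^{t₂} · R₀,₂₁(−β + Niπ)^{t₂}` is a scalar multiple of the identity. -/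
theorem R0_crossing_symmetry (N : ℕ) [NeZero N] (hN : 2 ≤ N) (r : ℝ) (hr : 0 < r) (β : ℂ)
    (hβ : GenR N r β) (hβ' : GenR N r (-β + (N : ℂ) * Complex.I * (π : ℂ))) :
    ∃ μ : ℂ,
      pt2 (R0 N r β) * pt2 (swap21 (R0 N r (-β + (N : ℂ) * Complex.I * (π : ℂ)))) =
        μ • (1 : Matrix (ZMod N × ZMod N) (ZMod N × ZMod N) ℂ) := by
  classical
  obtain ⟨-, hβ2⟩ := hβ
  obtain ⟨-, hβ'2⟩ := hβ'
  have hNc : (N : ℂ) ≠ 0 := Nat.cast_ne_zero.mpr (NeZero.ne N)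
  have hrc : (r : ℂ) ≠ 0 := Complex.ofReal_ne_zero.mpr hr.ne'
  have hsV : ∀ v : ℕ,
      Complex.sin ((-(π : ℂ) + (v : ℂ) * (π : ℂ) * (r : ℂ)) / ((N : ℂ) * (r : ℂ))) ≠ 0 := by
    intro v
    have h := (hβ2 (v : ℤ)).2
    exact_mod_cast h
  have hsW : ∀ v : ℕ,
      Complex.sin ((Complex.I * β + (v : ℂ) * (π : ℂ) * (r : ℂ)) / ((N : ℂ) * (r : ℂ))) ≠ 0 := by
    intro v
    have h := (hβ2 (v : ℤ)).1
    exact_mod_cast h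
  have hsW' : ∀ v : ℕ,
      Complex.sin ((Complex.I * (-β + (N : ℂ) * Complex.I * (π : ℂ)) +
        (v : ℂ) * (π : ℂ) * (r : ℂ)) / ((N : ℂ) * (r : ℂ))) ≠ 0 := by
    intro v
    have h := (hβ'2 (v : ℤ)).1
    exact_mod_cast h
  have hγ : ∀ e : ZMod N,
      Complex.cot ((-(π : ℂ) + ((ZMod.val e : ℕ) : ℂ) * (π : ℂ) * (r : ℂ)) /
          ((N : ℂ) * (r : ℂ)))
        = Complex.I * ((Complex.exp (2 * I * (-(π : ℂ)) / ((N : ℂ) * (r : ℂ))) * om N e + 1) /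
            (Complex.exp (2 * I * (-(π : ℂ)) / ((N : ℂ) * (r : ℂ))) * om N e - 1)) := by
    intro e
    simp only [om]
    exact cot_form hrc hNc (-(π : ℂ)) e.val (hsV e.val)
  have hκ : ∀ e : ZMod N,
      Complex.cot ((Complex.I * β + ((ZMod.val e : ℕ) : ℂ) * (π : ℂ) * (r : ℂ)) /
          ((N : ℂ) * (r : ℂ)))
        = Complex.I * ((Complex.exp (2 * I * (Complex.I * β) / ((N : ℂ) * (r : ℂ))) * om N e + 1) /
            (Complex.exp (2 * I * (Complex.I * β) / ((N : ℂ) * (r : ℂ))) * om N e - 1)) := by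
    intro e
    simp only [om]
    exact cot_form hrc hNc (Complex.I * β) e.val (hsW e.val)
  have hκ' : ∀ e : ZMod N,
      Complex.cot ((Complex.I * (-β + (N : ℂ) * Complex.I * (π : ℂ)) +
          ((ZMod.val e : ℕ) : ℂ) * (π : ℂ) * (r : ℂ)) / ((N : ℂ) * (r : ℂ)))
        = Complex.I * ((Complex.exp (2 * I * (Complex.I * (-β + (N : ℂ) * Complex.I * (π : ℂ))) /
              ((N : ℂ) * (r : ℂ))) * om N e + 1) /
            (Complex.exp (2 * I * (Complex.I * (-β + (N : ℂ) * Complex.I * (π : ℂ))) /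
              ((N : ℂ) * (r : ℂ))) * om N e - 1)) := by
    intro e
    simp only [om]
    exact cot_form hrc hNc (Complex.I * (-β + (N : ℂ) * Complex.I * (π : ℂ))) e.val (hsW' e.val)
  have hVne : ∀ j : ZMod N,
      Complex.exp (2 * I * (-(π : ℂ)) / ((N : ℂ) * (r : ℂ))) * om N j ≠ 1 := by
    intro j
    simp only [om]
    exact exp_form_ne_one hrc hNc (-(π : ℂ)) j.val (hsV j.val)
  have hWne : ∀ j : ZMod N,
      Complex.exp (2 * I * (Complex.I * β) / ((N : ℂ) * (r : ℂ))) * om N j ≠ 1 := by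
    intro j
    simp only [om]
    exact exp_form_ne_one hrc hNc (Complex.I * β) j.val (hsW j.val)
  have hW'ne : ∀ j : ZMod N,
      Complex.exp (2 * I * (Complex.I * (-β + (N : ℂ) * Complex.I * (π : ℂ))) /
        ((N : ℂ) * (r : ℂ))) * om N j ≠ 1 := by
    intro j
    simp only [om]
    exact exp_form_ne_one hrc hNc (Complex.I * (-β + (N : ℂ) * Complex.I * (π : ℂ))) j.val
      (hsW' j.val)
  have hU : Complex.exp (2 * I * (-(π : ℂ)) / ((N : ℂ) * (r : ℂ))) ^ N ≠ 1 :=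
    V_pow_ne_one hrc hNc (fun k => (hβ2 k).2)
  have hPQ : ∀ e f : ZMod N, e + f = 0 →
      (Complex.exp (2 * I * (Complex.I * β) / ((N : ℂ) * (r : ℂ))) * om N e) *
        (Complex.exp (2 * I * (Complex.I * (-β + (N : ℂ) * Complex.I * (π : ℂ))) /
          ((N : ℂ) * (r : ℂ))) * om N f)
        = Complex.exp (2 * I * (-(π : ℂ)) / ((N : ℂ) * (r : ℂ))) ^ N := by
    intro e f hef
    have h1 : om N e * om N f = 1 := by rw [← om_add, hef, om_zero]
    calc (Complex.exp (2 * I * (Complex.I * β) / ((N : ℂ) * (r : ℂ))) * om N e) *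
        (Complex.exp (2 * I * (Complex.I * (-β + (N : ℂ) * Complex.I * (π : ℂ))) /
          ((N : ℂ) * (r : ℂ))) * om N f)
        = (Complex.exp (2 * I * (Complex.I * β) / ((N : ℂ) * (r : ℂ))) *
            Complex.exp (2 * I * (Complex.I * (-β + (N : ℂ) * Complex.I * (π : ℂ))) /
              ((N : ℂ) * (r : ℂ)))) * (om N e * om N f) := by ring
      _ = _ := by rw [h1, mul_one, WWprime hrc hNc β]
  refine ⟨(-(1 / (N : ℂ)) *
      (Complex.sin (Complex.I * β / (r : ℂ)) * Complex.sin ((π : ℂ) / (r : ℂ)) /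
        Complex.sin ((Complex.I * β + (π : ℂ)) / (r : ℂ)))) *
      (-(1 / (N : ℂ)) *
      (Complex.sin (Complex.I * (-β + (N : ℂ) * Complex.I * (π : ℂ)) / (r : ℂ)) *
        Complex.sin ((π : ℂ) / (r : ℂ)) /
        Complex.sin ((Complex.I * (-β + (N : ℂ) * Complex.I * (π : ℂ)) + (π : ℂ)) / (r : ℂ)))) *
      ((N : ℂ) - ∑ j : ZMod N,
        ((Complex.exp (2 * I * (-(π : ℂ)) / ((N : ℂ) * (r : ℂ))) * om N j + 1) /
         (Complex.exp (2 * I * (-(π : ℂ)) / ((N : ℂ) * (r : ℂ))) * om N j - 1)) ^ 2),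
    ?_⟩
  ext p q
  rw [Matrix.mul_apply]
  simp only [Matrix.smul_apply, Matrix.one_apply, smul_eq_mul, mul_ite, mul_one, mul_zero]
  simp only [pt2, swap21, R0, Matrix.of_apply]
  rw [Fintype.sum_prod_type]
  have hiff : ∀ m n : ZMod N, (p.2 = p.1 + n - m) = (n = m - p.1 + p.2) :=
    fun m n => propext ⟨fun h => by rw [h]; ring, fun h => by rw [h]; ring⟩
  simp only [hiff, ite_mul, zero_mul]
  simp only [Finset.sum_ite_eq', Finset.mem_univ, if_true]
  simp only [show ∀ m : ZMod N, q.2 + m - (m - p.1 + p.2) = q.2 + p.1 - p.2 from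
      fun m => by ring,
    show ∀ m : ZMod N, m - p.1 + p.2 - m = p.2 - p.1 from fun m => by ring,
    show ∀ m : ZMod N, m - (m - p.1 + p.2) = p.1 - p.2 from fun m => by ring]
  by_cases hpq : q.1 = q.2 + p.1 - p.2
  · simp only [if_pos hpq]
    simp only [show ∀ m : ZMod N, q.2 - (m - p.1 + p.2) = q.1 - m from
      fun m => by rw [hpq]; ring]
    simp only [hγ, hκ, hκ']
    simp only [mulII]
    rw [← Finset.mul_sum]
    rw [core_sum _ _ _ hVne hU (hWne (p.2 - p.1)) (hW'ne (p.1 - p.2))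
      (hPQ (p.2 - p.1) (p.1 - p.2) (by ring)) p.1 q.1]
    by_cases h1 : p.1 = q.1
    · have h2 : p.2 = q.2 := by
        rw [← h1] at hpq
        linear_combination hpq
      rw [if_pos h1, if_pos (Prod.ext h1 h2)]
      ring
    · rw [if_neg h1, if_neg (fun h => h1 (by rw [h]))]
      ring
  · simp only [if_neg hpq, mul_zero, Finset.sum_const_zero]
    rw [if_neg (fun h => hpq (by rw [h]; ring))]
end

section
/- Let N = 2, r > 0 real, and β ∈ ℂ generic. In the basis (00,01,10,11) of ℂ²⊗ℂ², the scaled R-matrix R₀(β) equals the 4×4 matrix −[[A,0,0,D],[0,B,C,0],[0,C,B,0],[D,0,0,A]], where A = cosh(β/2r)·cosh(iπ/2r)/cosh((iπ−β)/2r), B = −sinh(β/2r)·cosh(iπ/2r)/sinh((iπ−β)/2r), C = cosh(β/2r)·sinh(iπ/2r)/sinh((iπ−β)/2r), D = −sinh(β/2r)·sinh(iπ/2r)/cosh((iπ−β)/2r), and cosh, sinh denote the complex hyperbolic functions. (This is the explicit N = 2 scaled R-matrix of the paper, stripped of its scalar normalisation −S₀(β).) -/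
open Complex Matrix
open scoped Real Kronecker

/-- The index `(a,b) ∈ (ℤ/2)²` viewed in the basis `(00,01,10,11)` of `ℂ²⊗ℂ²`. -/
def idx4 (p : ZMod 2 × ZMod 2) : Fin 4 :=
  ⟨2 * p.1.val + p.2.val, by
    have h1 := ZMod.val_lt p.1
    have h2 := ZMod.val_lt p.2
    omega⟩

private lemma csin_shift (z : ℂ) : Complex.sin (z + (π:ℂ)/2) = Complex.cos z := by
  rw [show ((π:ℂ)/2) = ((π/2 : ℝ) : ℂ) by push_cast; ring]
  simp [Complex.sin_add]

private lemma ccos_shift (z : ℂ) : Complex.cos (z + (π:ℂ)/2) = -Complex.sin z := by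
  rw [show ((π:ℂ)/2) = ((π/2 : ℝ) : ℂ) by push_cast; ring]
  simp [Complex.cos_add]

private lemma idA (u v : ℂ) (hu : Complex.sin u ≠ 0) (hv : Complex.sin v ≠ 0)
    (hS : Complex.sin (u+v) ≠ 0) (hC : Complex.cos (u+v) ≠ 0) :
    -(1/2) * (Complex.sin (2*u) * Complex.sin (2*v) / Complex.sin (2*(u+v))) *
      (Complex.cot u - Complex.cot (-v)) =
    -(Complex.cos u * Complex.cos v / Complex.cos (u+v)) := by
  rw [Complex.cot_eq_cos_div_sin, Complex.cot_eq_cos_div_sin, Complex.sin_neg, Complex.cos_neg,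
    div_neg, Complex.sin_two_mul, Complex.sin_two_mul, Complex.sin_two_mul]
  field_simp
  rw [Complex.sin_add]
  ring

private lemma idB (u v : ℂ) (hcu : Complex.cos u ≠ 0) (hv : Complex.sin v ≠ 0)
    (hS : Complex.sin (u+v) ≠ 0) (hC : Complex.cos (u+v) ≠ 0) :
    -(1/2) * (Complex.sin (2*u) * Complex.sin (2*v) / Complex.sin (2*(u+v))) *
      (Complex.cot (u + (π:ℂ)/2) - Complex.cot (-v)) =
    -(Complex.sin u * Complex.cos v / Complex.sin (u+v)) := by
  rw [Complex.cot_eq_cos_div_sin, Complex.cot_eq_cos_div_sin, csin_shift, ccos_shift,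
    Complex.sin_neg, Complex.cos_neg, div_neg, neg_div,
    Complex.sin_two_mul, Complex.sin_two_mul, Complex.sin_two_mul]
  field_simp
  rw [Complex.cos_add]
  ring

private lemma idC (u v : ℂ) (hu : Complex.sin u ≠ 0) (hcv : Complex.cos v ≠ 0)
    (hS : Complex.sin (u+v) ≠ 0) (hC : Complex.cos (u+v) ≠ 0) :
    -(1/2) * (Complex.sin (2*u) * Complex.sin (2*v) / Complex.sin (2*(u+v))) *
      (Complex.cot u - Complex.cot (-v + (π:ℂ)/2)) =
    -(Complex.cos u * Complex.sin v / Complex.sin (u+v)) := by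
  rw [Complex.cot_eq_cos_div_sin, Complex.cot_eq_cos_div_sin, csin_shift, ccos_shift,
    Complex.sin_neg, Complex.cos_neg, neg_neg,
    Complex.sin_two_mul, Complex.sin_two_mul, Complex.sin_two_mul]
  field_simp
  rw [Complex.cos_add]

private lemma idD (u v : ℂ) (hcu : Complex.cos u ≠ 0) (hcv : Complex.cos v ≠ 0)
    (hS : Complex.sin (u+v) ≠ 0) (hC : Complex.cos (u+v) ≠ 0) :
    -(1/2) * (Complex.sin (2*u) * Complex.sin (2*v) / Complex.sin (2*(u+v))) *
      (Complex.cot (u + (π:ℂ)/2) - Complex.cot (-v + (π:ℂ)/2)) =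
    Complex.sin u * Complex.sin v / Complex.cos (u+v) := by
  rw [Complex.cot_eq_cos_div_sin, Complex.cot_eq_cos_div_sin, csin_shift, csin_shift,
    ccos_shift, ccos_shift, Complex.sin_neg, Complex.cos_neg, neg_neg, neg_div,
    Complex.sin_two_mul, Complex.sin_two_mul, Complex.sin_two_mul]
  field_simp
  rw [Complex.sin_add]
  ring

set_option maxHeartbeats 2000000 in
/-- The explicit `N = 2` scaled R-matrix of the paper (stripped of its scalar
normalisation `−S₀(β)`): in the basis `(00,01,10,11)` of `ℂ²⊗ℂ²`,
`R₀(β) = −[[A,0,0,D],[0,B,C,0],[0,C,B,0],[D,0,0,A]]` with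
`A = cosh(β/2r)cosh(iπ/2r)/cosh((iπ−β)/2r)`, `B = −sinh(β/2r)cosh(iπ/2r)/sinh((iπ−β)/2r)`,
`C = cosh(β/2r)sinh(iπ/2r)/sinh((iπ−β)/2r)`, `D = −sinh(β/2r)sinh(iπ/2r)/cosh((iπ−β)/2r)`. -/
theorem R0_two_explicit (r : ℝ) (hr : 0 < r) (β : ℂ)
    (hβ : GenR 2 r β)
    (hc : Complex.cosh ((Complex.I * (π : ℂ) - β) / (2 * (r : ℂ))) ≠ 0)
    (hs : Complex.sinh ((Complex.I * (π : ℂ) - β) / (2 * (r : ℂ))) ≠ 0) :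
    R0 2 r β = Matrix.of fun p q : ZMod 2 × ZMod 2 =>
      -(!![Complex.cosh (β / (2 * (r : ℂ))) * Complex.cosh (Complex.I * (π : ℂ) / (2 * (r : ℂ))) /
             Complex.cosh ((Complex.I * (π : ℂ) - β) / (2 * (r : ℂ))), 0, 0,
           -(Complex.sinh (β / (2 * (r : ℂ))) * Complex.sinh (Complex.I * (π : ℂ) / (2 * (r : ℂ))) /
             Complex.cosh ((Complex.I * (π : ℂ) - β) / (2 * (r : ℂ))));
           0, -(Complex.sinh (β / (2 * (r : ℂ))) * Complex.cosh (Complex.I * (π : ℂ) / (2 * (r : ℂ))) /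
             Complex.sinh ((Complex.I * (π : ℂ) - β) / (2 * (r : ℂ)))),
           Complex.cosh (β / (2 * (r : ℂ))) * Complex.sinh (Complex.I * (π : ℂ) / (2 * (r : ℂ))) /
             Complex.sinh ((Complex.I * (π : ℂ) - β) / (2 * (r : ℂ))), 0;
           0, Complex.cosh (β / (2 * (r : ℂ))) * Complex.sinh (Complex.I * (π : ℂ) / (2 * (r : ℂ))) /
             Complex.sinh ((Complex.I * (π : ℂ) - β) / (2 * (r : ℂ))),
           -(Complex.sinh (β / (2 * (r : ℂ))) * Complex.cosh (Complex.I * (π : ℂ) / (2 * (r : ℂ))) /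
             Complex.sinh ((Complex.I * (π : ℂ) - β) / (2 * (r : ℂ)))), 0;
           -(Complex.sinh (β / (2 * (r : ℂ))) * Complex.sinh (Complex.I * (π : ℂ) / (2 * (r : ℂ))) /
             Complex.cosh ((Complex.I * (π : ℂ) - β) / (2 * (r : ℂ)))), 0, 0,
           Complex.cosh (β / (2 * (r : ℂ))) * Complex.cosh (Complex.I * (π : ℂ) / (2 * (r : ℂ))) /
             Complex.cosh ((Complex.I * (π : ℂ) - β) / (2 * (r : ℂ)))]
          (idx4 p) (idx4 q)) := by
  
  have hr0 : (r:ℂ) ≠ 0 := by exact_mod_cast hr.ne'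
  set u : ℂ := β/(2*(r:ℂ))*Complex.I with hud
  set v : ℂ := (π:ℂ)/(2*(r:ℂ)) with hvd
  have E1 : Complex.cosh (β/(2*(r:ℂ))) = Complex.cos u := (Complex.cos_mul_I _).symm
  have E2 : Complex.sinh (β/(2*(r:ℂ))) * Complex.I = Complex.sin u := by
    rw [hud, Complex.sin_mul_I]
  have E3 : Complex.cosh (Complex.I*(π:ℂ)/(2*(r:ℂ))) = Complex.cos v := by
    rw [show Complex.I*(π:ℂ)/(2*(r:ℂ)) = v*Complex.I by rw [hvd]; ring, Complex.cosh_mul_I]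
  have E4 : Complex.sinh (Complex.I*(π:ℂ)/(2*(r:ℂ))) = Complex.sin v * Complex.I := by
    rw [show Complex.I*(π:ℂ)/(2*(r:ℂ)) = v*Complex.I by rw [hvd]; ring, Complex.sinh_mul_I]
  have E5 : Complex.cosh ((Complex.I*(π:ℂ)-β)/(2*(r:ℂ))) = Complex.cos (u+v) := by
    rw [show (Complex.I*(π:ℂ)-β)/(2*(r:ℂ)) = (u+v)*Complex.I by
      rw [hud, hvd, add_mul, mul_assoc, Complex.I_mul_I]; ring, Complex.cosh_mul_I]
  have E6 : Complex.sinh ((Complex.I*(π:ℂ)-β)/(2*(r:ℂ))) = Complex.sin (u+v) * Complex.I := by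
    rw [show (Complex.I*(π:ℂ)-β)/(2*(r:ℂ)) = (u+v)*Complex.I by
      rw [hud, hvd, add_mul, mul_assoc, Complex.I_mul_I]; ring, Complex.sinh_mul_I]
  have hu : Complex.sin u ≠ 0 := by
    have h := (hβ.2 0).1
    rwa [show (Complex.I*β + ((0:ℤ):ℂ)*(π:ℂ)*(r:ℂ))/(((2:ℕ):ℂ)*(r:ℂ)) = u by
      push_cast; rw [hud]; ring] at h
  have hcu : Complex.cos u ≠ 0 := by
    have h := (hβ.2 1).1
    rw [show (Complex.I*β + ((1:ℤ):ℂ)*(π:ℂ)*(r:ℂ))/(((2:ℕ):ℂ)*(r:ℂ)) = u + (π:ℂ)/2 by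
      push_cast; rw [hud]; field_simp, csin_shift] at h
    exact h
  have hsv : Complex.sin v ≠ 0 := by
    have h := (hβ.2 0).2
    rw [show (-(π:ℂ) + ((0:ℤ):ℂ)*(π:ℂ)*(r:ℂ))/(((2:ℕ):ℂ)*(r:ℂ)) = -v by
      push_cast; rw [hvd]; ring, Complex.sin_neg] at h
    simpa using h
  have hcv : Complex.cos v ≠ 0 := by
    have h := (hβ.2 1).2
    rw [show (-(π:ℂ) + ((1:ℤ):ℂ)*(π:ℂ)*(r:ℂ))/(((2:ℕ):ℂ)*(r:ℂ)) = -v + (π:ℂ)/2 by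
      push_cast; rw [hvd]; field_simp, csin_shift, Complex.cos_neg] at h
    exact h
  have hS : Complex.sin (u+v) ≠ 0 := by
    rw [E6] at hs
    simpa using hs
  have hC : Complex.cos (u+v) ≠ 0 := by rwa [E5] at hc
  ext p q
  obtain ⟨a, b⟩ := p
  obtain ⟨c, d⟩ := q
  fin_cases a <;> fin_cases b <;> fin_cases c <;> fin_cases d
  · have goal : R0 2 r β (0,0) (0,0) = -(Complex.cosh (β / (2 * (r:ℂ))) * Complex.cosh (Complex.I * (π:ℂ) / (2 * (r:ℂ))) /
        Complex.cosh ((Complex.I * (π:ℂ) - β) / (2 * (r:ℂ)))) := by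
      rw [show R0 2 r β (0,0) (0,0) =
      -(1 / ((2:ℕ) : ℂ)) *
        (Complex.sin (Complex.I * β / (r : ℂ)) * Complex.sin ((π : ℂ) / (r : ℂ)) /
          Complex.sin ((Complex.I * β + (π : ℂ)) / (r : ℂ))) *
        (Complex.cot ((Complex.I * β + ((0:ℕ) : ℂ) * (π : ℂ) * (r : ℂ)) / (((2:ℕ) : ℂ) * (r : ℂ))) -
         Complex.cot ((-(π : ℂ) + ((0:ℕ) : ℂ) * (π : ℂ) * (r : ℂ)) / (((2:ℕ) : ℂ) * (r : ℂ)))) from rfl]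
      rw [E1, E3, E5,
        show (Complex.I * β + ((0:ℕ):ℂ) * (π:ℂ) * (r:ℂ)) / (((2:ℕ):ℂ) * (r:ℂ)) = u by push_cast; rw [hud]; ring,
        show (-(π:ℂ) + ((0:ℕ):ℂ) * (π:ℂ) * (r:ℂ)) / (((2:ℕ):ℂ) * (r:ℂ)) = -v by push_cast; rw [hvd]; ring,
        show Complex.I * β / (r:ℂ) = 2*u by rw [hud]; ring,
        show (π:ℂ) / (r:ℂ) = 2*v by rw [hvd]; ring,
        show (Complex.I * β + (π:ℂ)) / (r:ℂ) = 2*(u+v) by rw [hud, hvd]; field_simp,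
        show (1 : ℂ)/((2:ℕ):ℂ) = 1/2 by norm_num]
      exact idA u v hu hsv hS hC
    exact goal
  · have goal : R0 2 r β (0,0) (0,1) = -(0:ℂ) := by simp [R0]
    exact goal
  · have goal : R0 2 r β (0,0) (1,0) = -(0:ℂ) := by simp [R0]
    exact goal
  · have goal : R0 2 r β (0,0) (1,1) = -(-(Complex.sinh (β / (2 * (r:ℂ))) * Complex.sinh (Complex.I * (π:ℂ) / (2 * (r:ℂ))) /
        Complex.cosh ((Complex.I * (π:ℂ) - β) / (2 * (r:ℂ))))) := by
      rw [show R0 2 r β (0,0) (1,1) =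
      -(1 / ((2:ℕ) : ℂ)) *
        (Complex.sin (Complex.I * β / (r : ℂ)) * Complex.sin ((π : ℂ) / (r : ℂ)) /
          Complex.sin ((Complex.I * β + (π : ℂ)) / (r : ℂ))) *
        (Complex.cot ((Complex.I * β + ((1:ℕ) : ℂ) * (π : ℂ) * (r : ℂ)) / (((2:ℕ) : ℂ) * (r : ℂ))) -
         Complex.cot ((-(π : ℂ) + ((1:ℕ) : ℂ) * (π : ℂ) * (r : ℂ)) / (((2:ℕ) : ℂ) * (r : ℂ)))) from rfl]
      rw [E4, E5,
        show (Complex.I * β + ((1:ℕ):ℂ) * (π:ℂ) * (r:ℂ)) / (((2:ℕ):ℂ) * (r:ℂ)) = u + (π:ℂ)/2 by push_cast; rw [hud]; field_simp,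
        show (-(π:ℂ) + ((1:ℕ):ℂ) * (π:ℂ) * (r:ℂ)) / (((2:ℕ):ℂ) * (r:ℂ)) = -v + (π:ℂ)/2 by push_cast; rw [hvd]; field_simp,
        show Complex.I * β / (r:ℂ) = 2*u by rw [hud]; ring,
        show (π:ℂ) / (r:ℂ) = 2*v by rw [hvd]; ring,
        show (Complex.I * β + (π:ℂ)) / (r:ℂ) = 2*(u+v) by rw [hud, hvd]; field_simp,
        show (1 : ℂ)/((2:ℕ):ℂ) = 1/2 by norm_num]
      rw [idD u v hcu hcv hS hC, ← E2]
      field_simp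
    exact goal
  · have goal : R0 2 r β (0,1) (0,0) = -(0:ℂ) := by simp [R0]
    exact goal
  · have goal : R0 2 r β (0,1) (0,1) = -(-(Complex.sinh (β / (2 * (r:ℂ))) * Complex.cosh (Complex.I * (π:ℂ) / (2 * (r:ℂ))) /
        Complex.sinh ((Complex.I * (π:ℂ) - β) / (2 * (r:ℂ))))) := by
      rw [show R0 2 r β (0,1) (0,1) =
      -(1 / ((2:ℕ) : ℂ)) *
        (Complex.sin (Complex.I * β / (r : ℂ)) * Complex.sin ((π : ℂ) / (r : ℂ)) /
          Complex.sin ((Complex.I * β + (π : ℂ)) / (r : ℂ))) *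
        (Complex.cot ((Complex.I * β + ((1:ℕ) : ℂ) * (π : ℂ) * (r : ℂ)) / (((2:ℕ) : ℂ) * (r : ℂ))) -
         Complex.cot ((-(π : ℂ) + ((0:ℕ) : ℂ) * (π : ℂ) * (r : ℂ)) / (((2:ℕ) : ℂ) * (r : ℂ)))) from rfl]
      rw [E3, E6,
        show (Complex.I * β + ((1:ℕ):ℂ) * (π:ℂ) * (r:ℂ)) / (((2:ℕ):ℂ) * (r:ℂ)) = u + (π:ℂ)/2 by push_cast; rw [hud]; field_simp,
        show (-(π:ℂ) + ((0:ℕ):ℂ) * (π:ℂ) * (r:ℂ)) / (((2:ℕ):ℂ) * (r:ℂ)) = -v by push_cast; rw [hvd]; ring,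
        show Complex.I * β / (r:ℂ) = 2*u by rw [hud]; ring,
        show (π:ℂ) / (r:ℂ) = 2*v by rw [hvd]; ring,
        show (Complex.I * β + (π:ℂ)) / (r:ℂ) = 2*(u+v) by rw [hud, hvd]; field_simp,
        show (1 : ℂ)/((2:ℕ):ℂ) = 1/2 by norm_num]
      rw [idB u v hcu hsv hS hC, ← E2]
      field_simp
      ring_nf
      simp [Complex.I_sq]
    exact goal
  · have goal : R0 2 r β (0,1) (1,0) = -(Complex.cosh (β / (2 * (r:ℂ))) * Complex.sinh (Complex.I * (π:ℂ) / (2 * (r:ℂ))) /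
        Complex.sinh ((Complex.I * (π:ℂ) - β) / (2 * (r:ℂ)))) := by
      rw [show R0 2 r β (0,1) (1,0) =
      -(1 / ((2:ℕ) : ℂ)) *
        (Complex.sin (Complex.I * β / (r : ℂ)) * Complex.sin ((π : ℂ) / (r : ℂ)) /
          Complex.sin ((Complex.I * β + (π : ℂ)) / (r : ℂ))) *
        (Complex.cot ((Complex.I * β + ((0:ℕ) : ℂ) * (π : ℂ) * (r : ℂ)) / (((2:ℕ) : ℂ) * (r : ℂ))) -
         Complex.cot ((-(π : ℂ) + ((1:ℕ) : ℂ) * (π : ℂ) * (r : ℂ)) / (((2:ℕ) : ℂ) * (r : ℂ)))) from rfl]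
      rw [E1, E4, E6,
        show (Complex.I * β + ((0:ℕ):ℂ) * (π:ℂ) * (r:ℂ)) / (((2:ℕ):ℂ) * (r:ℂ)) = u by push_cast; rw [hud]; ring,
        show (-(π:ℂ) + ((1:ℕ):ℂ) * (π:ℂ) * (r:ℂ)) / (((2:ℕ):ℂ) * (r:ℂ)) = -v + (π:ℂ)/2 by push_cast; rw [hvd]; field_simp,
        show Complex.I * β / (r:ℂ) = 2*u by rw [hud]; ring,
        show (π:ℂ) / (r:ℂ) = 2*v by rw [hvd]; ring,
        show (Complex.I * β + (π:ℂ)) / (r:ℂ) = 2*(u+v) by rw [hud, hvd]; field_simp,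
        show (1 : ℂ)/((2:ℕ):ℂ) = 1/2 by norm_num]
      rw [idC u v hu hcv hS hC]
      field_simp
    exact goal
  · have goal : R0 2 r β (0,1) (1,1) = -(0:ℂ) := by simp [R0]
    exact goal
  · have goal : R0 2 r β (1,0) (0,0) = -(0:ℂ) := by simp [R0]
    exact goal
  · have goal : R0 2 r β (1,0) (0,1) = -(Complex.cosh (β / (2 * (r:ℂ))) * Complex.sinh (Complex.I * (π:ℂ) / (2 * (r:ℂ))) /
        Complex.sinh ((Complex.I * (π:ℂ) - β) / (2 * (r:ℂ)))) := by
      rw [show R0 2 r β (1,0) (0,1) =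
      -(1 / ((2:ℕ) : ℂ)) *
        (Complex.sin (Complex.I * β / (r : ℂ)) * Complex.sin ((π : ℂ) / (r : ℂ)) /
          Complex.sin ((Complex.I * β + (π : ℂ)) / (r : ℂ))) *
        (Complex.cot ((Complex.I * β + ((0:ℕ) : ℂ) * (π : ℂ) * (r : ℂ)) / (((2:ℕ) : ℂ) * (r : ℂ))) -
         Complex.cot ((-(π : ℂ) + ((1:ℕ) : ℂ) * (π : ℂ) * (r : ℂ)) / (((2:ℕ) : ℂ) * (r : ℂ)))) from rfl]
      rw [E1, E4, E6,
        show (Complex.I * β + ((0:ℕ):ℂ) * (π:ℂ) * (r:ℂ)) / (((2:ℕ):ℂ) * (r:ℂ)) = u by push_cast; rw [hud]; ring,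
        show (-(π:ℂ) + ((1:ℕ):ℂ) * (π:ℂ) * (r:ℂ)) / (((2:ℕ):ℂ) * (r:ℂ)) = -v + (π:ℂ)/2 by push_cast; rw [hvd]; field_simp,
        show Complex.I * β / (r:ℂ) = 2*u by rw [hud]; ring,
        show (π:ℂ) / (r:ℂ) = 2*v by rw [hvd]; ring,
        show (Complex.I * β + (π:ℂ)) / (r:ℂ) = 2*(u+v) by rw [hud, hvd]; field_simp,
        show (1 : ℂ)/((2:ℕ):ℂ) = 1/2 by norm_num]
      rw [idC u v hu hcv hS hC]
      field_simp
    exact goal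
  · have goal : R0 2 r β (1,0) (1,0) = -(-(Complex.sinh (β / (2 * (r:ℂ))) * Complex.cosh (Complex.I * (π:ℂ) / (2 * (r:ℂ))) /
        Complex.sinh ((Complex.I * (π:ℂ) - β) / (2 * (r:ℂ))))) := by
      rw [show R0 2 r β (1,0) (1,0) =
      -(1 / ((2:ℕ) : ℂ)) *
        (Complex.sin (Complex.I * β / (r : ℂ)) * Complex.sin ((π : ℂ) / (r : ℂ)) /
          Complex.sin ((Complex.I * β + (π : ℂ)) / (r : ℂ))) *
        (Complex.cot ((Complex.I * β + ((1:ℕ) : ℂ) * (π : ℂ) * (r : ℂ)) / (((2:ℕ) : ℂ) * (r : ℂ))) -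
         Complex.cot ((-(π : ℂ) + ((0:ℕ) : ℂ) * (π : ℂ) * (r : ℂ)) / (((2:ℕ) : ℂ) * (r : ℂ)))) from rfl]
      rw [E3, E6,
        show (Complex.I * β + ((1:ℕ):ℂ) * (π:ℂ) * (r:ℂ)) / (((2:ℕ):ℂ) * (r:ℂ)) = u + (π:ℂ)/2 by push_cast; rw [hud]; field_simp,
        show (-(π:ℂ) + ((0:ℕ):ℂ) * (π:ℂ) * (r:ℂ)) / (((2:ℕ):ℂ) * (r:ℂ)) = -v by push_cast; rw [hvd]; ring,
        show Complex.I * β / (r:ℂ) = 2*u by rw [hud]; ring,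
        show (π:ℂ) / (r:ℂ) = 2*v by rw [hvd]; ring,
        show (Complex.I * β + (π:ℂ)) / (r:ℂ) = 2*(u+v) by rw [hud, hvd]; field_simp,
        show (1 : ℂ)/((2:ℕ):ℂ) = 1/2 by norm_num]
      rw [idB u v hcu hsv hS hC, ← E2]
      field_simp
      ring_nf
      simp [Complex.I_sq]
    exact goal
  · have goal : R0 2 r β (1,0) (1,1) = -(0:ℂ) := by simp [R0]
    exact goal
  · have goal : R0 2 r β (1,1) (0,0) = -(-(Complex.sinh (β / (2 * (r:ℂ))) * Complex.sinh (Complex.I * (π:ℂ) / (2 * (r:ℂ))) /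
        Complex.cosh ((Complex.I * (π:ℂ) - β) / (2 * (r:ℂ))))) := by
      rw [show R0 2 r β (1,1) (0,0) =
      -(1 / ((2:ℕ) : ℂ)) *
        (Complex.sin (Complex.I * β / (r : ℂ)) * Complex.sin ((π : ℂ) / (r : ℂ)) /
          Complex.sin ((Complex.I * β + (π : ℂ)) / (r : ℂ))) *
        (Complex.cot ((Complex.I * β + ((1:ℕ) : ℂ) * (π : ℂ) * (r : ℂ)) / (((2:ℕ) : ℂ) * (r : ℂ))) -
         Complex.cot ((-(π : ℂ) + ((1:ℕ) : ℂ) * (π : ℂ) * (r : ℂ)) / (((2:ℕ) : ℂ) * (r : ℂ)))) from rfl]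
      rw [E4, E5,
        show (Complex.I * β + ((1:ℕ):ℂ) * (π:ℂ) * (r:ℂ)) / (((2:ℕ):ℂ) * (r:ℂ)) = u + (π:ℂ)/2 by push_cast; rw [hud]; field_simp,
        show (-(π:ℂ) + ((1:ℕ):ℂ) * (π:ℂ) * (r:ℂ)) / (((2:ℕ):ℂ) * (r:ℂ)) = -v + (π:ℂ)/2 by push_cast; rw [hvd]; field_simp,
        show Complex.I * β / (r:ℂ) = 2*u by rw [hud]; ring,
        show (π:ℂ) / (r:ℂ) = 2*v by rw [hvd]; ring,
        show (Complex.I * β + (π:ℂ)) / (r:ℂ) = 2*(u+v) by rw [hud, hvd]; field_simp,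
        show (1 : ℂ)/((2:ℕ):ℂ) = 1/2 by norm_num]
      rw [idD u v hcu hcv hS hC, ← E2]
      field_simp
    exact goal
  · have goal : R0 2 r β (1,1) (0,1) = -(0:ℂ) := by simp [R0]
    exact goal
  · have goal : R0 2 r β (1,1) (1,0) = -(0:ℂ) := by simp [R0]
    exact goal
  · have goal : R0 2 r β (1,1) (1,1) = -(Complex.cosh (β / (2 * (r:ℂ))) * Complex.cosh (Complex.I * (π:ℂ) / (2 * (r:ℂ))) /
        Complex.cosh ((Complex.I * (π:ℂ) - β) / (2 * (r:ℂ)))) := by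
      rw [show R0 2 r β (1,1) (1,1) =
      -(1 / ((2:ℕ) : ℂ)) *
        (Complex.sin (Complex.I * β / (r : ℂ)) * Complex.sin ((π : ℂ) / (r : ℂ)) /
          Complex.sin ((Complex.I * β + (π : ℂ)) / (r : ℂ))) *
        (Complex.cot ((Complex.I * β + ((0:ℕ) : ℂ) * (π : ℂ) * (r : ℂ)) / (((2:ℕ) : ℂ) * (r : ℂ))) -
         Complex.cot ((-(π : ℂ) + ((0:ℕ) : ℂ) * (π : ℂ) * (r : ℂ)) / (((2:ℕ) : ℂ) * (r : ℂ)))) from rfl]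
      rw [E1, E3, E5,
        show (Complex.I * β + ((0:ℕ):ℂ) * (π:ℂ) * (r:ℂ)) / (((2:ℕ):ℂ) * (r:ℂ)) = u by push_cast; rw [hud]; ring,
        show (-(π:ℂ) + ((0:ℕ):ℂ) * (π:ℂ) * (r:ℂ)) / (((2:ℕ):ℂ) * (r:ℂ)) = -v by push_cast; rw [hvd]; ring,
        show Complex.I * β / (r:ℂ) = 2*u by rw [hud]; ring,
        show (π:ℂ) / (r:ℂ) = 2*v by rw [hvd]; ring,
        show (Complex.I * β + (π:ℂ)) / (r:ℂ) = 2*(u+v) by rw [hud, hvd]; field_simp,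
        show (1 : ℂ)/((2:ℕ):ℂ) = 1/2 by norm_num]
      exact idA u v hu hsv hS hC
    exact goal
end

section
/- Let A be a unital associative ℂ-algebra, N ≥ 1 an integer, F ∈ ℂ, X, Y ∈ M_N(A), and S an invertible N²×N² complex matrix with rows and columns indexed by pairs in {1,…,N}². In M_{N²}(A) set X₁ = X⊗I_N and Y₂ = I_N⊗Y, and for an N²×N² matrix M let M^{t₁} denote partial transposition in the first factor, (M^{t₁})_{(a,b),(c,d)} = M_{(c,b),(a,d)}. If X₁·Y₂ = F · Y₂ · (S⁻¹)^{t₁} · X₁ · S^{t₁} (complex matrices acting on M_{N²}(A) via the unit of A), then the trace t = Tr(X) ∈ A satisfies t·Y_{ij} = F·Y_{ij}·t for all indices i, j. In particular, if F = 1 then Tr(X) commutes with every entry of Y. -/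
open Matrix
open scoped Kronecker

/-- Partial transposition in the first tensor factor:
`(M^{t₁})_{(a,b),(c,d)} = M_{(c,b),(a,d)}`. -/
def pt1 {ι α : Type*} (M : Matrix (ι × ι) (ι × ι) α) : Matrix (ι × ι) (ι × ι) α :=
  Matrix.of fun p q => M (q.1, p.2) (p.1, q.2)

/-!
Take the partial trace `Tr₁` over the first tensor factor of both sides. On the left,
`Tr₁ (X₁ Y₂) = Tr(X) • Y`. On the right, `Y₂` factors out as `Y`, and
`Tr₁ ((S⁻¹)^{t₁} X₁ S^{t₁}) = Tr(X) • I`: after the partial transpositions, the first-factor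
contraction of the trace pairs `S⁻¹` with `S` directly, so only `(S⁻¹ S)_{(c,i),(e,j)} = δ_{ce} δ_{ij}`
survives, and it contracts `X` to its trace. This uses that the complex scalars are central in `A`.
-/

namespace Matrix

variable {ι κ α : Type*} [Fintype ι]

def ptrace1 [AddCommMonoid α] (M : Matrix (ι × κ) (ι × κ) α) : Matrix κ κ α :=
  of fun i j => ∑ a, M (a, i) (a, j)

@[simp]
theorem ptrace1_apply [AddCommMonoid α] (M : Matrix (ι × κ) (ι × κ) α) (i j : κ) :
    ptrace1 M i j = ∑ a, M (a, i) (a, j) :=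
  rfl

theorem ptrace1_smul {R : Type*} [AddCommMonoid α] [DistribSMul R α] (r : R)
    (M : Matrix (ι × κ) (ι × κ) α) : ptrace1 (r • M) = r • ptrace1 M := by
  ext i j
  simp [Finset.smul_sum]

theorem ptrace1_kronecker [Semiring α] (X : Matrix ι ι α) (Y : Matrix κ κ α) :
    ptrace1 (X ⊗ₖ Y) = X.trace • Y := by
  ext i j
  simp [trace, Finset.sum_mul]

variable [Fintype κ] [Semiring α] [DecidableEq ι]

theorem kronecker_one_mul_one_kronecker [DecidableEq κ] (X : Matrix ι ι α) (Y : Matrix κ κ α) :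
    (X ⊗ₖ (1 : Matrix κ κ α)) * ((1 : Matrix ι ι α) ⊗ₖ Y) = X ⊗ₖ Y := by
  ext ⟨a, i⟩ ⟨b, j⟩
  simp [mul_apply, one_apply, Fintype.sum_prod_type, ite_mul, mul_ite]

theorem ptrace1_one_kronecker_mul (Y : Matrix κ κ α) (M : Matrix (ι × κ) (ι × κ) α) :
    ptrace1 (((1 : Matrix ι ι α) ⊗ₖ Y) * M) = Y * ptrace1 M := by
  ext i j
  simp [mul_apply, one_apply, Fintype.sum_prod_type, ite_mul, Finset.mul_sum]
  exact Finset.sum_comm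

theorem ptrace1_pt1_mul_kronecker_one_mul_pt1 {R : Type*} [CommSemiring R] [Algebra R α]
    (U V : Matrix (ι × ι) (ι × ι) R) (hUV : U * V = 1) (X : Matrix ι ι α) :
    ptrace1 ((pt1 U).map (algebraMap R α) * (X ⊗ₖ (1 : Matrix ι ι α)) *
      (pt1 V).map (algebraMap R α)) = diagonal fun _ => X.trace := by
  ext i j
  have hcoeff (c e : ι) :
      ∑ a, ∑ d, U (c, i) (a, d) * V (a, d) (e, j) = if c = e ∧ i = j then 1 else 0 := by
    simpa [mul_apply, Fintype.sum_prod_type, one_apply] using congrFun (congrFun hUV (c, i)) (e, j)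
  calc ptrace1 ((pt1 U).map (algebraMap R α) * (X ⊗ₖ (1 : Matrix ι ι α)) *
          (pt1 V).map (algebraMap R α)) i j
      = ∑ a, ∑ e, ∑ d, ∑ c, (U (c, i) (a, d) * V (a, d) (e, j)) • X c e := by
        simp [mul_apply, one_apply, Fintype.sum_prod_type, pt1, ← Algebra.smul_def,
          ← Algebra.commutes, Finset.smul_sum, smul_smul, mul_comm (V _ _)]
    _ = ∑ c, ∑ e, (∑ a, ∑ d, U (c, i) (a, d) * V (a, d) (e, j)) • X c e := by
        simp only [Finset.sum_smul]
        exact Finset.sum_comm.trans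
          ((Finset.sum_congr rfl fun _ _ => Finset.sum_comm_cycle).trans Finset.sum_comm)
    _ = (diagonal fun _ => X.trace) i j := by
        simp [hcoeff, diagonal_apply, trace, ite_and]

end Matrix

theorem trace_exchange_general {A : Type*} [Ring A] [Algebra ℂ A] (N : ℕ) (F : ℂ)
    (X Y : Matrix (Fin N) (Fin N) A)
    (S : Matrix (Fin N × Fin N) (Fin N × Fin N) ℂ) (hS : IsUnit S)
    (h : (X ⊗ₖ (1 : Matrix (Fin N) (Fin N) A)) * ((1 : Matrix (Fin N) (Fin N) A) ⊗ₖ Y) =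
      F • (((1 : Matrix (Fin N) (Fin N) A) ⊗ₖ Y) *
        (pt1 S⁻¹).map (algebraMap ℂ A) *
        (X ⊗ₖ (1 : Matrix (Fin N) (Fin N) A)) *
        (pt1 S).map (algebraMap ℂ A))) :
    ∀ i j, X.trace * Y i j = F • (Y i j * X.trace) := by
  intro i j
  have hinv : S⁻¹ * S = 1 := nonsing_inv_mul S ((isUnit_iff_isUnit_det S).mp hS)
  have htrace := congrArg (fun M => ptrace1 M i j) h
  simp only [kronecker_one_mul_one_kronecker, ptrace1_kronecker, ptrace1_smul, Matrix.mul_assoc,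
    ptrace1_one_kronecker_mul] at htrace
  rw [← Matrix.mul_assoc, ptrace1_pt1_mul_kronecker_one_mul_pt1 _ _ hinv] at htrace
  simpa using htrace

/-- The trace mechanism underlying Theorem 3.2 and Lemma 3.3 of the paper: if
`X₁ · Y₂ = F · Y₂ · (S⁻¹)^{t₁} · X₁ · S^{t₁}` in `M_{N²}(A)` (with `X₁ = X ⊗ I`,
`Y₂ = I ⊗ Y`, `S` an invertible complex `N²×N²` matrix acting via the unit of `A`),
then `t = Tr(X)` satisfies `t · Y_{ij} = F · Y_{ij} · t` for all `i, j`. -/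
theorem trace_exchange {A : Type*} [Ring A] [Algebra ℂ A] (N : ℕ) (hN : 1 ≤ N) (F : ℂ)
    (X Y : Matrix (Fin N) (Fin N) A)
    (S : Matrix (Fin N × Fin N) (Fin N × Fin N) ℂ) (hS : IsUnit S)
    (h : (X ⊗ₖ (1 : Matrix (Fin N) (Fin N) A)) * ((1 : Matrix (Fin N) (Fin N) A) ⊗ₖ Y) =
      F • (((1 : Matrix (Fin N) (Fin N) A) ⊗ₖ Y) *
        (pt1 S⁻¹).map (algebraMap ℂ A) *
        (X ⊗ₖ (1 : Matrix (Fin N) (Fin N) A)) *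
        (pt1 S).map (algebraMap ℂ A))) :
    ∀ i j, X.trace * Y i j = F • (Y i j * X.trace) :=
  trace_exchange_general N F X Y S hS h
end

section
/- Let N ≥ 1 and M be integers, r a real number, and c = −N − Mr. Then for all generic β ∈ ℂ (all sines occurring in denominators nonzero and all F-values nonzero): F(M, β − iπc) / F(M, β − iπr) = 𝒴_{N,r,M}(β). -/
open Complex
open scoped Real

/-- The exchange function `F(M,β)` of Lemma 3.1 of the paper:
`F(M,β) = ∏_{k=0}^{M−1} sin²((iβ+kπr)/N) / (sin((iβ+kπr+π)/N)·sin((iβ+kπr−π)/N))` for `M > 0`,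
`F(M,β) = ∏_{k=1}^{|M|} sin((−iβ+kπr+π)/N)·sin((−iβ+kπr−π)/N) / sin²((−iβ+kπr)/N)` for `M < 0`,
and `F(0,β) = 1`. -/
noncomputable def Ffun (N : ℕ) (r : ℂ) (M : ℤ) (β : ℂ) : ℂ :=
  if 0 < M then
    ∏ k ∈ Finset.range M.toNat,
      (Complex.sin ((Complex.I * β + (k : ℂ) * (π : ℂ) * r) / (N : ℂ))) ^ 2 /
        (Complex.sin ((Complex.I * β + (k : ℂ) * (π : ℂ) * r + (π : ℂ)) / (N : ℂ)) *
         Complex.sin ((Complex.I * β + (k : ℂ) * (π : ℂ) * r - (π : ℂ)) / (N : ℂ)))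
  else if M < 0 then
    ∏ k ∈ Finset.range M.natAbs,
      Complex.sin ((-(Complex.I * β) + ((k : ℂ) + 1) * (π : ℂ) * r + (π : ℂ)) / (N : ℂ)) *
        Complex.sin ((-(Complex.I * β) + ((k : ℂ) + 1) * (π : ℂ) * r - (π : ℂ)) / (N : ℂ)) /
        (Complex.sin ((-(Complex.I * β) + ((k : ℂ) + 1) * (π : ℂ) * r) / (N : ℂ))) ^ 2
  else 1

/-- The structure function `𝒴_{N,r,M}(β)` of Theorem 3.4 of the paper:
`𝒴_{N,r,M}(β) = ∏_{k=1}^{m} sin²((iβ−kπr)/N)/sin²((iβ+kπr)/N) ·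
sin((iβ+kπr+π)/N)/sin((iβ−kπr+π)/N) · sin((iβ+kπr−π)/N)/sin((iβ−kπr−π)/N)`,
with `m = M` for `M > 0` and `m = |M| − 1` for `M < 0`. -/
noncomputable def Yfun (N : ℕ) (r : ℂ) (M : ℤ) (β : ℂ) : ℂ :=
  ∏ k ∈ Finset.range (if 0 < M then M.toNat else M.natAbs - 1),
    ((Complex.sin ((Complex.I * β - ((k : ℂ) + 1) * (π : ℂ) * r) / (N : ℂ))) ^ 2 /
      (Complex.sin ((Complex.I * β + ((k : ℂ) + 1) * (π : ℂ) * r) / (N : ℂ))) ^ 2) *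
    (Complex.sin ((Complex.I * β + ((k : ℂ) + 1) * (π : ℂ) * r + (π : ℂ)) / (N : ℂ)) /
      Complex.sin ((Complex.I * β - ((k : ℂ) + 1) * (π : ℂ) * r + (π : ℂ)) / (N : ℂ))) *
    (Complex.sin ((Complex.I * β + ((k : ℂ) + 1) * (π : ℂ) * r - (π : ℂ)) / (N : ℂ)) /
      Complex.sin ((Complex.I * β - ((k : ℂ) + 1) * (π : ℂ) * r - (π : ℂ)) / (N : ℂ)))

/-- Genericity of `β`: all sines of the form `sin((±iβ + aπr + bπ)/N)`, `a, b ∈ ℤ`,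
occurring in the denominators of the functions `F` and `𝒴`, are nonzero. -/
def Gen (N : ℕ) (r : ℝ) (β : ℂ) : Prop :=
  ∀ a b : ℤ,
    Complex.sin ((Complex.I * β + (a : ℂ) * (π : ℂ) * (r : ℂ) + (b : ℂ) * (π : ℂ)) / (N : ℂ)) ≠ 0

private lemma sinC_pi : Complex.sin (π : ℂ) = 0 := by
  rw [← Complex.ofReal_sin, Real.sin_pi, Complex.ofReal_zero]

private lemma cosC_pi : Complex.cos (π : ℂ) = -1 := by
  rw [← Complex.ofReal_cos, Real.cos_pi]; norm_num

private lemma keylemS {N : ℕ} (hN : (N:ℂ) ≠ 0) {X Y : ℂ} (h : X = Y - (N:ℂ)*(π:ℂ)) :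
    Complex.sin (X/(N:ℂ)) = - Complex.sin (Y/(N:ℂ)) := by
  rw [h, show (Y - (N:ℂ)*(π:ℂ))/(N:ℂ) = Y/(N:ℂ) - (π:ℂ) from by field_simp; try ring,
    Complex.sin_sub, sinC_pi, cosC_pi]; try ring

private lemma keylemA {N : ℕ} (hN : (N:ℂ) ≠ 0) {X Y : ℂ} (h : X = Y + (N:ℂ)*(π:ℂ)) :
    Complex.sin (X/(N:ℂ)) = - Complex.sin (Y/(N:ℂ)) := by
  rw [h, show (Y + (N:ℂ)*(π:ℂ))/(N:ℂ) = Y/(N:ℂ) + (π:ℂ) from by field_simp; try ring,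
    Complex.sin_add, sinC_pi, cosC_pi]; try ring

private lemma sin_flip {N : ℕ} {X Y : ℂ} (h : X = -Y) :
    Complex.sin (X/(N:ℂ)) = - Complex.sin (Y/(N:ℂ)) := by
  rw [h, neg_div, Complex.sin_neg]

/-- The identity `F(M, β − iπc) / F(M, β − iπr) = 𝒴_{N,r,M}(β)` on the line `c = −N − Mr`
(the computation establishing the structure function of Theorem 3.4 of the paper). -/
theorem Ffun_ratio_eq_Yfun (N : ℕ) (hN : 1 ≤ N) (M : ℤ) (r : ℝ) (c : ℝ)
    (hc : c = -(N : ℝ) - M * r) (β : ℂ) (hβ : Gen N r β) :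
    Ffun N (r : ℂ) M (β - Complex.I * (π : ℂ) * (c : ℂ)) /
      Ffun N (r : ℂ) M (β - Complex.I * (π : ℂ) * (r : ℂ)) = Yfun N (r : ℂ) M β := by
  have hNC : (N:ℂ) ≠ 0 := Nat.cast_ne_zero.mpr (by omega)
  have hc' : (c:ℂ) = -(N:ℂ) - (M:ℂ)*(r:ℂ) := by rw [hc]; push_cast; ring
  have gen' : ∀ (a b : ℤ) (X : ℂ),
      X = (Complex.I*β + (a:ℂ)*(π:ℂ)*(r:ℂ) + (b:ℂ)*(π:ℂ))/(N:ℂ) → Complex.sin X ≠ 0 := by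
    intro a b X h; rw [h]; exact hβ a b
  have genN : ∀ (a b : ℤ) (X : ℂ),
      X = -((Complex.I*β + (a:ℂ)*(π:ℂ)*(r:ℂ) + (b:ℂ)*(π:ℂ))/(N:ℂ)) → Complex.sin X ≠ 0 := by
    intro a b X h; rw [h, Complex.sin_neg, neg_ne_zero]; exact hβ a b
  rcases lt_trichotomy 0 M with hM | hM | hM
  · -- M > 0
    have hMn : (M:ℂ) = ((M.toNat : ℕ) : ℂ) := by
      have h := Int.toNat_of_nonneg hM.le
      exact_mod_cast h.symm
    have h1 : Ffun N (r:ℂ) M (β - Complex.I * (π:ℂ) * (c:ℂ)) =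
        ∏ k ∈ Finset.range M.toNat,
          (Complex.sin ((Complex.I * β - ((k : ℂ) + 1) * (π : ℂ) * (r:ℂ)) / (N : ℂ))) ^ 2 /
            (Complex.sin ((Complex.I * β - ((k : ℂ) + 1) * (π : ℂ) * (r:ℂ) + (π : ℂ)) / (N : ℂ)) *
             Complex.sin ((Complex.I * β - ((k : ℂ) + 1) * (π : ℂ) * (r:ℂ) - (π : ℂ)) / (N : ℂ))) := by
      simp only [Ffun, if_pos hM]
      conv_rhs => rw [← Finset.prod_range_reflect]
      refine Finset.prod_congr rfl fun k hk => ?_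
      have hk' := Finset.mem_range.mp hk
      have hcast : ((M.toNat - 1 - k : ℕ) : ℂ) = ((M.toNat:ℕ):ℂ) - (k:ℂ) - 1 := by
        rw [Nat.sub_sub, Nat.cast_sub (by omega)]; push_cast; ring
      rw [show Complex.I * (β - Complex.I*(π:ℂ)*(c:ℂ)) =
            Complex.I*β - (N:ℂ)*(π:ℂ) - ((M.toNat:ℕ):ℂ)*(π:ℂ)*(r:ℂ) from by
          rw [hc', hMn]; linear_combination ((π:ℂ)*(N:ℂ) + (π:ℂ)*((M.toNat:ℕ):ℂ)*(r:ℂ)) * Complex.I_sq]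
      rw [keylemS hNC (show Complex.I*β - (N:ℂ)*(π:ℂ) - ((M.toNat:ℕ):ℂ)*(π:ℂ)*(r:ℂ) + (k:ℂ)*(π:ℂ)*(r:ℂ)
            = (Complex.I * β - (((M.toNat - 1 - k : ℕ):ℂ) + 1) * (π : ℂ) * (r:ℂ)) - (N:ℂ)*(π:ℂ) from by
          rw [hcast]; ring),
        keylemS hNC (show Complex.I*β - (N:ℂ)*(π:ℂ) - ((M.toNat:ℕ):ℂ)*(π:ℂ)*(r:ℂ) + (k:ℂ)*(π:ℂ)*(r:ℂ) + (π:ℂ)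
            = (Complex.I * β - (((M.toNat - 1 - k : ℕ):ℂ) + 1) * (π : ℂ) * (r:ℂ) + (π:ℂ)) - (N:ℂ)*(π:ℂ) from by
          rw [hcast]; ring),
        keylemS hNC (show Complex.I*β - (N:ℂ)*(π:ℂ) - ((M.toNat:ℕ):ℂ)*(π:ℂ)*(r:ℂ) + (k:ℂ)*(π:ℂ)*(r:ℂ) - (π:ℂ)
            = (Complex.I * β - (((M.toNat - 1 - k : ℕ):ℂ) + 1) * (π : ℂ) * (r:ℂ) - (π:ℂ)) - (N:ℂ)*(π:ℂ) from by
          rw [hcast]; ring)]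
      ring
    have h2 : Ffun N (r:ℂ) M (β - Complex.I * (π:ℂ) * (r:ℂ)) =
        ∏ k ∈ Finset.range M.toNat,
          (Complex.sin ((Complex.I * β + ((k : ℂ) + 1) * (π : ℂ) * (r:ℂ)) / (N : ℂ))) ^ 2 /
            (Complex.sin ((Complex.I * β + ((k : ℂ) + 1) * (π : ℂ) * (r:ℂ) + (π : ℂ)) / (N : ℂ)) *
             Complex.sin ((Complex.I * β + ((k : ℂ) + 1) * (π : ℂ) * (r:ℂ) - (π : ℂ)) / (N : ℂ))) := by
      simp only [Ffun, if_pos hM]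
      refine Finset.prod_congr rfl fun k hk => ?_
      rw [show Complex.I * (β - Complex.I*(π:ℂ)*(r:ℂ)) = Complex.I*β + (π:ℂ)*(r:ℂ) from by
          linear_combination (-(π:ℂ)*(r:ℂ)) * Complex.I_sq]
      rw [show Complex.I*β + (π:ℂ)*(r:ℂ) + (k:ℂ)*(π:ℂ)*(r:ℂ)
            = Complex.I * β + ((k:ℂ) + 1) * (π : ℂ) * (r:ℂ) from by ring]
    rw [h1, h2, ← Finset.prod_div_distrib]
    simp only [Yfun, if_pos hM]
    refine Finset.prod_congr rfl fun k hk => ?_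
    have n1 := gen' (k+1) 0 _ (show (Complex.I * β + ((k : ℂ) + 1) * (π : ℂ) * (r:ℂ)) / (N : ℂ)
        = _ from by push_cast; ring)
    have n2 := gen' (k+1) 1 _ (show (Complex.I * β + ((k : ℂ) + 1) * (π : ℂ) * (r:ℂ) + (π:ℂ)) / (N : ℂ)
        = _ from by push_cast; ring)
    have n3 := gen' (k+1) (-1) _ (show (Complex.I * β + ((k : ℂ) + 1) * (π : ℂ) * (r:ℂ) - (π:ℂ)) / (N : ℂ)
        = _ from by push_cast; ring)
    have n4 := gen' (-(k+1)) 1 _ (show (Complex.I * β - ((k : ℂ) + 1) * (π : ℂ) * (r:ℂ) + (π:ℂ)) / (N : ℂ)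
        = _ from by push_cast; ring)
    have n5 := gen' (-(k+1)) (-1) _ (show (Complex.I * β - ((k : ℂ) + 1) * (π : ℂ) * (r:ℂ) - (π:ℂ)) / (N : ℂ)
        = _ from by push_cast; ring)
    field_simp
  · -- M = 0
    subst hM
    simp [Ffun, Yfun]
  · -- M < 0
    have hM'' : ¬ 0 < M := by omega
    have hMlt : M < 0 := hM
    have hMn : (M:ℂ) = -((M.natAbs : ℕ) : ℂ) := by
      have h : ((M.natAbs : ℕ) : ℤ) = -M := by omega
      have : (M:ℤ) = -((M.natAbs:ℕ):ℤ) := by omega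
      exact_mod_cast this
    have h1 : Ffun N (r:ℂ) M (β - Complex.I * (π:ℂ) * (c:ℂ)) =
        ∏ k ∈ Finset.range M.natAbs,
          Complex.sin ((-(Complex.I * β) - (k : ℂ) * (π : ℂ) * (r:ℂ) + (π : ℂ)) / (N : ℂ)) *
            Complex.sin ((-(Complex.I * β) - (k : ℂ) * (π : ℂ) * (r:ℂ) - (π : ℂ)) / (N : ℂ)) /
            (Complex.sin ((-(Complex.I * β) - (k : ℂ) * (π : ℂ) * (r:ℂ)) / (N : ℂ))) ^ 2 := by
      simp only [Ffun, if_neg hM'', if_pos hMlt]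
      conv_rhs => rw [← Finset.prod_range_reflect]
      refine Finset.prod_congr rfl fun k hk => ?_
      have hk' := Finset.mem_range.mp hk
      have hcast : ((M.natAbs - 1 - k : ℕ) : ℂ) = ((M.natAbs:ℕ):ℂ) - (k:ℂ) - 1 := by
        rw [Nat.sub_sub, Nat.cast_sub (by omega)]; push_cast; ring
      rw [show -(Complex.I * (β - Complex.I*(π:ℂ)*(c:ℂ))) =
            -(Complex.I*β) + (N:ℂ)*(π:ℂ) - ((M.natAbs:ℕ):ℂ)*(π:ℂ)*(r:ℂ) from by
          rw [hc', hMn]; linear_combination (((M.natAbs:ℕ):ℂ)*(π:ℂ)*(r:ℂ) - (N:ℂ)*(π:ℂ)) * Complex.I_sq]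
      rw [keylemA hNC (show -(Complex.I*β) + (N:ℂ)*(π:ℂ) - ((M.natAbs:ℕ):ℂ)*(π:ℂ)*(r:ℂ) + ((k:ℂ)+1)*(π:ℂ)*(r:ℂ) + (π:ℂ)
            = (-(Complex.I * β) - ((M.natAbs - 1 - k : ℕ):ℂ) * (π : ℂ) * (r:ℂ) + (π:ℂ)) + (N:ℂ)*(π:ℂ) from by
          rw [hcast]; ring),
        keylemA hNC (show -(Complex.I*β) + (N:ℂ)*(π:ℂ) - ((M.natAbs:ℕ):ℂ)*(π:ℂ)*(r:ℂ) + ((k:ℂ)+1)*(π:ℂ)*(r:ℂ) - (π:ℂ)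
            = (-(Complex.I * β) - ((M.natAbs - 1 - k : ℕ):ℂ) * (π : ℂ) * (r:ℂ) - (π:ℂ)) + (N:ℂ)*(π:ℂ) from by
          rw [hcast]; ring),
        keylemA hNC (show -(Complex.I*β) + (N:ℂ)*(π:ℂ) - ((M.natAbs:ℕ):ℂ)*(π:ℂ)*(r:ℂ) + ((k:ℂ)+1)*(π:ℂ)*(r:ℂ)
            = (-(Complex.I * β) - ((M.natAbs - 1 - k : ℕ):ℂ) * (π : ℂ) * (r:ℂ)) + (N:ℂ)*(π:ℂ) from by
          rw [hcast]; ring)]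
      ring
    have h2 : Ffun N (r:ℂ) M (β - Complex.I * (π:ℂ) * (r:ℂ)) =
        ∏ k ∈ Finset.range M.natAbs,
          Complex.sin ((-(Complex.I * β) + (k : ℂ) * (π : ℂ) * (r:ℂ) + (π : ℂ)) / (N : ℂ)) *
            Complex.sin ((-(Complex.I * β) + (k : ℂ) * (π : ℂ) * (r:ℂ) - (π : ℂ)) / (N : ℂ)) /
            (Complex.sin ((-(Complex.I * β) + (k : ℂ) * (π : ℂ) * (r:ℂ)) / (N : ℂ))) ^ 2 := by
      simp only [Ffun, if_neg hM'', if_pos hMlt]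
      refine Finset.prod_congr rfl fun k hk => ?_
      rw [show -(Complex.I * (β - Complex.I*(π:ℂ)*(r:ℂ))) = -(Complex.I*β) - (π:ℂ)*(r:ℂ) from by
          linear_combination ((π:ℂ)*(r:ℂ)) * Complex.I_sq]
      rw [show -(Complex.I*β) - (π:ℂ)*(r:ℂ) + ((k:ℂ)+1)*(π:ℂ)*(r:ℂ)
            = -(Complex.I * β) + (k:ℂ) * (π : ℂ) * (r:ℂ) from by ring]
    rw [h1, h2, ← Finset.prod_div_distrib]
    simp only [Yfun, if_neg hM'']
    obtain ⟨m, hm⟩ : ∃ m, M.natAbs = m + 1 := ⟨M.natAbs - 1, by omega⟩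
    rw [hm, show m + 1 - 1 = m from rfl, Finset.prod_range_succ']
    have h0 : (Complex.sin ((-(Complex.I * β) - ((0:ℕ) : ℂ) * (π : ℂ) * (r:ℂ) + (π : ℂ)) / (N : ℂ)) *
            Complex.sin ((-(Complex.I * β) - ((0:ℕ) : ℂ) * (π : ℂ) * (r:ℂ) - (π : ℂ)) / (N : ℂ)) /
            (Complex.sin ((-(Complex.I * β) - ((0:ℕ) : ℂ) * (π : ℂ) * (r:ℂ)) / (N : ℂ))) ^ 2) /
        (Complex.sin ((-(Complex.I * β) + ((0:ℕ) : ℂ) * (π : ℂ) * (r:ℂ) + (π : ℂ)) / (N : ℂ)) *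
            Complex.sin ((-(Complex.I * β) + ((0:ℕ) : ℂ) * (π : ℂ) * (r:ℂ) - (π : ℂ)) / (N : ℂ)) /
            (Complex.sin ((-(Complex.I * β) + ((0:ℕ) : ℂ) * (π : ℂ) * (r:ℂ)) / (N : ℂ))) ^ 2) = 1 := by
      have e1 : (-(Complex.I * β) - ((0:ℕ) : ℂ) * (π : ℂ) * (r:ℂ) + (π : ℂ)) / (N : ℂ)
          = (-(Complex.I * β) + ((0:ℕ) : ℂ) * (π : ℂ) * (r:ℂ) + (π : ℂ)) / (N : ℂ) := by push_cast; ring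
      have e2 : (-(Complex.I * β) - ((0:ℕ) : ℂ) * (π : ℂ) * (r:ℂ) - (π : ℂ)) / (N : ℂ)
          = (-(Complex.I * β) + ((0:ℕ) : ℂ) * (π : ℂ) * (r:ℂ) - (π : ℂ)) / (N : ℂ) := by push_cast; ring
      have e3 : (-(Complex.I * β) - ((0:ℕ) : ℂ) * (π : ℂ) * (r:ℂ)) / (N : ℂ)
          = (-(Complex.I * β) + ((0:ℕ) : ℂ) * (π : ℂ) * (r:ℂ)) / (N : ℂ) := by push_cast; ring
      rw [e1, e2, e3]
      have na := genN 0 (-1) ((-(Complex.I * β) + ((0:ℕ) : ℂ) * (π : ℂ) * (r:ℂ) + (π : ℂ)) / (N : ℂ))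
        (by push_cast; ring)
      have nb := genN 0 1 ((-(Complex.I * β) + ((0:ℕ) : ℂ) * (π : ℂ) * (r:ℂ) - (π : ℂ)) / (N : ℂ))
        (by push_cast; ring)
      have nc := genN 0 0 ((-(Complex.I * β) + ((0:ℕ) : ℂ) * (π : ℂ) * (r:ℂ)) / (N : ℂ))
        (by push_cast; ring)
      exact div_self (div_ne_zero (mul_ne_zero na nb) (pow_ne_zero 2 nc))
    rw [h0, mul_one]
    refine Finset.prod_congr rfl fun k hk => ?_
    rw [sin_flip (show -(Complex.I * β) - ((k+1:ℕ) : ℂ) * (π : ℂ) * (r:ℂ) + (π : ℂ)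
          = -(Complex.I * β + ((k : ℂ) + 1) * (π : ℂ) * (r:ℂ) - (π : ℂ)) from by push_cast; ring),
      sin_flip (show -(Complex.I * β) - ((k+1:ℕ) : ℂ) * (π : ℂ) * (r:ℂ) - (π : ℂ)
          = -(Complex.I * β + ((k : ℂ) + 1) * (π : ℂ) * (r:ℂ) + (π : ℂ)) from by push_cast; ring),
      sin_flip (show -(Complex.I * β) - ((k+1:ℕ) : ℂ) * (π : ℂ) * (r:ℂ)
          = -(Complex.I * β + ((k : ℂ) + 1) * (π : ℂ) * (r:ℂ)) from by push_cast; ring),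
      sin_flip (show -(Complex.I * β) + ((k+1:ℕ) : ℂ) * (π : ℂ) * (r:ℂ) + (π : ℂ)
          = -(Complex.I * β - ((k : ℂ) + 1) * (π : ℂ) * (r:ℂ) - (π : ℂ)) from by push_cast; ring),
      sin_flip (show -(Complex.I * β) + ((k+1:ℕ) : ℂ) * (π : ℂ) * (r:ℂ) - (π : ℂ)
          = -(Complex.I * β - ((k : ℂ) + 1) * (π : ℂ) * (r:ℂ) + (π : ℂ)) from by push_cast; ring),
      sin_flip (show -(Complex.I * β) + ((k+1:ℕ) : ℂ) * (π : ℂ) * (r:ℂ)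
          = -(Complex.I * β - ((k : ℂ) + 1) * (π : ℂ) * (r:ℂ)) from by push_cast; ring)]
    have n1 := gen' (k+1) 0 ((Complex.I * β + ((k : ℂ) + 1) * (π : ℂ) * (r:ℂ)) / (N : ℂ))
      (by push_cast; ring)
    have n4 := gen' (-(k+1)) 1 ((Complex.I * β - ((k : ℂ) + 1) * (π : ℂ) * (r:ℂ) + (π:ℂ)) / (N : ℂ))
      (by push_cast; ring)
    have n5 := gen' (-(k+1)) (-1) ((Complex.I * β - ((k : ℂ) + 1) * (π : ℂ) * (r:ℂ) - (π:ℂ)) / (N : ℂ))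
      (by push_cast; ring)
    field_simp
end

section
/- Let N ≥ 1, M, h be integers with h ≠ 0, and set r = Nh/2. Then for all generic β ∈ ℂ (all sines occurring in denominators nonzero): 𝒴_{N, Nh/2, M}(β) = 1. -/
open Complex
open scoped Real

/- When `2r = Nh`, the arguments `(iβ ± kπr + c)/N` of numerator and denominator in each factor
of `𝒴` differ by the integer multiple `kh` of `π`, so each ratio of sines is the sign
`(-1)^{kh}`; the factor is `(-1)^{-2kh} · (-1)^{kh} · (-1)^{kh} = 1`. -/

theorem Complex.sin_add_int_mul_pi_div_sin {x : ℂ} (hx : sin x ≠ 0) (n : ℤ) :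
    sin (x + n * π) / sin x = ((n.negOnePow : ℤ) : ℂ) := by
  rw [sin_antiperiodic.add_int_mul_eq, mul_div_cancel_right₀ _ hx]

theorem Complex.sin_sq_div_sin_add_int_mul_pi_sq_mul {x y z : ℂ} (hx : sin x ≠ 0)
    (hy : sin y ≠ 0) (hz : sin z ≠ 0) (n : ℤ) :
    sin x ^ 2 / sin (x + n * π) ^ 2 * (sin (y + n * π) / sin y) * (sin (z + n * π) / sin z)
      = 1 := by
  rw [← inv_div, ← div_pow, sin_add_int_mul_pi_div_sin hx, sin_add_int_mul_pi_div_sin hy,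
    sin_add_int_mul_pi_div_sin hz, mul_assoc, ← sq]
  exact inv_mul_cancel₀ (pow_ne_zero 2 (Int.cast_ne_zero.mpr n.negOnePow.ne_zero))

theorem add_div_eq_sub_div_add_mul_pi {N : ℂ} (hN : N ≠ 0) (z j c h : ℂ) :
    (z + j * π * (N * h / 2) + c) / N = (z - j * π * (N * h / 2) + c) / N + j * h * π := by
  field_simp
  ring

theorem Yfun_eq_one_general (N : ℕ) (hN : 1 ≤ N) (M h : ℤ) (β : ℂ)
    (hβ : Gen N ((N : ℝ) * h / 2) β) :
    Yfun N (((N : ℝ) * h / 2 : ℝ) : ℂ) M β = 1 := by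
  have hN0 : (N : ℂ) ≠ 0 := Nat.cast_ne_zero.mpr (by omega)
  refine Finset.prod_eq_one fun k _ => ?_
  have hr : (((N : ℝ) * h / 2 : ℝ) : ℂ) = N * h / 2 := by push_cast; ring
  have hden (b : ℤ) : sin ((I * β - (k + 1) * π * (N * h / 2) + b * π) / N) ≠ 0 := by
    convert hβ (-(k + 1)) b using 3
    push_cast
    ring
  have h₀ := hden 0
  have h₁ := hden 1
  have h₂ := hden (-1)
  push_cast at h₀ h₁ h₂
  simp only [zero_mul, add_zero, one_mul, neg_mul, ← sub_eq_add_neg] at h₀ h₁ h₂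
  have hshift := add_div_eq_sub_div_add_mul_pi hN0 (I * β) (k + 1) (h := h)
  have hshift₀ := hshift 0
  have hshift₂ := hshift (-π)
  simp only [add_zero, ← sub_eq_add_neg] at hshift₀ hshift₂
  rw [hr, hshift₀, hshift π, hshift₂]
  exact_mod_cast sin_sq_div_sin_add_int_mul_pi_sq_mul h₀ h₁ h₂ ((k + 1) * h)

/-- The Corollary of Theorem 3.4 of the paper: when `2r = Nh` with `h` a nonzero integer,
the structure function `𝒴_{N,r,M}` is identically `1` (so the operators `t(β)` generate
an Abelian algebra). -/
theorem Yfun_eq_one (N : ℕ) (hN : 1 ≤ N) (M h : ℤ) (hh : h ≠ 0) (β : ℂ)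
    (hβ : Gen N ((N : ℝ) * h / 2) β) :
    Yfun N (((N : ℝ) * h / 2 : ℝ) : ℂ) M β = 1 :=
  Yfun_eq_one_general N hN M h β hβ
end

section
/- Let N ≥ 1 be an integer and β ∈ ℂ be such that sin(iβ/N), sin((iβ+π)/N), sin((iβ−π)/N) are all nonzero. Define, for c ∈ ℂ, T(β,c) = [ sin((iβ−π)/N)/sin((iβ+π)/N) ] · [ sin((iβ+π−πc)/N)/sin((iβ−π+πc)/N) ] · [ sin((iβ+πc)/N)/sin((iβ−πc)/N) ]. Then T(β,−N) = 1, and the derivative of c ↦ T(β,c) at c = −N equals −(2π/N)·sin²(π/N)·cos(iβ/N) / ( sin(iβ/N)·sin((iβ+π)/N)·sin((iβ−π)/N) ). -/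
open Complex
open scoped Real

/-- The scalar structure function (eq. (4.5)) of the exchange relation for `t(β)` near the
critical level `c = −N`:
`T(β,c) = [sin((iβ−π)/N)/sin((iβ+π)/N)]·[sin((iβ+π−πc)/N)/sin((iβ−π+πc)/N)]·[sin((iβ+πc)/N)/sin((iβ−πc)/N)]`. -/
noncomputable def Tfun (N : ℕ) (β c : ℂ) : ℂ :=
  (Complex.sin ((Complex.I * β - (π : ℂ)) / (N : ℂ)) /
      Complex.sin ((Complex.I * β + (π : ℂ)) / (N : ℂ))) *
  (Complex.sin ((Complex.I * β + (π : ℂ) - (π : ℂ) * c) / (N : ℂ)) /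
      Complex.sin ((Complex.I * β - (π : ℂ) + (π : ℂ) * c) / (N : ℂ))) *
  (Complex.sin ((Complex.I * β + (π : ℂ) * c) / (N : ℂ)) /
      Complex.sin ((Complex.I * β - (π : ℂ) * c) / (N : ℂ)))

/-- Theorem 4.1 of the paper (analytic content): `T(β,−N) = 1`, and the derivative of
`c ↦ T(β,c)` at `c = −N` equals
`−(2π/N)·sin²(π/N)·cos(iβ/N) / (sin(iβ/N)·sin((iβ+π)/N)·sin((iβ−π)/N))`,
the Poisson structure function on the centre at the critical level `c = −N`. -/
theorem Tfun_deriv (N : ℕ) (hN : 1 ≤ N) (β : ℂ)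
    (h0 : Complex.sin (Complex.I * β / (N : ℂ)) ≠ 0)
    (h1 : Complex.sin ((Complex.I * β + (π : ℂ)) / (N : ℂ)) ≠ 0)
    (h2 : Complex.sin ((Complex.I * β - (π : ℂ)) / (N : ℂ)) ≠ 0) :
    Tfun N β (-(N : ℂ)) = 1 ∧
    HasDerivAt (fun c : ℂ => Tfun N β c)
      (-(2 * (π : ℂ) / (N : ℂ)) * (Complex.sin ((π : ℂ) / (N : ℂ))) ^ 2 *
          Complex.cos (Complex.I * β / (N : ℂ)) /
        (Complex.sin (Complex.I * β / (N : ℂ)) *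
          Complex.sin ((Complex.I * β + (π : ℂ)) / (N : ℂ)) *
          Complex.sin ((Complex.I * β - (π : ℂ)) / (N : ℂ))))
      (-(N : ℂ)) := by
  have hn : (N : ℂ) ≠ 0 := Nat.cast_ne_zero.mpr (by omega)
  set n : ℂ := (N : ℂ) with hn'
  set a : ℂ := Complex.I * β / n with ha
  set p : ℂ := (π : ℂ) / n with hp
  have hpn : p * n = (π : ℂ) := div_mul_cancel₀ _ hn
  have e1 : (Complex.I * β - (π : ℂ)) / n = a - p := by rw [ha, hp]; ring
  have e2 : (Complex.I * β + (π : ℂ)) / n = a + p := by rw [ha, hp]; ring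
  have e3 : ∀ c : ℂ, (Complex.I * β + (π : ℂ) - (π : ℂ) * c) / n = a + p - p * c := by
    intro c; rw [ha, hp]; ring
  have e4 : ∀ c : ℂ, (Complex.I * β - (π : ℂ) + (π : ℂ) * c) / n = a - p + p * c := by
    intro c; rw [ha, hp]; ring
  have e5 : ∀ c : ℂ, (Complex.I * β + (π : ℂ) * c) / n = a + p * c := by
    intro c; rw [ha, hp]; ring
  have e6 : ∀ c : ℂ, (Complex.I * β - (π : ℂ) * c) / n = a - p * c := by
    intro c; rw [ha, hp]; ring
  have hT : (fun c : ℂ => Tfun N β c) =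
      (fun c : ℂ => (Complex.sin (a - p) / Complex.sin (a + p)) *
        (Complex.sin (a + p - p * c) / Complex.sin (a - p + p * c)) *
        (Complex.sin (a + p * c) / Complex.sin (a - p * c))) := by
    funext c
    simp only [Tfun, ← hn', e1, e2, e3 c, e4 c, e5 c, e6 c]
  have hs0 : Complex.sin a ≠ 0 := h0
  have hs1 : Complex.sin (a + p) ≠ 0 := by rwa [← e2]
  have hs2 : Complex.sin (a - p) ≠ 0 := by rwa [← e1]
  have sin_addpi : ∀ x : ℂ, Complex.sin (x + π) = -Complex.sin x := by
    intro x; rw [Complex.sin_add, Complex.sin_pi, Complex.cos_pi]; ring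
  have cos_addpi : ∀ x : ℂ, Complex.cos (x + π) = -Complex.cos x := by
    intro x; rw [Complex.cos_add, Complex.sin_pi, Complex.cos_pi]; ring
  have sin_subpi : ∀ x : ℂ, Complex.sin (x - π) = -Complex.sin x := by
    intro x; rw [Complex.sin_sub, Complex.sin_pi, Complex.cos_pi]; ring
  have cos_subpi : ∀ x : ℂ, Complex.cos (x - π) = -Complex.cos x := by
    intro x; rw [Complex.cos_sub, Complex.sin_pi, Complex.cos_pi]; ring
  -- arguments at c = -n
  have g1 : a + p - p * (-n) = (a + p) + π := by rw [mul_neg, hpn]; ring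
  have g2 : a - p + p * (-n) = (a - p) - π := by rw [mul_neg, hpn]; ring
  have g3 : a + p * (-n) = a - π := by rw [mul_neg, hpn]; ring
  have g4 : a - p * (-n) = a + π := by rw [mul_neg, hpn]; ring
  constructor
  · have := congrFun hT (-n)
    rw [this, g1, g2, g3, g4, sin_addpi, sin_subpi, sin_subpi, sin_addpi]
    field_simp
  · rw [hT]
    have d1 : HasDerivAt (fun c : ℂ => a + p - p * c)
        (-(p * 1)) (-n) := ((hasDerivAt_id (-n)).const_mul p).const_sub (a + p)
    have d2 : HasDerivAt (fun c : ℂ => a - p + p * c)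
        (p * 1) (-n) := ((hasDerivAt_id (-n)).const_mul p).const_add (a - p)
    have d3 : HasDerivAt (fun c : ℂ => a + p * c)
        (p * 1) (-n) := ((hasDerivAt_id (-n)).const_mul p).const_add a
    have d4 : HasDerivAt (fun c : ℂ => a - p * c)
        (-(p * 1)) (-n) := ((hasDerivAt_id (-n)).const_mul p).const_sub a
    have hv2 : Complex.sin (a - p + p * (-n)) ≠ 0 := by
      rw [g2, sin_subpi]; exact neg_ne_zero.mpr hs2
    have hv4 : Complex.sin (a - p * (-n)) ≠ 0 := by
      rw [g4, sin_addpi]; exact neg_ne_zero.mpr hs0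
    have D1 := (d1.csin.div d2.csin hv2)
    have D2 := (d3.csin.div d4.csin hv4)
    have DD := (D1.mul D2).const_mul (Complex.sin (a - p) / Complex.sin (a + p))
    have hfe : (fun y : ℂ => Complex.sin (a - p) / Complex.sin (a + p) *
        (Complex.sin (a + p - p * y) / Complex.sin (a - p + p * y) *
          (Complex.sin (a + p * y) / Complex.sin (a - p * y)))) =
        (fun c : ℂ => Complex.sin (a - p) / Complex.sin (a + p) *
          (Complex.sin (a + p - p * c) / Complex.sin (a - p + p * c)) *
          (Complex.sin (a + p * c) / Complex.sin (a - p * c))) :=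
      funext fun c => (mul_assoc _ _ _).symm
    simp only [Pi.div_apply, Pi.mul_apply] at DD
    rw [hfe] at DD
    rw [e1, e2]
    refine DD.congr_deriv (Eq.symm ?_)
    rw [g1, g2, g3, g4, sin_addpi, sin_subpi, sin_subpi, sin_addpi,
      cos_addpi, cos_subpi, cos_subpi, cos_addpi]
    rw [Complex.sin_add, Complex.sin_sub, Complex.cos_add, Complex.cos_sub]
    have pyt_a : Complex.sin a ^ 2 + Complex.cos a ^ 2 = 1 := Complex.sin_sq_add_cos_sq a
    have pyt_p : Complex.sin p ^ 2 + Complex.cos p ^ 2 = 1 := Complex.sin_sq_add_cos_sq p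
    have hs1' : Complex.sin a * Complex.cos p + Complex.cos a * Complex.sin p ≠ 0 := by
      rw [← Complex.sin_add]; exact hs1
    have hs2' : Complex.sin a * Complex.cos p - Complex.cos a * Complex.sin p ≠ 0 := by
      rw [← Complex.sin_sub]; exact hs2
    have h2p : (2 : ℂ) * π / n = 2 * p := by rw [hp]; ring
    have hs2n : Complex.cos a * Complex.sin p - Complex.sin a * Complex.cos p ≠ 0 := by
      intro h; apply hs2'; linear_combination -h
    rw [h2p]
    have hAB : (Complex.sin a * Complex.cos p + Complex.cos a * Complex.sin p) *
        (Complex.sin a * Complex.cos p - Complex.cos a * Complex.sin p) ≠ 0 := mul_ne_zero hs1' hs2'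
    have hsAB : Complex.sin a * (Complex.sin a * Complex.cos p + Complex.cos a * Complex.sin p) *
        (Complex.sin a * Complex.cos p - Complex.cos a * Complex.sin p) ≠ 0 :=
      mul_ne_zero (mul_ne_zero hs0 hs1') hs2'
    have key : (Complex.sin a * Complex.cos p - Complex.cos a * Complex.sin p) /
        (Complex.sin a * Complex.cos p + Complex.cos a * Complex.sin p) *
      ((-(Complex.cos a * Complex.cos p - Complex.sin a * Complex.sin p) * -(p * 1) *
            -(Complex.sin a * Complex.cos p - Complex.cos a * Complex.sin p) -
          -(Complex.sin a * Complex.cos p + Complex.cos a * Complex.sin p) *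
            (-(Complex.cos a * Complex.cos p + Complex.sin a * Complex.sin p) * (p * 1))) /
          (-(Complex.sin a * Complex.cos p - Complex.cos a * Complex.sin p)) ^ 2 *
        (-Complex.sin a / -Complex.sin a) +
        -(Complex.sin a * Complex.cos p + Complex.cos a * Complex.sin p) /
            -(Complex.sin a * Complex.cos p - Complex.cos a * Complex.sin p) *
          ((-Complex.cos a * (p * 1) * -Complex.sin a -
              -Complex.sin a * (-Complex.cos a * -(p * 1))) / (-Complex.sin a) ^ 2)) =
      -(2 * p) * Complex.sin a * Complex.cos a * (Complex.sin p ^ 2 + Complex.cos p ^ 2) /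
          ((Complex.sin a * Complex.cos p + Complex.cos a * Complex.sin p) *
            (Complex.sin a * Complex.cos p - Complex.cos a * Complex.sin p)) +
        2 * Complex.cos a * p / Complex.sin a := by
      field_simp
      ring
    rw [key, pyt_p, div_add_div _ _ hAB hs0, div_eq_div_iff hsAB (mul_ne_zero hAB hs0)]
    linear_combination (Complex.sin a * (Complex.sin a * Complex.cos p + Complex.cos a * Complex.sin p) *
        (Complex.sin a * Complex.cos p - Complex.cos a * Complex.sin p)) * (-2 * p * Complex.cos a) *
        (Complex.sin a ^ 2 * pyt_p - Complex.sin p ^ 2 * pyt_a)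
end

section
/- Let N ≥ 1 and M be integers, h a nonzero integer, and β ∈ ℂ generic (so that all sines occurring in denominators below are nonzero at ε = 0 and in a neighbourhood). Consider the function g(ε) = 𝒴_{N, (Nh−ε)/2, M}(β) of a real (or complex) variable ε. Then g(0) = 1 and g′(0) = f_h(β), where f_h(β) = M(M+1)·f_s(β) if h is even, and f_h(β) = 2⌊M/2⌋(⌊M/2⌋+1)·f_s(β) + 2⌊(M+1)/2⌋²·f_c(β) if h is odd. -/
open Complex
open scoped Real

/-- The Poisson structure function
`f_s(β) = −(π/N)·sin²(π/N)·cos(iβ/N) / (sin(iβ/N)·sin((iβ+π)/N)·sin((iβ−π)/N))`. -/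
noncomputable def fs (N : ℕ) (β : ℂ) : ℂ :=
  -((π : ℂ) / (N : ℂ)) * (Complex.sin ((π : ℂ) / (N : ℂ))) ^ 2 *
      Complex.cos (Complex.I * β / (N : ℂ)) /
    (Complex.sin (Complex.I * β / (N : ℂ)) *
      Complex.sin ((Complex.I * β + (π : ℂ)) / (N : ℂ)) *
      Complex.sin ((Complex.I * β - (π : ℂ)) / (N : ℂ)))

/-- The Poisson structure function
`f_c(β) = (π/N)·sin²(π/N)·sin(iβ/N) / (cos(iβ/N)·cos((iβ+π)/N)·cos((iβ−π)/N))`. -/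
noncomputable def fc (N : ℕ) (β : ℂ) : ℂ :=
  ((π : ℂ) / (N : ℂ)) * (Complex.sin ((π : ℂ) / (N : ℂ))) ^ 2 *
      Complex.sin (Complex.I * β / (N : ℂ)) /
    (Complex.cos (Complex.I * β / (N : ℂ)) *
      Complex.cos ((Complex.I * β + (π : ℂ)) / (N : ℂ)) *
      Complex.cos ((Complex.I * β - (π : ℂ)) / (N : ℂ)))

/-- The `h`-labelled Poisson structure function of Section 4.2 of the paper:
`f_h(β) = M(M+1)·f_s(β)` for `h` even, and
`f_h(β) = 2⌊M/2⌋(⌊M/2⌋+1)·f_s(β) + 2⌊(M+1)/2⌋²·f_c(β)` for `h` odd. -/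
noncomputable def fh (N : ℕ) (M h : ℤ) (β : ℂ) : ℂ :=
  if Even h then ((M * (M + 1) : ℤ) : ℂ) * fs N β
  else ((2 * M.fdiv 2 * (M.fdiv 2 + 1) : ℤ) : ℂ) * fs N β +
    ((2 * ((M + 1).fdiv 2) ^ 2 : ℤ) : ℂ) * fc N β

/-- Genericity of `β`: the sines and cosines occurring in the denominators of the
`𝒴`-functions at `ε = 0` (hence, by continuity, in a neighbourhood) are all nonzero. -/
def Gen2 (N : ℕ) (β : ℂ) : Prop :=
  Complex.sin (Complex.I * β / (N : ℂ)) ≠ 0 ∧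
  Complex.sin ((Complex.I * β + (π : ℂ)) / (N : ℂ)) ≠ 0 ∧
  Complex.sin ((Complex.I * β - (π : ℂ)) / (N : ℂ)) ≠ 0 ∧
  Complex.cos (Complex.I * β / (N : ℂ)) ≠ 0 ∧
  Complex.cos ((Complex.I * β + (π : ℂ)) / (N : ℂ)) ≠ 0 ∧
  Complex.cos ((Complex.I * β - (π : ℂ)) / (N : ℂ)) ≠ 0



lemma csin_add_int_mul_pi (z : ℂ) (n : ℤ) : Complex.sin (z + n * π) = (-1) ^ n * Complex.sin z := by
  rw [Complex.sin_add]
  have h1 : Complex.sin ((n:ℂ) * π) = 0 := Complex.sin_int_mul_pi n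
  have h2 : Complex.cos ((n:ℂ) * π) = (-1) ^ n := by
    have e : ((n:ℂ) * π) = ((n * π : ℝ) : ℂ) := by push_cast; ring
    rw [e, ← Complex.ofReal_cos]
    have e2 : Real.cos (n * π) = (-1)^n := by simpa using Real.cos_add_int_mul_pi 0 n
    rw [e2]; push_cast; ring
  rw [h1, h2]; ring

lemma Sderiv (x a : ℂ) (hs : Complex.sin x ≠ 0) (hp : Complex.sin (x+a) ≠ 0)
    (hm : Complex.sin (x-a) ≠ 0) :
    HasDerivAt (fun δ : ℂ => Complex.sin (x+δ)^2 / Complex.sin (x-δ)^2 *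
      (Complex.sin (x+a-δ) / Complex.sin (x+a+δ)) *
      (Complex.sin (x-a-δ) / Complex.sin (x-a+δ)))
    (-4 * Complex.sin a^2 * Complex.cos x /
      (Complex.sin x * Complex.sin (x+a) * Complex.sin (x-a))) 0 := by
  have ep : ∀ y : ℂ, HasDerivAt (fun δ:ℂ => Complex.sin (y+δ)) (Complex.cos y) 0 := by
    intro y
    have := (Complex.hasDerivAt_sin (y+0)).comp 0 ((hasDerivAt_id 0).const_add y)
    simpa [Function.comp_def] using this
  have em : ∀ y : ℂ, HasDerivAt (fun δ:ℂ => Complex.sin (y-δ)) (-Complex.cos y) 0 := by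
    intro y
    have := (Complex.hasDerivAt_sin (y-0)).comp 0 ((hasDerivAt_id 0).const_sub y)
    simpa [Function.comp_def] using this
  have q1 := ((ep x).pow 2).div ((em x).pow 2) (by simpa using pow_ne_zero 2 hs)
  have q2 := (em (x+a)).div (ep (x+a)) (by simpa using hp)
  have q3 := (em (x-a)).div (ep (x-a)) (by simpa using hm)
  have h := (q1.mul q2).mul q3
  refine h.congr_deriv (Eq.symm ?_)
  simp only [add_zero, sub_zero, Pi.pow_apply, Pi.div_apply, Pi.mul_apply]
  field_simp
  have hprod : Complex.sin (x+a) * Complex.sin (x-a) = Complex.sin x ^ 2 - Complex.sin a ^ 2 := by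
    rw [Complex.sin_add, Complex.sin_sub]
    linear_combination (Complex.sin x ^ 2) * Complex.sin_sq_add_cos_sq a - (Complex.sin a ^ 2) * Complex.sin_sq_add_cos_sq x
  have hsum : Complex.cos (x+a) * Complex.sin (x-a) + Complex.sin (x+a) * Complex.cos (x-a) = 2 * Complex.sin x * Complex.cos x := by
    rw [Complex.sin_add, Complex.sin_sub, Complex.cos_add, Complex.cos_sub]
    linear_combination (2 * Complex.sin x * Complex.cos x) * Complex.sin_sq_add_cos_sq a
  linear_combination (-4 * Complex.cos x * Complex.sin x) * hprod + (2 * Complex.sin x ^ 2) * hsum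

lemma Cderiv (x a : ℂ) (hs : Complex.cos x ≠ 0) (hp : Complex.cos (x+a) ≠ 0)
    (hm : Complex.cos (x-a) ≠ 0) :
    HasDerivAt (fun δ : ℂ => Complex.cos (x+δ)^2 / Complex.cos (x-δ)^2 *
      (Complex.cos (x+a-δ) / Complex.cos (x+a+δ)) *
      (Complex.cos (x-a-δ) / Complex.cos (x-a+δ)))
    (4 * Complex.sin a^2 * Complex.sin x /
      (Complex.cos x * Complex.cos (x+a) * Complex.cos (x-a))) 0 := by
  have ep : ∀ y : ℂ, HasDerivAt (fun δ:ℂ => Complex.cos (y+δ)) (-Complex.sin y) 0 := by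
    intro y
    have := (Complex.hasDerivAt_cos (y+0)).comp 0 ((hasDerivAt_id 0).const_add y)
    simpa [Function.comp_def] using this
  have em : ∀ y : ℂ, HasDerivAt (fun δ:ℂ => Complex.cos (y-δ)) (Complex.sin y) 0 := by
    intro y
    have := (Complex.hasDerivAt_cos (y-0)).comp 0 ((hasDerivAt_id 0).const_sub y)
    simpa [Function.comp_def] using this
  have q1 := ((ep x).pow 2).div ((em x).pow 2) (by simpa using pow_ne_zero 2 hs)
  have q2 := (em (x+a)).div (ep (x+a)) (by simpa using hp)
  have q3 := (em (x-a)).div (ep (x-a)) (by simpa using hm)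
  have h := (q1.mul q2).mul q3
  refine h.congr_deriv (Eq.symm ?_)
  simp only [add_zero, sub_zero, Pi.pow_apply, Pi.div_apply, Pi.mul_apply]
  field_simp
  have hprod : Complex.cos (x+a) * Complex.cos (x-a) = Complex.cos x ^ 2 - Complex.sin a ^ 2 := by
    rw [Complex.cos_add, Complex.cos_sub]
    linear_combination (Complex.cos x ^ 2) * Complex.sin_sq_add_cos_sq a - (Complex.sin a ^ 2) * Complex.sin_sq_add_cos_sq x
  have hsum : Complex.cos (x+a) * Complex.sin (x-a) + Complex.sin (x+a) * Complex.cos (x-a) = 2 * Complex.sin x * Complex.cos x := by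
    rw [Complex.sin_add, Complex.sin_sub, Complex.cos_add, Complex.cos_sub]
    linear_combination (2 * Complex.sin x * Complex.cos x) * Complex.sin_sq_add_cos_sq a
  linear_combination (4 * Complex.sin x * Complex.cos x) * hprod - (2 * Complex.cos x ^ 2) * hsum

lemma prod_one_hasDerivAt (n : ℕ) (G : ℕ → ℂ → ℂ) (d : ℕ → ℂ)
    (h1 : ∀ k, k < n → G k 0 = 1) (h2 : ∀ k, k < n → HasDerivAt (G k) (d k) 0) :
    (∏ k ∈ Finset.range n, G k 0) = 1 ∧
    HasDerivAt (fun ε : ℂ => ∏ k ∈ Finset.range n, G k ε) (∑ k ∈ Finset.range n, d k) 0 := by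
  induction n with
  | zero => simpa using hasDerivAt_const (0:ℂ) (1:ℂ)
  | succ n ih =>
    obtain ⟨v, hd⟩ := ih (fun k hk => h1 k (by omega)) (fun k hk => h2 k (by omega))
    constructor
    · rw [Finset.prod_range_succ, v, h1 n (by omega), mul_one]
    · have := hd.mul (h2 n (by omega))
      simp only [Finset.prod_range_succ, Finset.sum_range_succ]
      refine this.congr_deriv (Eq.symm ?_)
      rw [v, h1 n (by omega)]; ring

lemma Sderiv' (x a cc : ℂ) (hs : Complex.sin x ≠ 0) (hp : Complex.sin (x+a) ≠ 0)
    (hm : Complex.sin (x-a) ≠ 0) :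
    HasDerivAt (fun ε : ℂ => Complex.sin (x+cc*ε)^2 / Complex.sin (x-cc*ε)^2 *
      (Complex.sin (x+a-cc*ε) / Complex.sin (x+a+cc*ε)) *
      (Complex.sin (x-a-cc*ε) / Complex.sin (x-a+cc*ε)))
    (cc * (-4 * Complex.sin a^2 * Complex.cos x /
      (Complex.sin x * Complex.sin (x+a) * Complex.sin (x-a)))) 0 := by
  have hlin : HasDerivAt (fun ε : ℂ => cc * ε) cc 0 := by
    simpa using (hasDerivAt_id (0:ℂ)).const_mul cc
  have h0 : HasDerivAt (fun δ : ℂ => Complex.sin (x+δ)^2 / Complex.sin (x-δ)^2 *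
      (Complex.sin (x+a-δ) / Complex.sin (x+a+δ)) *
      (Complex.sin (x-a-δ) / Complex.sin (x-a+δ)))
    (-4 * Complex.sin a^2 * Complex.cos x /
      (Complex.sin x * Complex.sin (x+a) * Complex.sin (x-a))) (cc * 0) := by
    rw [mul_zero]; exact Sderiv x a hs hp hm
  have := h0.comp 0 hlin
  simpa [Function.comp_def, mul_comm] using this

lemma Cderiv' (x a cc : ℂ) (hs : Complex.cos x ≠ 0) (hp : Complex.cos (x+a) ≠ 0)
    (hm : Complex.cos (x-a) ≠ 0) :
    HasDerivAt (fun ε : ℂ => Complex.cos (x+cc*ε)^2 / Complex.cos (x-cc*ε)^2 *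
      (Complex.cos (x+a-cc*ε) / Complex.cos (x+a+cc*ε)) *
      (Complex.cos (x-a-cc*ε) / Complex.cos (x-a+cc*ε)))
    (cc * (4 * Complex.sin a^2 * Complex.sin x /
      (Complex.cos x * Complex.cos (x+a) * Complex.cos (x-a)))) 0 := by
  have hlin : HasDerivAt (fun ε : ℂ => cc * ε) cc 0 := by
    simpa using (hasDerivAt_id (0:ℂ)).const_mul cc
  have h0 : HasDerivAt (fun δ : ℂ => Complex.cos (x+δ)^2 / Complex.cos (x-δ)^2 *
      (Complex.cos (x+a-δ) / Complex.cos (x+a+δ)) *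
      (Complex.cos (x-a-δ) / Complex.cos (x-a+δ)))
    (4 * Complex.sin a^2 * Complex.sin x /
      (Complex.cos x * Complex.cos (x+a) * Complex.cos (x-a))) (cc * 0) := by
    rw [mul_zero]; exact Cderiv x a hs hp hm
  have := h0.comp 0 hlin
  simpa [Function.comp_def, mul_comm] using this

/-- Reduction of the `Yfun` factor, even case. -/
lemma factor_even (N : ℕ) (hN0 : (N:ℂ) ≠ 0) (β ε : ℂ) (h : ℤ) (k : ℕ) (j : ℤ)
    (hj : ((k:ℤ)+1)*h = 2*j) :
    (Complex.sin ((Complex.I*β - ((k:ℂ)+1)*(π:ℂ)*(((N:ℂ)*(h:ℂ) - ε)/2))/(N:ℂ)))^2 /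
      (Complex.sin ((Complex.I*β + ((k:ℂ)+1)*(π:ℂ)*(((N:ℂ)*(h:ℂ) - ε)/2))/(N:ℂ)))^2 *
    (Complex.sin ((Complex.I*β + ((k:ℂ)+1)*(π:ℂ)*(((N:ℂ)*(h:ℂ) - ε)/2) + (π:ℂ))/(N:ℂ)) /
      Complex.sin ((Complex.I*β - ((k:ℂ)+1)*(π:ℂ)*(((N:ℂ)*(h:ℂ) - ε)/2) + (π:ℂ))/(N:ℂ))) *
    (Complex.sin ((Complex.I*β + ((k:ℂ)+1)*(π:ℂ)*(((N:ℂ)*(h:ℂ) - ε)/2) - (π:ℂ))/(N:ℂ)) /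
      Complex.sin ((Complex.I*β - ((k:ℂ)+1)*(π:ℂ)*(((N:ℂ)*(h:ℂ) - ε)/2) - (π:ℂ))/(N:ℂ)))
    = Complex.sin (Complex.I*β/(N:ℂ) + ((k:ℂ)+1)*(π:ℂ)/(2*(N:ℂ))*ε)^2 / Complex.sin (Complex.I*β/(N:ℂ) - ((k:ℂ)+1)*(π:ℂ)/(2*(N:ℂ))*ε)^2 *
    (Complex.sin (Complex.I*β/(N:ℂ) + (π:ℂ)/(N:ℂ) - ((k:ℂ)+1)*(π:ℂ)/(2*(N:ℂ))*ε) / Complex.sin (Complex.I*β/(N:ℂ) + (π:ℂ)/(N:ℂ) + ((k:ℂ)+1)*(π:ℂ)/(2*(N:ℂ))*ε)) *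
    (Complex.sin (Complex.I*β/(N:ℂ) - (π:ℂ)/(N:ℂ) - ((k:ℂ)+1)*(π:ℂ)/(2*(N:ℂ))*ε) / Complex.sin (Complex.I*β/(N:ℂ) - (π:ℂ)/(N:ℂ) + ((k:ℂ)+1)*(π:ℂ)/(2*(N:ℂ))*ε)) := by
  have hn : ((k:ℂ)+1) * (h:ℂ) = 2*(j:ℂ) := by exact_mod_cast hj
  have hσ0 : ((-1:ℂ)^j) ≠ 0 := zpow_ne_zero j (by norm_num)
  have h2 : ((-1:ℂ)^j) * ((-1:ℂ)^j) = 1 := by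
    rw [← zpow_add₀ (by norm_num : (-1:ℂ) ≠ 0), show j + j = 2*j from by ring, zpow_mul]
    norm_num
  have hneg : ((-1:ℂ))^(-j) = ((-1:ℂ))^j := by
    rw [zpow_neg]; exact inv_eq_of_mul_eq_one_left h2
  have hT : (((k:ℂ)+1)*(π:ℂ)*(((N:ℂ)*(h:ℂ) - ε)/2))/(N:ℂ) = (j:ℂ)*(π:ℂ) - ((k:ℂ)+1)*(π:ℂ)/(2*(N:ℂ))*ε := by
    field_simp
    linear_combination (N:ℂ) * hn
  have e1 : (Complex.I*β - ((k:ℂ)+1)*(π:ℂ)*(((N:ℂ)*(h:ℂ) - ε)/2))/(N:ℂ) = (Complex.I*β/(N:ℂ) + ((k:ℂ)+1)*(π:ℂ)/(2*(N:ℂ))*ε) + ((-j : ℤ):ℂ)*(π:ℂ) := by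
    push_cast; linear_combination (-1 : ℂ) * hT
  have e2 : (Complex.I*β + ((k:ℂ)+1)*(π:ℂ)*(((N:ℂ)*(h:ℂ) - ε)/2))/(N:ℂ) = (Complex.I*β/(N:ℂ) - ((k:ℂ)+1)*(π:ℂ)/(2*(N:ℂ))*ε) + ((j : ℤ):ℂ)*(π:ℂ) := by
    push_cast; linear_combination hT
  have e3 : (Complex.I*β + ((k:ℂ)+1)*(π:ℂ)*(((N:ℂ)*(h:ℂ) - ε)/2) + (π:ℂ))/(N:ℂ) = (Complex.I*β/(N:ℂ) + (π:ℂ)/(N:ℂ) - ((k:ℂ)+1)*(π:ℂ)/(2*(N:ℂ))*ε) + ((j : ℤ):ℂ)*(π:ℂ) := by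
    push_cast; linear_combination hT
  have e4 : (Complex.I*β - ((k:ℂ)+1)*(π:ℂ)*(((N:ℂ)*(h:ℂ) - ε)/2) + (π:ℂ))/(N:ℂ) = (Complex.I*β/(N:ℂ) + (π:ℂ)/(N:ℂ) + ((k:ℂ)+1)*(π:ℂ)/(2*(N:ℂ))*ε) + ((-j : ℤ):ℂ)*(π:ℂ) := by
    push_cast; linear_combination (-1 : ℂ) * hT
  have e5 : (Complex.I*β + ((k:ℂ)+1)*(π:ℂ)*(((N:ℂ)*(h:ℂ) - ε)/2) - (π:ℂ))/(N:ℂ) = (Complex.I*β/(N:ℂ) - (π:ℂ)/(N:ℂ) - ((k:ℂ)+1)*(π:ℂ)/(2*(N:ℂ))*ε) + ((j : ℤ):ℂ)*(π:ℂ) := by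
    push_cast; linear_combination hT
  have e6 : (Complex.I*β - ((k:ℂ)+1)*(π:ℂ)*(((N:ℂ)*(h:ℂ) - ε)/2) - (π:ℂ))/(N:ℂ) = (Complex.I*β/(N:ℂ) - (π:ℂ)/(N:ℂ) + ((k:ℂ)+1)*(π:ℂ)/(2*(N:ℂ))*ε) + ((-j : ℤ):ℂ)*(π:ℂ) := by
    push_cast; linear_combination (-1 : ℂ) * hT
  rw [e1, e2, e3, e4, e5, e6]
  simp only [csin_add_int_mul_pi, hneg]
  rw [mul_pow, mul_pow, mul_div_mul_left _ _ (pow_ne_zero 2 hσ0),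
    mul_div_mul_left _ _ hσ0, mul_div_mul_left _ _ hσ0]

/-- Reduction of the `Yfun` factor, odd case. -/
lemma factor_odd (N : ℕ) (hN0 : (N:ℂ) ≠ 0) (β ε : ℂ) (h : ℤ) (k : ℕ) (j : ℤ)
    (hj : ((k:ℤ)+1)*h = 2*j + 1) :
    (Complex.sin ((Complex.I*β - ((k:ℂ)+1)*(π:ℂ)*(((N:ℂ)*(h:ℂ) - ε)/2))/(N:ℂ)))^2 /
      (Complex.sin ((Complex.I*β + ((k:ℂ)+1)*(π:ℂ)*(((N:ℂ)*(h:ℂ) - ε)/2))/(N:ℂ)))^2 *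
    (Complex.sin ((Complex.I*β + ((k:ℂ)+1)*(π:ℂ)*(((N:ℂ)*(h:ℂ) - ε)/2) + (π:ℂ))/(N:ℂ)) /
      Complex.sin ((Complex.I*β - ((k:ℂ)+1)*(π:ℂ)*(((N:ℂ)*(h:ℂ) - ε)/2) + (π:ℂ))/(N:ℂ))) *
    (Complex.sin ((Complex.I*β + ((k:ℂ)+1)*(π:ℂ)*(((N:ℂ)*(h:ℂ) - ε)/2) - (π:ℂ))/(N:ℂ)) /
      Complex.sin ((Complex.I*β - ((k:ℂ)+1)*(π:ℂ)*(((N:ℂ)*(h:ℂ) - ε)/2) - (π:ℂ))/(N:ℂ)))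
    = Complex.cos (Complex.I*β/(N:ℂ) + ((k:ℂ)+1)*(π:ℂ)/(2*(N:ℂ))*ε)^2 / Complex.cos (Complex.I*β/(N:ℂ) - ((k:ℂ)+1)*(π:ℂ)/(2*(N:ℂ))*ε)^2 *
    (Complex.cos (Complex.I*β/(N:ℂ) + (π:ℂ)/(N:ℂ) - ((k:ℂ)+1)*(π:ℂ)/(2*(N:ℂ))*ε) / Complex.cos (Complex.I*β/(N:ℂ) + (π:ℂ)/(N:ℂ) + ((k:ℂ)+1)*(π:ℂ)/(2*(N:ℂ))*ε)) *
    (Complex.cos (Complex.I*β/(N:ℂ) - (π:ℂ)/(N:ℂ) - ((k:ℂ)+1)*(π:ℂ)/(2*(N:ℂ))*ε) / Complex.cos (Complex.I*β/(N:ℂ) - (π:ℂ)/(N:ℂ) + ((k:ℂ)+1)*(π:ℂ)/(2*(N:ℂ))*ε)) := by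
  have hn : ((k:ℂ)+1) * (h:ℂ) = 2*(j:ℂ) + 1 := by exact_mod_cast hj
  have hσ0 : ((-1:ℂ)^j) ≠ 0 := zpow_ne_zero j (by norm_num)
  have h2 : ((-1:ℂ)^j) * ((-1:ℂ)^j) = 1 := by
    rw [← zpow_add₀ (by norm_num : (-1:ℂ) ≠ 0), show j + j = 2*j from by ring, zpow_mul]
    norm_num
  have hneg : ((-1:ℂ))^(-j) = ((-1:ℂ))^j := by
    rw [zpow_neg]; exact inv_eq_of_mul_eq_one_left h2
  have hT : (((k:ℂ)+1)*(π:ℂ)*(((N:ℂ)*(h:ℂ) - ε)/2))/(N:ℂ) = (j:ℂ)*(π:ℂ) + (π:ℂ)/2 - ((k:ℂ)+1)*(π:ℂ)/(2*(N:ℂ))*ε := by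
    field_simp
    linear_combination (N:ℂ) * hn
  have e1 : (Complex.I*β - ((k:ℂ)+1)*(π:ℂ)*(((N:ℂ)*(h:ℂ) - ε)/2))/(N:ℂ) = (Complex.I*β/(N:ℂ) + ((k:ℂ)+1)*(π:ℂ)/(2*(N:ℂ))*ε - (π:ℂ)/2) + ((-j : ℤ):ℂ)*(π:ℂ) := by
    push_cast; linear_combination (-1 : ℂ) * hT
  have e2 : (Complex.I*β + ((k:ℂ)+1)*(π:ℂ)*(((N:ℂ)*(h:ℂ) - ε)/2))/(N:ℂ) = (Complex.I*β/(N:ℂ) - ((k:ℂ)+1)*(π:ℂ)/(2*(N:ℂ))*ε + (π:ℂ)/2) + ((j : ℤ):ℂ)*(π:ℂ) := by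
    push_cast; linear_combination hT
  have e3 : (Complex.I*β + ((k:ℂ)+1)*(π:ℂ)*(((N:ℂ)*(h:ℂ) - ε)/2) + (π:ℂ))/(N:ℂ) = (Complex.I*β/(N:ℂ) + (π:ℂ)/(N:ℂ) - ((k:ℂ)+1)*(π:ℂ)/(2*(N:ℂ))*ε + (π:ℂ)/2) + ((j : ℤ):ℂ)*(π:ℂ) := by
    push_cast; linear_combination hT
  have e4 : (Complex.I*β - ((k:ℂ)+1)*(π:ℂ)*(((N:ℂ)*(h:ℂ) - ε)/2) + (π:ℂ))/(N:ℂ) = (Complex.I*β/(N:ℂ) + (π:ℂ)/(N:ℂ) + ((k:ℂ)+1)*(π:ℂ)/(2*(N:ℂ))*ε - (π:ℂ)/2) + ((-j : ℤ):ℂ)*(π:ℂ) := by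
    push_cast; linear_combination (-1 : ℂ) * hT
  have e5 : (Complex.I*β + ((k:ℂ)+1)*(π:ℂ)*(((N:ℂ)*(h:ℂ) - ε)/2) - (π:ℂ))/(N:ℂ) = (Complex.I*β/(N:ℂ) - (π:ℂ)/(N:ℂ) - ((k:ℂ)+1)*(π:ℂ)/(2*(N:ℂ))*ε + (π:ℂ)/2) + ((j : ℤ):ℂ)*(π:ℂ) := by
    push_cast; linear_combination hT
  have e6 : (Complex.I*β - ((k:ℂ)+1)*(π:ℂ)*(((N:ℂ)*(h:ℂ) - ε)/2) - (π:ℂ))/(N:ℂ) = (Complex.I*β/(N:ℂ) - (π:ℂ)/(N:ℂ) + ((k:ℂ)+1)*(π:ℂ)/(2*(N:ℂ))*ε - (π:ℂ)/2) + ((-j : ℤ):ℂ)*(π:ℂ) := by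
    push_cast; linear_combination (-1 : ℂ) * hT
  rw [e1, e2, e3, e4, e5, e6]
  simp only [csin_add_int_mul_pi, hneg, Complex.sin_sub_pi_div_two, Complex.sin_add_pi_div_two]
  rw [mul_neg, mul_neg, mul_neg, neg_sq, div_neg, div_neg, mul_pow, mul_pow,
    mul_div_mul_left _ _ (pow_ne_zero 2 hσ0), mul_div_mul_left _ _ hσ0, mul_div_mul_left _ _ hσ0]
  ring

lemma sum_two_mul (m : ℕ) : ∑ k ∈ Finset.range m, 2*(k+1) = m*(m+1) := by
  induction m with
  | zero => simp
  | succ n ih => rw [Finset.sum_range_succ, ih]; ring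

lemma sum_parity (m : ℕ) :
    (∑ k ∈ Finset.range m, (if Even (k+1) then 2*(k+1) else 0)) = 2*((m/2)*(m/2+1)) ∧
    (∑ k ∈ Finset.range m, (if Even (k+1) then 0 else 2*(k+1))) = 2*((m+1)/2)^2 := by
  induction m with
  | zero => simp
  | succ n ih =>
    obtain ⟨ih1, ih2⟩ := ih
    rw [Finset.sum_range_succ, Finset.sum_range_succ, ih1, ih2]
    rcases Nat.even_or_odd n with ⟨t, rfl⟩ | ⟨t, rfl⟩
    · have hodd : ¬ Even (t + t + 1) := by simp [Nat.even_add_one, Nat.even_add]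
      rw [if_neg hodd, if_neg hodd]
      have e1 : (t + t + 1)/2 = t := by omega
      have e2 : (t + t)/2 = t := by omega
      have e3 : (t + t + 1 + 1)/2 = t + 1 := by omega
      rw [e1, e2, e3]
      constructor
      · ring
      · ring
    · have heven : Even (2*t + 1 + 1) := by refine ⟨t+1, by ring⟩
      rw [if_pos heven, if_pos heven]
      have e1 : (2*t + 1 + 1)/2 = t + 1 := by omega
      have e2 : (2*t + 1)/2 = t := by omega
      have e3 : (2*t + 1 + 1 + 1)/2 = t + 1 := by omega
      rw [e1, e2, e3]
      constructor
      · ring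
      · ring

lemma sum_d (N : ℕ) (M h : ℤ) (β : ℂ) :
    (∑ k ∈ Finset.range (if 0 < M then M.toNat else M.natAbs - 1),
      (if Even (((k:ℤ)+1)*h) then (2*((k:ℂ)+1)) * fs N β else (2*((k:ℂ)+1)) * fc N β))
    = fh N M h β := by
  set m := (if 0 < M then M.toNat else M.natAbs - 1) with hm
  by_cases he : Even h
  · have hall : ∀ k ∈ Finset.range m,
        (if Even (((k:ℤ)+1)*h) then (2*((k:ℂ)+1)) * fs N β else (2*((k:ℂ)+1)) * fc N β)
          = (2*((k:ℂ)+1)) * fs N β := by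
      intro k _
      rw [if_pos (Int.even_mul.mpr (Or.inr he))]
    rw [Finset.sum_congr rfl hall, ← Finset.sum_mul]
    have hsum : (∑ k ∈ Finset.range m, (2*((k:ℂ)+1))) = ((m*(m+1) : ℕ) : ℂ) := by
      rw [← sum_two_mul m, Nat.cast_sum]
      exact Finset.sum_congr rfl (fun k _ => by push_cast; ring)
    rw [hsum, fh, if_pos he]
    have hZ : ((m*(m+1) : ℕ) : ℤ) = M*(M+1) := by
      have h1 : (m:ℤ) = M ∨ (m:ℤ) = -M-1 := by rw [hm]; split_ifs <;> omega
      rcases h1 with h1|h1 <;> (push_cast; rw [h1]; try ring)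
    have hC : ((m*(m+1) : ℕ) : ℂ) = ((M*(M+1) : ℤ) : ℂ) := by exact_mod_cast hZ
    rw [hC]
  · have hterm : ∀ k ∈ Finset.range m,
        (if Even (((k:ℤ)+1)*h) then (2*((k:ℂ)+1)) * fs N β else (2*((k:ℂ)+1)) * fc N β)
          = (((if Even (k+1) then 2*(k+1) else 0 : ℕ)):ℂ) * fs N β
            + (((if Even (k+1) then 0 else 2*(k+1) : ℕ)):ℂ) * fc N β := by
      intro k _
      by_cases hk : Even (k+1)
      · have hek : Even (((k:ℤ)+1)*h) := Int.even_mul.mpr (Or.inl (by exact_mod_cast hk))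
        rw [if_pos hek, if_pos hk, if_pos hk]
        push_cast; ring
      · have hek : ¬ Even (((k:ℤ)+1)*h) := by
          rw [Int.even_mul]; push_neg
          exact ⟨by exact_mod_cast hk, he⟩
        rw [if_neg hek, if_neg hk, if_neg hk]
        push_cast; ring
    rw [Finset.sum_congr rfl hterm, Finset.sum_add_distrib, ← Finset.sum_mul, ← Finset.sum_mul,
      ← Nat.cast_sum, ← Nat.cast_sum, (sum_parity m).1, (sum_parity m).2, fh, if_neg he]
    have hA : ((2*((m/2)*(m/2+1)) : ℕ) : ℤ) = 2 * M.fdiv 2 * (M.fdiv 2 + 1) := by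
      rw [Int.fdiv_eq_ediv_of_nonneg _ (by norm_num)]
      have h1 : (m:ℤ)/2 = M/2 ∨ (m:ℤ)/2 = -(M/2) - 1 := by
        rw [hm]; split_ifs <;> omega
      rcases h1 with h1|h1 <;> (push_cast; rw [h1]; try ring)
    have hB : ((2*((m+1)/2)^2 : ℕ) : ℤ) = 2 * ((M+1).fdiv 2)^2 := by
      rw [Int.fdiv_eq_ediv_of_nonneg _ (by norm_num)]
      have h1 : ((m:ℤ)+1)/2 = (M+1)/2 ∨ ((m:ℤ)+1)/2 = -((M+1)/2) := by
        rw [hm]; split_ifs <;> omega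
      rcases h1 with h1|h1 <;> (push_cast; rw [h1]; try ring)
    have hA' : ((2*((m/2)*(m/2+1)) : ℕ) : ℂ) = ((2 * M.fdiv 2 * (M.fdiv 2 + 1) : ℤ) : ℂ) := by
      rw [← hA]; norm_cast
    have hB' : ((2*((m+1)/2)^2 : ℕ) : ℂ) = ((2 * ((M+1).fdiv 2)^2 : ℤ) : ℂ) := by
      rw [← hB]; norm_cast
    rw [hA', hB']

/-- Theorem of Section 4.2 of the paper (analytic content): with `Nh = 2r + ε`, the
function `g(ε) = 𝒴_{N,(Nh−ε)/2,M}(β)` satisfies `g(0) = 1` and `g′(0) = f_h(β)`. -/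
theorem Yfun_hasDerivAt (N : ℕ) (hN : 1 ≤ N) (M : ℤ) (h : ℤ) (hh : h ≠ 0) (β : ℂ)
    (hβ : Gen2 N β) :
    Yfun N (((N : ℂ) * (h : ℂ)) / 2) M β = 1 ∧
    HasDerivAt (fun ε : ℂ => Yfun N (((N : ℂ) * (h : ℂ) - ε) / 2) M β) (fh N M h β) 0 := by
  obtain ⟨g1, g2, g3, g4, g5, g6⟩ := hβ
  have hN0 : (N:ℂ) ≠ 0 := Nat.cast_ne_zero.mpr (by omega)
  rw [add_div] at g2 g5
  rw [sub_div] at g3 g6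
  set m := (if 0 < M then M.toNat else M.natAbs - 1) with hm
  set G : ℕ → ℂ → ℂ := fun k ε =>
    (Complex.sin ((Complex.I*β - ((k:ℂ)+1)*(π:ℂ)*(((N:ℂ)*(h:ℂ) - ε)/2))/(N:ℂ)))^2 /
      (Complex.sin ((Complex.I*β + ((k:ℂ)+1)*(π:ℂ)*(((N:ℂ)*(h:ℂ) - ε)/2))/(N:ℂ)))^2 *
    (Complex.sin ((Complex.I*β + ((k:ℂ)+1)*(π:ℂ)*(((N:ℂ)*(h:ℂ) - ε)/2) + (π:ℂ))/(N:ℂ)) /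
      Complex.sin ((Complex.I*β - ((k:ℂ)+1)*(π:ℂ)*(((N:ℂ)*(h:ℂ) - ε)/2) + (π:ℂ))/(N:ℂ))) *
    (Complex.sin ((Complex.I*β + ((k:ℂ)+1)*(π:ℂ)*(((N:ℂ)*(h:ℂ) - ε)/2) - (π:ℂ))/(N:ℂ)) /
      Complex.sin ((Complex.I*β - ((k:ℂ)+1)*(π:ℂ)*(((N:ℂ)*(h:ℂ) - ε)/2) - (π:ℂ))/(N:ℂ))) with hG
  set d : ℕ → ℂ := fun k =>
    if Even (((k:ℤ)+1)*h) then (2*((k:ℂ)+1)) * fs N β else (2*((k:ℂ)+1)) * fc N β with hd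
  have key : ∀ k : ℕ, G k 0 = 1 ∧ HasDerivAt (G k) (d k) 0 := by
    intro k
    have hfs : (2*((k:ℂ)+1)) * fs N β
        = (((k:ℂ)+1)*(π:ℂ)/(2*(N:ℂ))) * (-4 * Complex.sin ((π:ℂ)/(N:ℂ))^2 * Complex.cos (Complex.I*β/(N:ℂ)) /
          (Complex.sin (Complex.I*β/(N:ℂ)) * Complex.sin (Complex.I*β/(N:ℂ) + (π:ℂ)/(N:ℂ)) * Complex.sin (Complex.I*β/(N:ℂ) - (π:ℂ)/(N:ℂ)))) := by
      simp only [fs]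
      rw [add_div, sub_div]
      field_simp
      ring
    have hfc : (2*((k:ℂ)+1)) * fc N β
        = (((k:ℂ)+1)*(π:ℂ)/(2*(N:ℂ))) * (4 * Complex.sin ((π:ℂ)/(N:ℂ))^2 * Complex.sin (Complex.I*β/(N:ℂ)) /
          (Complex.cos (Complex.I*β/(N:ℂ)) * Complex.cos (Complex.I*β/(N:ℂ) + (π:ℂ)/(N:ℂ)) * Complex.cos (Complex.I*β/(N:ℂ) - (π:ℂ)/(N:ℂ)))) := by
      simp only [fc]
      rw [add_div, sub_div]
      field_simp
      ring
    rcases Int.even_or_odd (((k:ℤ)+1)*h) with hev | hov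
    · obtain ⟨j, hj⟩ := hev
      have hj' : ((k:ℤ)+1)*h = 2*j := by omega
      have hGfun : G k = fun ε : ℂ => Complex.sin (Complex.I*β/(N:ℂ) + ((k:ℂ)+1)*(π:ℂ)/(2*(N:ℂ))*ε)^2 / Complex.sin (Complex.I*β/(N:ℂ) - ((k:ℂ)+1)*(π:ℂ)/(2*(N:ℂ))*ε)^2 *
    (Complex.sin (Complex.I*β/(N:ℂ) + (π:ℂ)/(N:ℂ) - ((k:ℂ)+1)*(π:ℂ)/(2*(N:ℂ))*ε) / Complex.sin (Complex.I*β/(N:ℂ) + (π:ℂ)/(N:ℂ) + ((k:ℂ)+1)*(π:ℂ)/(2*(N:ℂ))*ε)) *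
    (Complex.sin (Complex.I*β/(N:ℂ) - (π:ℂ)/(N:ℂ) - ((k:ℂ)+1)*(π:ℂ)/(2*(N:ℂ))*ε) / Complex.sin (Complex.I*β/(N:ℂ) - (π:ℂ)/(N:ℂ) + ((k:ℂ)+1)*(π:ℂ)/(2*(N:ℂ))*ε)) := by
        funext ε
        rw [hG]
        exact factor_even N hN0 β ε h k j hj'
      constructor
      · rw [hGfun]
        simp only [mul_zero, add_zero, sub_zero]
        rw [div_self (pow_ne_zero 2 g1), div_self g2, div_self g3]
        try norm_num
      · have hdk : d k = (((k:ℂ)+1)*(π:ℂ)/(2*(N:ℂ))) * (-4 * Complex.sin ((π:ℂ)/(N:ℂ))^2 * Complex.cos (Complex.I*β/(N:ℂ)) /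
            (Complex.sin (Complex.I*β/(N:ℂ)) * Complex.sin (Complex.I*β/(N:ℂ) + (π:ℂ)/(N:ℂ)) * Complex.sin (Complex.I*β/(N:ℂ) - (π:ℂ)/(N:ℂ)))) := by
          have hcond : Even (((k:ℤ)+1)*h) := ⟨j, hj⟩
          simp only [hd]
          rw [if_pos hcond]
          exact hfs
        rw [hGfun, hdk]
        exact Sderiv' (Complex.I*β/(N:ℂ)) ((π:ℂ)/(N:ℂ)) (((k:ℂ)+1)*(π:ℂ)/(2*(N:ℂ))) g1 g2 g3
    · obtain ⟨j, hj⟩ := hov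
      have hGfun : G k = fun ε : ℂ => Complex.cos (Complex.I*β/(N:ℂ) + ((k:ℂ)+1)*(π:ℂ)/(2*(N:ℂ))*ε)^2 / Complex.cos (Complex.I*β/(N:ℂ) - ((k:ℂ)+1)*(π:ℂ)/(2*(N:ℂ))*ε)^2 *
    (Complex.cos (Complex.I*β/(N:ℂ) + (π:ℂ)/(N:ℂ) - ((k:ℂ)+1)*(π:ℂ)/(2*(N:ℂ))*ε) / Complex.cos (Complex.I*β/(N:ℂ) + (π:ℂ)/(N:ℂ) + ((k:ℂ)+1)*(π:ℂ)/(2*(N:ℂ))*ε)) *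
    (Complex.cos (Complex.I*β/(N:ℂ) - (π:ℂ)/(N:ℂ) - ((k:ℂ)+1)*(π:ℂ)/(2*(N:ℂ))*ε) / Complex.cos (Complex.I*β/(N:ℂ) - (π:ℂ)/(N:ℂ) + ((k:ℂ)+1)*(π:ℂ)/(2*(N:ℂ))*ε)) := by
        funext ε
        rw [hG]
        exact factor_odd N hN0 β ε h k j hj
      constructor
      · rw [hGfun]
        simp only [mul_zero, add_zero, sub_zero]
        rw [div_self (pow_ne_zero 2 g4), div_self g5, div_self g6]
        try norm_num
      · have hdk : d k = (((k:ℂ)+1)*(π:ℂ)/(2*(N:ℂ))) * (4 * Complex.sin ((π:ℂ)/(N:ℂ))^2 * Complex.sin (Complex.I*β/(N:ℂ)) /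
            (Complex.cos (Complex.I*β/(N:ℂ)) * Complex.cos (Complex.I*β/(N:ℂ) + (π:ℂ)/(N:ℂ)) * Complex.cos (Complex.I*β/(N:ℂ) - (π:ℂ)/(N:ℂ)))) := by
          have hcond : ¬ Even (((k:ℤ)+1)*h) := Int.not_even_iff_odd.mpr ⟨j, hj⟩
          simp only [hd]
          rw [if_neg hcond]
          exact hfc
        rw [hGfun, hdk]
        exact Cderiv' (Complex.I*β/(N:ℂ)) ((π:ℂ)/(N:ℂ)) (((k:ℂ)+1)*(π:ℂ)/(2*(N:ℂ))) g4 g5 g6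
  obtain ⟨hval, hder⟩ := prod_one_hasDerivAt m G d (fun k _ => (key k).1) (fun k _ => (key k).2)
  constructor
  · have e0 : Yfun N (((N:ℂ)*(h:ℂ))/2) M β = ∏ k ∈ Finset.range m, G k 0 := by
      rw [show ((N:ℂ)*(h:ℂ))/2 = (((N:ℂ)*(h:ℂ)) - 0)/2 from by ring, hm, hG]
      rfl
    rw [e0]
    exact hval
  · have e1 : (fun ε : ℂ => Yfun N (((N:ℂ)*(h:ℂ) - ε)/2) M β)
        = fun ε : ℂ => ∏ k ∈ Finset.range m, G k ε := by
      funext ε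
      rw [hm, hG]
      rfl
    have e2 : fh N M h β = ∑ k ∈ Finset.range m, d k := by
      rw [hd, hm]
      exact (sum_d N M h β).symm
    rw [e1, e2]
    exact hder
end
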